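/- arXiv:2408.16935 — 8 statements merged into one kernel-verified Lean document; each statement's English description precedes it below -/
import Mathlib

section
/- Let α be irrational with continued-fraction approximants p_k/q_k. Then for every x ∈ ℝ and every k, the discrepancy of the q_k points {x}, {x+α}, …, {x+(q_k−1)α} satisfies D*_{q_k}({x}, {x+α}, …, {x+(q_k−1)α}) ≤ 2/q_k. -/
open MeasureTheory Filter
open scoped ENNReal NNReal

noncomputable section

/-- The discrepancy `D*_n(x₁,…,x_n) = sup_{0 < t ≤ 1} |#{k : x_k ∈ [0,t)}/n − t|`. -/
def discrepancy (n : ℕ) (r : Fin n → ℝ) : ℝ :=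
  ⨆ t : Set.Ioc (0:ℝ) 1,
    |(Nat.card {k : Fin n // 0 ≤ r k ∧ r k < (t : ℝ)} : ℝ) / n - (t : ℝ)|

/-- Iterates of the Gauss map, starting from the fractional part of `α`. -/
def gaussIter (α : ℝ) : ℕ → ℝ
  | 0 => Int.fract α
  | (k+1) => Int.fract (gaussIter α k)⁻¹

/-- The continued fraction digit `a_{k+1}` of `α`. -/
def cfA (α : ℝ) (k : ℕ) : ℕ := ⌊(gaussIter α k)⁻¹⌋₊

/-- The denominators `q_k` of the continued fraction approximants of `α`:
`q₀ = 1`, `q₁ = a₁`, `q_{k+1} = a_{k+1} q_k + q_{k-1}`. -/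
def cfDen (α : ℝ) : ℕ → ℕ
  | 0 => 1
  | 1 => cfA α 0
  | (k+2) => cfA α (k+1) * cfDen α (k+1) + cfDen α k

def cfNum (α : ℝ) : ℕ → ℤ
  | 0 => ⌊α⌋
  | 1 => cfA α 0 * ⌊α⌋ + 1
  | (k+2) => cfA α (k+1) * cfNum α (k+1) + cfNum α k

variable {α : ℝ}

lemma Irrational.fract' (h : Irrational α) : Irrational (Int.fract α) := by
  rw [Int.fract]; exact h.sub_intCast _

lemma gaussIter_irrational (hα : Irrational α) (k : ℕ) : Irrational (gaussIter α k) := by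
  induction k with
  | zero => exact hα.fract'
  | succ k ih => exact (ih.inv).fract'

lemma gaussIter_mem (hα : Irrational α) (k : ℕ) :
    0 < gaussIter α k ∧ gaussIter α k < 1 := by
  have h : ∀ m, Irrational (gaussIter α m) := gaussIter_irrational hα
  cases k with
  | zero =>
    refine ⟨lt_of_le_of_ne (Int.fract_nonneg α) ?_, Int.fract_lt_one α⟩
    intro he; exact (h 0).ne_int 0 (by simpa [gaussIter] using he.symm)
  | succ k =>
    refine ⟨lt_of_le_of_ne (Int.fract_nonneg _) ?_, Int.fract_lt_one _⟩
    intro he; exact (h (k+1)).ne_int 0 (by simpa [gaussIter] using he.symm)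

lemma one_lt_inv_gaussIter (hα : Irrational α) (k : ℕ) : 1 < (gaussIter α k)⁻¹ := by
  obtain ⟨h0, h1⟩ := gaussIter_mem hα k
  exact (one_lt_inv₀ h0).mpr h1

lemma one_le_cfA (hα : Irrational α) (k : ℕ) : 1 ≤ cfA α k :=
  Nat.le_floor (by exact_mod_cast (one_lt_inv_gaussIter hα k).le)

lemma gauss_rec (hα : Irrational α) (k : ℕ) :
    (gaussIter α k)⁻¹ = (cfA α k : ℝ) + gaussIter α (k+1) := by
  have h0 : (0:ℝ) ≤ (gaussIter α k)⁻¹ := le_of_lt (lt_trans one_pos (one_lt_inv_gaussIter hα k))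
  have hc : ((cfA α k : ℕ) : ℝ) = ((⌊(gaussIter α k)⁻¹⌋ : ℤ) : ℝ) := by
    exact_mod_cast congrArg (fun z : ℤ => (z : ℝ)) (Int.natCast_floor_eq_floor h0)
  show _ = _ + Int.fract _
  rw [Int.fract, hc]
  ring

lemma one_le_cfDen (hα : Irrational α) (k : ℕ) : 1 ≤ cfDen α k := by
  induction k using Nat.twoStepInduction with
  | zero => simp [cfDen]
  | one => simpa [cfDen] using one_le_cfA hα 0
  | more k ih1 ih2 =>
    have := one_le_cfA hα (k+1)
    simp only [cfDen]
    nlinarith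

lemma cfDen_mono (hα : Irrational α) (k : ℕ) : cfDen α k ≤ cfDen α (k+1) := by
  cases k with
  | zero => simpa [cfDen] using one_le_cfA hα 0
  | succ k =>
    have h1 := one_le_cfA hα (k+1)
    have h2 := one_le_cfDen hα (k+1)
    have h3 := one_le_cfDen hα k
    show cfDen α (k+1) ≤ cfA α (k+1) * cfDen α (k+1) + cfDen α k
    nlinarith

def piProd (α : ℝ) (k : ℕ) : ℝ := ∏ j ∈ Finset.range (k+1), gaussIter α j

lemma piProd_pos (hα : Irrational α) (k : ℕ) : 0 < piProd α k :=
  Finset.prod_pos fun j _ => (gaussIter_mem hα j).1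

lemma piProd_succ (k : ℕ) : piProd α (k+1) = piProd α k * gaussIter α (k+1) :=
  Finset.prod_range_succ _ _

lemma key_identity (hα : Irrational α) (k : ℕ) :
    (cfDen α k : ℝ) * α - (cfNum α k : ℝ) = (-1)^k * piProd α k := by
  induction k using Nat.twoStepInduction with
  | zero =>
    have hg : gaussIter α 0 = α - ⌊α⌋ := by
      rw [show gaussIter α 0 = Int.fract α from rfl, Int.fract]
    simp only [cfDen, cfNum, piProd, pow_zero, Finset.prod_range_one, Nat.cast_one, one_mul]
    rw [← hg]
    exact (Finset.prod_range_one _).symm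
  | one =>
    have h := gauss_rec hα 0
    have h0 := (gaussIter_mem hα 0).1
    have hg : gaussIter α 0 = α - ⌊α⌋ := by
      rw [show gaussIter α 0 = Int.fract α from rfl, Int.fract]
    simp only [cfDen, cfNum, piProd, Finset.prod_range_succ, Finset.prod_range_zero, pow_one,
      one_mul]
    push_cast
    have h' : (gaussIter α 0) * (gaussIter α 0)⁻¹ = 1 := mul_inv_cancel₀ (ne_of_gt h0)
    rw [h] at h'
    linear_combination (-(cfA α 0 : ℝ)) * hg + h'
  | more k ih1 ih2 =>
    have h := gauss_rec hα (k+1)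
    have h0 := (gaussIter_mem hα (k+1)).1
    have h' : (gaussIter α (k+1)) * (gaussIter α (k+1))⁻¹ = 1 := mul_inv_cancel₀ (ne_of_gt h0)
    rw [h] at h'
    simp only [cfNum, cfDen, piProd_succ, pow_succ] at *
    push_cast
    linear_combination (cfA (α) (k+1) : ℝ) * ih2 + ih1 - ((-1:ℝ)^k * piProd α k) * h'

lemma det_identity (hα : Irrational α) (k : ℕ) :
    cfNum α (k+1) * cfDen α k - cfNum α k * cfDen α (k+1) = (-1)^k := by
  induction k with
  | zero => simp [cfDen, cfNum]; ring
  | succ k ih =>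
    show cfNum α (k+2) * cfDen α (k+1) - cfNum α (k+1) * cfDen α (k+2) = _
    simp only [cfNum, cfDen, pow_succ]
    push_cast
    nlinarith [ih]

lemma den_mul_pi_lt_one (hα : Irrational α) (k : ℕ) :
    (cfDen α k : ℝ) * piProd α k < 1 := by
  have hdet := det_identity hα k
  have hk := key_identity hα k
  have hk1 := key_identity hα (k+1)
  have hq : (1:ℝ) ≤ cfDen α k := by exact_mod_cast one_le_cfDen hα k
  have hq1 : (cfDen α k : ℝ) ≤ cfDen α (k+1) := by exact_mod_cast cfDen_mono hα k
  have hp : 0 < piProd α k := piProd_pos hα k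
  have hp1 : 0 < piProd α (k+1) := piProd_pos hα (k+1)
  have main : (cfDen α (k+1) : ℝ) * piProd α k + (cfDen α k : ℝ) * piProd α (k+1) = 1 := by
    have e1 : (cfDen α (k+1) : ℝ) * ((cfDen α k : ℝ) * α - cfNum α k)
        - (cfDen α k : ℝ) * ((cfDen α (k+1) : ℝ) * α - cfNum α (k+1))
        = ((cfNum α (k+1) * cfDen α k - cfNum α k * cfDen α (k+1) : ℤ) : ℝ) := by
      push_cast; ring
    rw [hk, hk1, hdet] at e1
    push_cast at e1
    rcases Nat.even_or_odd k with he | ho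
    · rw [he.neg_one_pow, (he.add_one).neg_one_pow] at e1
      linarith [e1]
    · rw [ho.neg_one_pow, (ho.add_one).neg_one_pow] at e1
      linarith [e1]
  nlinarith [main]

lemma coprime_num_den (hα : Irrational α) (k : ℕ) :
    IsCoprime (cfNum α k) ((cfDen α k : ℤ)) := by
  cases k with
  | zero => simpa [cfDen] using isCoprime_one_right
  | succ k =>
    have h := det_identity hα k
    have h2 : ((-1:ℤ))^k * (-1)^k = 1 := by rw [← pow_add]; exact Even.neg_one_pow ⟨k, rfl⟩
    exact ⟨(-1)^k * (cfDen α k : ℤ), (-1)^k * (-(cfNum α k)),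
      by linear_combination ((-1:ℤ)^k) * h + h2⟩


-- Hermite identity
lemma hermite_sum (n : ℕ) (hn : 0 < n) (u : ℝ) :
    ∑ i ∈ Finset.range n, ⌊u + (i:ℝ)/n⌋ = ⌊(n:ℝ) * u⌋ := by
  have hn' : (0:ℝ) < n := by exact_mod_cast hn
  have hf0 : 0 ≤ Int.fract u := Int.fract_nonneg u
  have hf1 : Int.fract u < 1 := Int.fract_lt_one u
  set f := Int.fract u with hf
  set m : ℤ := ⌊(n:ℝ) * f⌋ with hm
  have hm0 : 0 ≤ m := Int.floor_nonneg.mpr (by positivity)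
  have hmn : m < n := by
    have h1 : (n:ℝ) * f < n := by nlinarith
    exact Int.floor_lt.mpr (by exact_mod_cast h1)
  have hmle : (m:ℝ) ≤ (n:ℝ) * f := Int.floor_le _
  have hmlt : (n:ℝ) * f < m + 1 := Int.lt_floor_add_one _
  have step : ∀ i ∈ Finset.range n, ⌊u + (i:ℝ)/n⌋ = ⌊u⌋ + (if (n:ℤ) - m ≤ i then 1 else 0) := by
    intro i hi
    have hiR : (i:ℝ) < n := by exact_mod_cast Finset.mem_range.mp hi
    have hi0 : (0:ℝ) ≤ (i:ℝ) := by positivity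
    have hrw : u + (i:ℝ)/n = (f + (i:ℝ)/n) + (⌊u⌋ : ℤ) := by
      rw [hf, Int.fract]; ring
    rw [hrw, Int.floor_add_intCast, add_comm ⌊u⌋]
    congr 1
    by_cases hcase : (n:ℤ) - m ≤ i
    · rw [if_pos hcase]
      have hcR : ((n:ℝ) - m) ≤ i := by exact_mod_cast hcase
      refine Int.floor_eq_iff.mpr ⟨?_, ?_⟩
      · push_cast
        have key : (n:ℝ) * 1 ≤ n * (f + i/n) := by
          have he : (n:ℝ) * (f + i/n) = n*f + i := by field_simp
          rw [he, mul_one]; linarith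
        exact le_of_mul_le_mul_left key hn'
      · push_cast
        have : (i:ℝ)/n < 1 := (div_lt_one hn').mpr hiR
        linarith
    · rw [if_neg hcase]
      have hcR : (i:ℝ) < (n:ℝ) - m := by
        have : (i:ℤ) < n - m := by omega
        exact_mod_cast this
      refine Int.floor_eq_zero_iff.mpr ⟨by positivity, ?_⟩
      have h2 : (i:ℝ)/n < ((n:ℝ) - m)/n := by gcongr
      have h3 : f < ((m:ℝ)+1)/n := by rw [lt_div_iff₀ hn']; linarith
      have h4 : ((m:ℝ)+1)/n + ((n:ℝ)-m-1)/n = 1 := by field_simp; ring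
      have h5 : (i:ℝ)/n ≤ ((n:ℝ)-m-1)/n := by
        gcongr
        have : (i:ℤ) ≤ n - m - 1 := by omega
        exact_mod_cast this
      linarith
  rw [Finset.sum_congr rfl step, Finset.sum_add_distrib, Finset.sum_const, Finset.card_range]
  have hcount : ∑ i ∈ Finset.range n, (if (n:ℤ) - m ≤ i then (1:ℤ) else 0) = m := by
    have hfil : (Finset.range n).filter (fun i : ℕ => (n:ℤ) - m ≤ (i:ℤ)) = Finset.Ico ((n:ℤ) - m).toNat n := by
      ext j
      simp only [Finset.mem_filter, Finset.mem_range, Finset.mem_Ico]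
      omega
    rw [Finset.sum_ite, Finset.sum_const, Finset.sum_const_zero, add_zero, hfil, Nat.card_Ico]
    simp only [nsmul_eq_mul, mul_one]
    omega
  rw [hcount]
  have h6 : ⌊(n:ℝ) * u⌋ = (n:ℤ) * ⌊u⌋ + m := by
    have h7 : (n:ℝ) * u = ((n:ℤ) * ⌊u⌋ : ℤ) + (n:ℝ) * f := by rw [hf, Int.fract]; push_cast; ring
    rw [h7, add_comm, Int.floor_add_intCast, ← hm]; ring
  rw [h6]
  simp only [nsmul_eq_mul]


lemma grid_sum (n : ℕ) (hn : 0 < n) (p : ℤ) (hcop : IsCoprime p (n:ℤ)) (u : ℝ) :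
    ∑ j ∈ Finset.range n, ⌊u + (j:ℝ) * p / n⌋
      = (∑ j ∈ Finset.range n, ((j:ℤ) * p) / n) + ⌊(n:ℝ) * u⌋ := by
  have hn' : (0:ℝ) < n := by exact_mod_cast hn
  have hnz : (n:ℤ) ≠ 0 := by exact_mod_cast hn.ne'
  -- each term splits
  have step : ∀ j ∈ Finset.range n,
      ⌊u + (j:ℝ) * p / n⌋ = ((j:ℤ) * p) / n + ⌊u + ((((j:ℤ) * p) % n : ℤ) : ℝ) / n⌋ := by
    intro j _
    have hdm : ((j:ℤ) * p) = n * (((j:ℤ) * p) / n) + ((j:ℤ) * p) % n := (Int.mul_ediv_add_emod _ _).symm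
    have hdmR : ((j:ℝ) * p) = (n:ℝ) * (((((j:ℤ)*p)/n : ℤ)) : ℝ) + ((((j:ℤ)*p) % n : ℤ) : ℝ) := by
      exact_mod_cast congrArg (fun z : ℤ => (z:ℝ)) hdm
    have hrw : u + (j:ℝ) * p / n
        = (u + ((((j:ℤ) * p) % n : ℤ) : ℝ) / n) + ((((j:ℤ) * p) / n : ℤ) : ℝ) := by
      rw [hdmR]
      field_simp
      ring
    rw [hrw, Int.floor_add_intCast, add_comm]
  rw [Finset.sum_congr rfl step, Finset.sum_add_distrib]
  congr 1
  -- reindex the floor sum by the bijection j ↦ (j*p % n).toNat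
  have hinj : Set.InjOn (fun j : ℕ => (((j:ℤ) * p) % n).toNat) (Finset.range n) := by
    intro a ha b hb hab
    simp only [Finset.coe_range, Set.mem_Iio] at ha hb
    have hab : (((a:ℤ)*p)%n).toNat = (((b:ℤ)*p)%n).toNat := hab
    have h1 : ((a:ℤ) * p) % n = ((b:ℤ) * p) % n := by
      have h0a : 0 ≤ ((a:ℤ) * p) % n := Int.emod_nonneg _ hnz
      have h0b : 0 ≤ ((b:ℤ) * p) % n := Int.emod_nonneg _ hnz
      omega
    have h2 : (n:ℤ) ∣ ((b:ℤ) - a) * p := by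
      have hmeq : Int.ModEq (n:ℤ) ((a:ℤ)*p) ((b:ℤ)*p) := h1
      have := hmeq.dvd
      rwa [← sub_mul] at this
    have h3 : (n:ℤ) ∣ ((b:ℤ) - a) := (hcop.symm).dvd_of_dvd_mul_right h2
    have h4 : ((b:ℤ) - a) = 0 := Int.eq_zero_of_abs_lt_dvd h3 (by rw [abs_lt]; omega)
    omega
  have himg : (Finset.range n).image (fun j : ℕ => (((j:ℤ) * p) % n).toNat) = Finset.range n := by
    apply Finset.eq_of_subset_of_card_le
    · intro x hx
      simp only [Finset.mem_image, Finset.mem_range] at hx ⊢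
      obtain ⟨j, hj, rfl⟩ := hx
      have h0 : 0 ≤ ((j:ℤ) * p) % n := Int.emod_nonneg _ hnz
      have h1 : ((j:ℤ) * p) % n < n := Int.emod_lt_of_pos _ (by exact_mod_cast hn)
      omega
    · rw [Finset.card_image_of_injOn hinj, Finset.card_range]
  calc ∑ j ∈ Finset.range n, ⌊u + ((((j:ℤ) * p) % n : ℤ) : ℝ) / n⌋
      = ∑ j ∈ Finset.range n, ⌊u + (((((j:ℤ) * p) % n).toNat : ℕ) : ℝ) / n⌋ := by
        apply Finset.sum_congr rfl
        intro j _
        have h0 : 0 ≤ ((j:ℤ) * p) % n := Int.emod_nonneg _ hnz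
        rw [show ((((j:ℤ)*p % n).toNat : ℕ) : ℝ) = (((j:ℤ)*p % n : ℤ) : ℝ) from by
          exact_mod_cast congrArg (fun z : ℤ => (z:ℝ)) (Int.toNat_of_nonneg h0)]
    _ = ∑ i ∈ (Finset.range n).image (fun j : ℕ => (((j:ℤ) * p) % n).toNat), ⌊u + (i:ℝ) / n⌋ := by
        rw [Finset.sum_image (fun a ha b hb h => hinj (Finset.mem_coe.mpr ha) (Finset.mem_coe.mpr hb) h)]
    _ = ∑ i ∈ Finset.range n, ⌊u + (i:ℝ) / n⌋ := by rw [himg]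
    _ = ⌊(n:ℝ) * u⌋ := hermite_sum n hn u

lemma indicator_floor (t y : ℝ) (ht0 : 0 < t) (ht1 : t ≤ 1) :
    (if Int.fract y < t then (1:ℤ) else 0) = ⌊y⌋ - ⌊y - t⌋ := by
  have hfr : Int.fract y = y - ⌊y⌋ := rfl
  have hle := Int.floor_le y
  have hlt := Int.lt_floor_add_one y
  by_cases h : Int.fract y < t
  · rw [if_pos h]
    have he : ⌊y - t⌋ = ⌊y⌋ - 1 := by
      refine Int.floor_eq_iff.mpr ⟨?_, ?_⟩
      · push_cast
        have := Int.fract_nonneg y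
        rw [hfr] at this
        linarith
      · push_cast
        rw [hfr] at h
        linarith
    omega
  · rw [if_neg h]
    push_neg at h
    have he : ⌊y - t⌋ = ⌊y⌋ := by
      refine Int.floor_eq_iff.mpr ⟨?_, ?_⟩
      · rw [hfr] at h; linarith
      · push_cast; linarith
    omega

lemma count_bound (n : ℕ) (hn : 0 < n) (p : ℤ) (hcop : IsCoprime p (n:ℤ)) (a : ℝ)
    (hsmall : (n:ℝ) * (((n:ℝ)-1) * |a - (p:ℝ) / n|) ≤ 1) (x t : ℝ) (ht0 : 0 < t) (ht1 : t ≤ 1) :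
    |(((Finset.range n).filter (fun j : ℕ => Int.fract (x + (j:ℝ) * a) < t)).card : ℝ) - n * t| ≤ 2 := by
  have hn' : (0:ℝ) < n := by exact_mod_cast hn
  set δ := a - (p:ℝ)/n with hδ
  set L := min 0 (((n:ℝ)-1) * δ) with hL
  set U := max 0 (((n:ℝ)-1) * δ) with hU
  have hn1 : (1:ℝ) ≤ (n:ℝ) := by exact_mod_cast hn
  have hULd : U - L = ((n:ℝ)-1) * |δ| := by
    rcases le_or_gt 0 δ with hd | hd
    · rw [hU, hL, abs_of_nonneg hd, max_eq_right (by nlinarith), min_eq_left (by nlinarith)]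
      ring
    · rw [hU, hL, abs_of_neg hd, max_eq_left (by nlinarith), min_eq_right (by nlinarith)]
      ring
  have hUL : (n:ℝ) * (U - L) ≤ 1 := by rw [hULd]; exact hsmall
  have hL0 : L ≤ 0 := min_le_left _ _
  have hU0 : 0 ≤ U := le_max_left _ _
  have hLle : L ≤ ((n:ℝ)-1) * δ := min_le_right _ _
  have hUge : ((n:ℝ)-1) * δ ≤ U := le_max_right _ _
  clear_value δ L U
  clear hL hU
  -- bounds on each point
  have hbd : ∀ j ∈ Finset.range n,
      (x + L) + (j:ℝ) * p / n ≤ x + (j:ℝ) * a ∧ x + (j:ℝ) * a ≤ (x + U) + (j:ℝ) * p / n := by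
    intro j hj
    have hjn : (j:ℝ) ≤ (n:ℝ) - 1 := by
      have : (j:ℕ) < n := Finset.mem_range.mp hj
      have : (j:ℝ) < (n:ℝ) := by exact_mod_cast this
      have hj1 : ((j:ℕ):ℝ) + 1 ≤ (n:ℝ) := by exact_mod_cast Finset.mem_range.mp hj
      linarith
    have hj0 : (0:ℝ) ≤ (j:ℝ) := by positivity
    have hja : (j:ℝ) * a = (j:ℝ) * p / n + (j:ℝ) * δ := by rw [hδ]; ring
    constructor
    · rw [hja]
      have : L ≤ (j:ℝ) * δ := by
        rcases le_or_gt 0 δ with hd | hd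
        · calc L ≤ 0 := hL0
            _ ≤ (j:ℝ) * δ := mul_nonneg hj0 hd
        · calc L ≤ ((n:ℝ)-1) * δ := hLle
            _ ≤ (j:ℝ) * δ := by nlinarith
      linarith
    · rw [hja]
      have : (j:ℝ) * δ ≤ U := by
        rcases le_or_gt 0 δ with hd | hd
        · calc (j:ℝ) * δ ≤ ((n:ℝ)-1) * δ := by nlinarith
            _ ≤ U := hUge
        · calc (j:ℝ) * δ ≤ 0 := by nlinarith
            _ ≤ U := hU0
      linarith
  -- the count as an integer sum
  set c := ((Finset.range n).filter (fun j : ℕ => Int.fract (x + (j:ℝ) * a) < t)).card with hc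
  have hcsum : (c:ℤ) = ∑ j ∈ Finset.range n, (⌊x + (j:ℝ) * a⌋ - ⌊x + (j:ℝ) * a - t⌋) := by
    rw [hc, Finset.card_filter, Nat.cast_sum]
    apply Finset.sum_congr rfl
    intro j _
    rw [← indicator_floor _ _ ht0 ht1]
    split <;> simp
  -- sums of floors
  set S := ∑ j ∈ Finset.range n, ((j:ℤ) * p) / n with hS
  have hgrid : ∀ u : ℝ, ∑ j ∈ Finset.range n, ⌊u + (j:ℝ) * p / n⌋ = S + ⌊(n:ℝ) * u⌋ :=
    fun u => grid_sum n hn p hcop u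
  have hA_ub : ∑ j ∈ Finset.range n, ⌊x + (j:ℝ) * a⌋ ≤ S + ⌊(n:ℝ) * (x + U)⌋ := by
    rw [← hgrid (x + U)]
    exact Finset.sum_le_sum fun j hj => Int.floor_le_floor ((hbd j hj).2)
  have hA_lb : S + ⌊(n:ℝ) * (x + L)⌋ ≤ ∑ j ∈ Finset.range n, ⌊x + (j:ℝ) * a⌋ := by
    rw [← hgrid (x + L)]
    exact Finset.sum_le_sum fun j hj => Int.floor_le_floor ((hbd j hj).1)
  have hB_ub : ∑ j ∈ Finset.range n, ⌊x + (j:ℝ) * a - t⌋ ≤ S + ⌊(n:ℝ) * (x - t + U)⌋ := by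
    rw [← hgrid (x - t + U)]
    refine Finset.sum_le_sum fun j hj => Int.floor_le_floor ?_
    have := (hbd j hj).2
    linarith
  have hB_lb : S + ⌊(n:ℝ) * (x - t + L)⌋ ≤ ∑ j ∈ Finset.range n, ⌊x + (j:ℝ) * a - t⌋ := by
    rw [← hgrid (x - t + L)]
    refine Finset.sum_le_sum fun j hj => Int.floor_le_floor ?_
    have := (hbd j hj).1
    linarith
  -- combine
  have hub : (c:ℤ) ≤ ⌊(n:ℝ) * (x + U)⌋ - ⌊(n:ℝ) * (x - t + L)⌋ := by
    rw [hcsum, Finset.sum_sub_distrib]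
    omega
  have hlb : ⌊(n:ℝ) * (x + L)⌋ - ⌊(n:ℝ) * (x - t + U)⌋ ≤ (c:ℤ) := by
    rw [hcsum, Finset.sum_sub_distrib]
    omega
  -- to reals
  rw [abs_le]
  have f1 := Int.floor_le ((n:ℝ) * (x + U))
  have f2 := Int.lt_floor_add_one ((n:ℝ) * (x - t + L))
  have f3 := Int.floor_le ((n:ℝ) * (x - t + U))
  have f4 := Int.lt_floor_add_one ((n:ℝ) * (x + L))
  have hubR : (c:ℝ) ≤ (⌊(n:ℝ) * (x + U)⌋ : ℝ) - (⌊(n:ℝ) * (x - t + L)⌋ : ℝ) := by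
    exact_mod_cast hub
  have hlbR : (⌊(n:ℝ) * (x + L)⌋ : ℝ) - (⌊(n:ℝ) * (x - t + U)⌋ : ℝ) ≤ (c:ℝ) := by
    exact_mod_cast hlb
  constructor
  · nlinarith
  · nlinarith


/-- For irrational `α` with continued-fraction denominators `q_k`, the
discrepancy of the `q_k` points `{x}, {x+α}, …, {x+(q_k−1)α}` is at most `2/q_k`, for every
`x ∈ ℝ` and every `k`. -/
theorem discrepancy_orbit_den_le (α : ℝ) (hα : Irrational α) (x : ℝ) (k : ℕ) :
    discrepancy (cfDen α k) (fun j => Int.fract (x + (j : ℕ) * α)) ≤ 2 / cfDen α k := by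
  have hn1 : 1 ≤ cfDen α k := one_le_cfDen hα k
  set n := cfDen α k with hn
  have hnpos : 0 < n := hn1
  have hn' : (0:ℝ) < n := by exact_mod_cast hnpos
  have hne : Nonempty (Set.Ioc (0:ℝ) 1) := ⟨⟨1, by norm_num⟩⟩
  rw [discrepancy]
  apply ciSup_le
  rintro ⟨t, ht0, ht1⟩
  set p := cfNum α k with hp
  have hcop := coprime_num_den hα k
  have hkey := key_identity hα k
  have hpi0 := piProd_pos hα k
  have hqpi := den_mul_pi_lt_one hα k
  have hδ : α - (p:ℝ)/n = (-1)^k * piProd α k / n := by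
    rw [eq_div_iff hn'.ne', sub_mul, div_mul_cancel₀ _ hn'.ne']
    linear_combination hkey
  have habs : |α - (p:ℝ)/n| = piProd α k / n := by
    rw [hδ, abs_div, abs_mul, abs_pow, abs_neg, abs_one, one_pow, one_mul,
      abs_of_pos hpi0, abs_of_pos hn']
  have hsmall : (n:ℝ) * (((n:ℝ)-1) * |α - (p:ℝ)/n|) ≤ 1 := by
    rw [habs]
    have hn1R : (1:ℝ) ≤ n := by exact_mod_cast hn1
    have he : (n:ℝ) * (((n:ℝ)-1) * (piProd α k / n)) = ((n:ℝ)-1) * piProd α k := by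
      field_simp
    rw [he]
    nlinarith
  have hcb := count_bound n hnpos p hcop α hsmall x t ht0 ht1
  have hcard : (Nat.card {j : Fin n // 0 ≤ Int.fract (x + ((j:ℕ):ℝ) * α)
        ∧ Int.fract (x + ((j:ℕ):ℝ) * α) < t} : ℝ)
      = (((Finset.range n).filter (fun j : ℕ => Int.fract (x + (j:ℝ) * α) < t)).card : ℝ) := by
    congr 1
    rw [Nat.card_eq_fintype_card, Fintype.card_subtype, Finset.card_filter, Finset.card_filter,
      ← Fin.sum_univ_eq_sum_range (fun j => if Int.fract (x + (j:ℝ) * α) < t then 1 else 0) n]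
    apply Finset.sum_congr rfl
    intro j _
    congr 1
    simp only [eq_iff_iff]
    exact and_iff_right (Int.fract_nonneg _)
  show |(Nat.card _ : ℝ) / n - t| ≤ 2 / n
  rw [hcard]
  set c := (((Finset.range n).filter (fun j : ℕ => Int.fract (x + (j:ℝ) * α) < t)).card : ℝ)
  have he2 : c / n - t = (c - n * t)/n := by field_simp
  rw [he2, abs_div, abs_of_pos hn']
  gcongr
end
end

section
/- Let α be irrational. Then D*_n({x}, {x+α}, …, {x+(n−1)α}) → 0 as n → ∞, uniformly in x ∈ ℝ; that is, for every ε > 0 there exists N such that for all n ≥ N and all x ∈ ℝ, D*_n({x}, {x+α}, …, {x+(n−1)α}) < ε. -/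
open MeasureTheory Filter
open scoped ENNReal NNReal

noncomputable section

namespace DiscrepancyAux
open AddCircle Finset Metric Set Complex
open scoped Classical

abbrev T := UnitAddCircle



def birk (α : ℝ) (g : C(T, ℂ)) (n : ℕ) (x : ℝ) : ℂ :=
  (n:ℂ)⁻¹ • ∑ k ∈ Finset.range n, g ((x + k*α : ℝ) : T)

def WeylProp (α : ℝ) (g : C(T, ℂ)) : Prop :=
  ∀ ε > (0:ℝ), ∃ N : ℕ, ∀ n ≥ N, ∀ x : ℝ,
    ‖birk α g n x - ∫ z, g z ∂(haarAddCircle : Measure T)‖ < ε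

lemma fourier_apply_real (m : ℤ) (u : ℝ) :
    (fourier m : C(T, ℂ)) (u : T) = Complex.exp (2 * Real.pi * Complex.I * m * u) := by
  rw [fourier_coe_apply]; norm_num

lemma w_ne_one {α : ℝ} (hα : Irrational α) {m : ℤ} (hm : m ≠ 0) :
    Complex.exp (2 * Real.pi * Complex.I * m * α) ≠ 1 := by
  intro h
  rw [Complex.exp_eq_one_iff] at h
  obtain ⟨k, hk⟩ := h
  have h2 : (2 * Real.pi : ℂ) * Complex.I ≠ 0 := by
    simp [Real.pi_ne_zero, Complex.I_ne_zero]
  have hc : (m : ℂ) * α = k := by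
    have : ((m : ℂ) * α) * (2 * Real.pi * Complex.I) = (k : ℂ) * (2 * Real.pi * Complex.I) := by
      rw [← hk]; ring
    exact mul_right_cancel₀ h2 this
  have hr : (m : ℝ) * α = k := by exact_mod_cast hc
  exact (hα.intCast_mul hm).ne_int k (by linarith)

lemma norm_w_eq_one (m : ℤ) (u : ℝ) : ‖Complex.exp (2 * Real.pi * Complex.I * m * u)‖ = 1 := by
  rw [Complex.norm_exp]
  have : (2 * (Real.pi:ℂ) * Complex.I * m * u).re = 0 := by
    simp [Complex.mul_re, Complex.mul_im]
  rw [this, Real.exp_zero]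

lemma birk_fourier {α : ℝ} (hα : Irrational α) {m : ℤ} (hm : m ≠ 0) (n : ℕ) (x : ℝ) :
    ‖birk α (fourier m) n x‖ ≤ (n:ℝ)⁻¹ * (2 / ‖Complex.exp (2 * Real.pi * Complex.I * m * α) - 1‖) := by
  set w := Complex.exp (2 * Real.pi * Complex.I * m * α) with hw
  have hw1 : w ≠ 1 := w_ne_one hα hm
  have hsum : ∑ k ∈ Finset.range n, (fourier m : C(T, ℂ)) ((x + k*α : ℝ) : T)
      = Complex.exp (2 * Real.pi * Complex.I * m * x) * ((w^n - 1)/(w - 1)) := by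
    rw [← geom_sum_eq hw1, Finset.mul_sum]
    refine Finset.sum_congr rfl fun k _ => ?_
    rw [fourier_apply_real, hw, ← Complex.exp_nat_mul, ← Complex.exp_add]
    congr 1
    push_cast
    ring
  rw [birk, hsum]
  rw [norm_smul, norm_inv, Complex.norm_natCast, norm_mul, norm_w_eq_one, one_mul]
  have hnum : ‖w^n - 1‖ ≤ 2 := by
    calc ‖w^n - 1‖ ≤ ‖w^n‖ + ‖(1:ℂ)‖ := norm_sub_le _ _
    _ ≤ 2 := by rw [norm_pow, hw, norm_w_eq_one]; norm_num
  have hdiv : ‖(w^n - 1)/(w - 1)‖ ≤ 2/‖w - 1‖ := by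
    rw [norm_div]
    gcongr
  exact mul_le_mul_of_nonneg_left hdiv (by positivity)

lemma integrable_cm (g : C(T, ℂ)) : Integrable g (haarAddCircle : Measure T) :=
  g.continuous.integrable_of_hasCompactSupport
    (IsCompact.of_isClosed_subset isCompact_univ (isClosed_tsupport _) (subset_univ _))

lemma weylProp_fourier {α : ℝ} (hα : Irrational α) (m : ℤ) : WeylProp α (fourier m) := by
  rcases eq_or_ne m 0 with rfl | hm
  · intro ε hε
    refine ⟨1, fun n hn x => ?_⟩
    have h1 : ∀ z : T, (fourier 0 : C(T, ℂ)) z = 1 := fun z => fourier_zero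
    have hb : birk α (fourier 0) n x = 1 := by
      rw [birk]
      simp only [h1, Finset.sum_const, Finset.card_range, nsmul_eq_mul, mul_one, smul_eq_mul]
      rw [inv_mul_cancel₀]
      exact Nat.cast_ne_zero.mpr (by omega)
    have hi : ∫ z, (fourier 0 : C(T, ℂ)) z ∂(haarAddCircle : Measure T) = 1 := by
      simp only [h1]
      simp
    rw [hb, hi, sub_self, norm_zero]; exact hε
  · intro ε hε
    set w := Complex.exp (2 * Real.pi * Complex.I * m * α) with hw
    have hw1 : w ≠ 1 := w_ne_one hα hm
    have hwpos : 0 < ‖w - 1‖ := by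
      rw [norm_pos_iff, sub_ne_zero]; exact hw1
    obtain ⟨N, hN⟩ := exists_nat_gt (2 / ‖w - 1‖ / ε)
    refine ⟨N + 1, fun n hn x => ?_⟩
    have hint : ∫ z, (fourier m : C(T, ℂ)) z ∂(haarAddCircle : Measure T) = 0 :=
      integral_eq_zero_of_add_right_eq_neg (μ := haarAddCircle)
        (fourier_add_half_inv_index hm one_pos)
    rw [hint, sub_zero]
    refine lt_of_le_of_lt (birk_fourier hα hm n x) ?_
    have hn' : (0:ℝ) < n := by exact_mod_cast Nat.lt_of_lt_of_le (Nat.zero_lt_succ N) hn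
    rw [inv_mul_eq_div, div_lt_iff₀ hn']
    have hNn : (2 / ‖w - 1‖ / ε) < n := hN.trans_le (by exact_mod_cast Nat.le_of_succ_le hn)
    rw [div_lt_iff₀ hε] at hNn
    linarith

lemma weylProp_zero (α : ℝ) : WeylProp α 0 := by
  intro ε hε
  refine ⟨0, fun n _ x => ?_⟩
  simp [birk, WeylProp, hε]

lemma weylProp_add {α : ℝ} {g h : C(T, ℂ)} (hg : WeylProp α g) (hh : WeylProp α h) :
    WeylProp α (g + h) := by
  intro ε hε
  obtain ⟨N1, h1⟩ := hg (ε/2) (by linarith)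
  obtain ⟨N2, h2⟩ := hh (ε/2) (by linarith)
  refine ⟨max N1 N2, fun n hn x => ?_⟩
  have hb : birk α (g + h) n x = birk α g n x + birk α h n x := by
    simp only [birk, ContinuousMap.add_apply, Finset.sum_add_distrib, smul_add]
  have hi : ∫ z, (g + h) z ∂(haarAddCircle : Measure T)
      = (∫ z, g z ∂(haarAddCircle : Measure T)) + ∫ z, h z ∂(haarAddCircle : Measure T) := by
    simp only [ContinuousMap.add_apply]
    exact integral_add (integrable_cm g) (integrable_cm h)
  rw [hb, hi]
  calc ‖birk α g n x + birk α h n x - (_ + _)‖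
      = ‖(birk α g n x - _) + (birk α h n x - _)‖ := by ring_nf
    _ ≤ ‖birk α g n x - _‖ + ‖birk α h n x - _‖ := norm_add_le _ _
    _ < ε/2 + ε/2 := add_lt_add (h1 n (le_of_max_le_left hn) x) (h2 n (le_of_max_le_right hn) x)
    _ = ε := by ring

lemma weylProp_smul {α : ℝ} (c : ℂ) {g : C(T, ℂ)} (hg : WeylProp α g) :
    WeylProp α (c • g) := by
  intro ε hε
  obtain ⟨N, hN⟩ := hg (ε/(‖c‖+1)) (by positivity)
  refine ⟨N, fun n hn x => ?_⟩
  have hb : birk α (c • g) n x = c * birk α g n x := by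
    simp only [birk, ContinuousMap.smul_apply, smul_eq_mul, ← Finset.mul_sum]
    ring
  have hi : ∫ z, (c • g) z ∂(haarAddCircle : Measure T)
      = c * ∫ z, g z ∂(haarAddCircle : Measure T) := by
    simp only [ContinuousMap.smul_apply, smul_eq_mul]
    rw [integral_const_mul]
  rw [hb, hi, ← mul_sub, norm_mul]
  calc ‖c‖ * ‖birk α g n x - _‖ ≤ ‖c‖ * (ε/(‖c‖+1)) := by
        exact mul_le_mul_of_nonneg_left (le_of_lt (hN n hn x)) (norm_nonneg c)
    _ < ε := by
        have h1 : ‖c‖ / (‖c‖+1) < 1 := by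
          rw [div_lt_one (by positivity)]; linarith
        calc ‖c‖ * (ε/(‖c‖+1)) = (‖c‖/(‖c‖+1)) * ε := by ring
        _ < 1 * ε := by exact mul_lt_mul_of_pos_right h1 hε
        _ = ε := one_mul ε

lemma weylProp_of_mem_span {α : ℝ} (hα : Irrational α) {g : C(T, ℂ)}
    (hg : g ∈ Submodule.span ℂ (Set.range (fourier (T := (1:ℝ))))) : WeylProp α g := by
  induction hg using Submodule.span_induction with
  | mem x hx => obtain ⟨m, rfl⟩ := hx; exact weylProp_fourier hα m
  | zero => exact weylProp_zero α
  | add x y hx hy ihx ihy => exact weylProp_add ihx ihy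
  | smul c x hx ih => exact weylProp_smul c ih

lemma weylProp_all {α : ℝ} (hα : Irrational α) (g : C(T, ℂ)) : WeylProp α g := by
  intro ε hε
  have hdense := span_fourier_closure_eq_top (T := (1:ℝ))
  have hg : g ∈ (Submodule.span ℂ (Set.range (fourier (T := (1:ℝ))))).topologicalClosure := by
    rw [hdense]; trivial
  have hg' : g ∈ closure (↑(Submodule.span ℂ (Set.range (fourier (T := (1:ℝ))))) : Set C(T, ℂ)) := hg
  obtain ⟨P, hPmem, hPd⟩ := Metric.mem_closure_iff.mp hg' (ε/3) (by linarith)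
  obtain ⟨N, hN⟩ := weylProp_of_mem_span hα hPmem (ε/3) (by linarith)
  refine ⟨max N 1, fun n hn x => ?_⟩
  have hn1 : 1 ≤ n := le_of_max_le_right hn
  have hnc : (0:ℝ) < n := by exact_mod_cast hn1
  have hgP : ‖g - P‖ < ε/3 := by rw [← dist_eq_norm]; exact hPd
  have key : ∀ (h : C(T,ℂ)), ‖birk α h n x‖ ≤ ‖h‖ := by
    intro h
    rw [birk, norm_smul, norm_inv, Complex.norm_natCast]
    have hs : ‖∑ k ∈ Finset.range n, h ((x + k*α : ℝ) : T)‖ ≤ n * ‖h‖ := by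
      refine (norm_sum_le _ _).trans ?_
      calc ∑ k ∈ Finset.range n, ‖h ((x + k*α : ℝ) : T)‖
          ≤ ∑ _k ∈ Finset.range n, ‖h‖ :=
            Finset.sum_le_sum fun k _ => h.norm_coe_le_norm _
        _ = n * ‖h‖ := by simp [Finset.sum_const, Finset.card_range]
    calc (n:ℝ)⁻¹ * ‖∑ k ∈ Finset.range n, h ((x + k*α : ℝ) : T)‖
        ≤ (n:ℝ)⁻¹ * (n * ‖h‖) := mul_le_mul_of_nonneg_left hs (by positivity)
      _ = ‖h‖ := by field_simp
  have hbdiff : birk α g n x - birk α P n x = birk α (g - P) n x := by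
    simp only [birk, ContinuousMap.sub_apply, Finset.sum_sub_distrib, smul_sub]
  have hidiff : ‖(∫ z, P z ∂(haarAddCircle : Measure T)) - ∫ z, g z ∂(haarAddCircle : Measure T)‖
      ≤ ‖g - P‖ := by
    rw [← integral_sub (integrable_cm P) (integrable_cm g)]
    have h1 : ‖∫ z, (P z - g z) ∂(haarAddCircle : Measure T)‖
        ≤ ‖g - P‖ * ((haarAddCircle : Measure T) Set.univ).toReal := by
      refine norm_integral_le_of_norm_le_const (Filter.Eventually.of_forall fun z => ?_)
      calc ‖P z - g z‖ = ‖(g - P) z‖ := by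
            rw [ContinuousMap.sub_apply, norm_sub_rev]
        _ ≤ ‖g - P‖ := (g - P).norm_coe_le_norm z
    simpa [measure_univ] using h1
  have hPbound := hN n (le_of_max_le_left hn) x
  calc ‖birk α g n x - ∫ z, g z ∂(haarAddCircle : Measure T)‖
      = ‖(birk α g n x - birk α P n x) + ((birk α P n x - ∫ z, P z ∂(haarAddCircle : Measure T))
          + ((∫ z, P z ∂(haarAddCircle : Measure T)) - ∫ z, g z ∂(haarAddCircle : Measure T)))‖ := by
        ring_nf
    _ ≤ ‖birk α g n x - birk α P n x‖ + (‖birk α P n x - ∫ z, P z ∂(haarAddCircle : Measure T)‖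
          + ‖(∫ z, P z ∂(haarAddCircle : Measure T)) - ∫ z, g z ∂(haarAddCircle : Measure T)‖) :=
        (norm_add_le _ _).trans (by gcongr; exact norm_add_le _ _)
    _ < ε/3 + (ε/3 + ε/3) := by
        have e1 : ‖birk α g n x - birk α P n x‖ < ε/3 := by
          rw [hbdiff]; exact (key _).trans_lt hgP
        have e3 : ‖(∫ z, P z ∂(haarAddCircle : Measure T))
            - ∫ z, g z ∂(haarAddCircle : Measure T)‖ < ε/3 := hidiff.trans_lt hgP
        exact add_lt_add e1 (add_lt_add hPbound e3)
    _ = ε := by ring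



lemma mem_closedBall_iff (c ε y : ℝ) :
    (↑y : T) ∈ closedBall (↑c : T) ε ↔ ∃ m : ℤ, |y - (c + m)| ≤ ε := by
  have h := coe_real_preimage_closedBall_eq_iUnion (p := (1:ℝ)) c ε
  have h2 : y ∈ ((↑) ⁻¹' closedBall (↑c : T) ε) ↔ y ∈ ⋃ z : ℤ, closedBall (c + z • (1:ℝ)) ε := by
    rw [h]
  simpa [Real.dist_eq] using h2

lemma mem1 {y s : ℝ} (hs0 : 0 ≤ s) (hf : Int.fract y < s) :
    (↑y : T) ∈ closedBall (↑(s/2) : T) (s/2) := by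
  rw [mem_closedBall_iff]
  refine ⟨⌊y⌋, ?_⟩
  have h1 : y - (s/2 + ⌊y⌋) = Int.fract y - s/2 := by rw [Int.fract]; ring
  rw [h1, abs_le]
  have := Int.fract_nonneg y
  constructor <;> linarith

lemma mem2 {y s : ℝ} (hs1 : s ≤ 1) (hd : dist (↑y : T) (↑(s/2) : T) < s/2) :
    Int.fract y < s := by
  have hb : (↑y : T) ∈ closedBall (↑(s/2) : T) (dist (↑y : T) (↑(s/2) : T)) :=
    mem_closedBall.mpr le_rfl
  rw [mem_closedBall_iff] at hb
  obtain ⟨m, hm⟩ := hb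
  have hm' : |y - (s/2 + m)| < s/2 := lt_of_le_of_lt hm hd
  rw [abs_lt] at hm'
  have hfl : ⌊y⌋ = m := by
    rw [Int.floor_eq_iff]
    constructor <;> push_cast <;> [linarith; linarith]
  rw [Int.fract, hfl]
  push_cast
  linarith


def fplus (s η : ℝ) : C(T, ℝ) :=
  ⟨fun z => max 0 (min 1 (1 - (dist z (↑(s/2) : T) - s/2)/η)), by
    apply Continuous.max continuous_const
    apply Continuous.min continuous_const
    fun_prop⟩

def fminus (s η : ℝ) : C(T, ℝ) :=
  ⟨fun z => max 0 (min 1 ((s/2 - dist z (↑(s/2) : T))/η)), by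
    apply Continuous.max continuous_const
    apply Continuous.min continuous_const
    fun_prop⟩

variable {s η : ℝ}

lemma fplus_nonneg (z : T) : 0 ≤ fplus s η z := le_max_left _ _
lemma fminus_nonneg (z : T) : 0 ≤ fminus s η z := le_max_left _ _
lemma fplus_le_one (z : T) : fplus s η z ≤ 1 :=
  max_le zero_le_one (min_le_left _ _)
lemma fminus_le_one (z : T) : fminus s η z ≤ 1 :=
  max_le zero_le_one (min_le_left _ _)

lemma fplus_eq_one {y : ℝ} (hη : 0 < η) (hf : Int.fract y < s) :
    fplus s η (↑y : T) = 1 := by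
  have hd : dist (↑y : T) (↑(s/2) : T) ≤ s/2 :=
    mem1 ((Int.fract_nonneg y).trans hf.le) hf
  have h1 : (dist (↑y : T) (↑(s/2) : T) - s/2)/η ≤ 0 :=
    div_nonpos_of_nonpos_of_nonneg (by linarith) hη.le
  simp only [fplus, ContinuousMap.coe_mk]
  rw [min_eq_left (by linarith), max_eq_right (by linarith)]

lemma fminus_lt {y : ℝ} (hη : 0 < η) (hs1 : s ≤ 1) (hpos : 0 < fminus s η (↑y : T)) :
    Int.fract y < s := by
  apply mem2 hs1
  by_contra hd
  push_neg at hd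
  have : (s/2 - dist (↑y : T) (↑(s/2) : T))/η ≤ 0 := by
    apply div_nonpos_of_nonpos_of_nonneg _ hη.le
    linarith
  have h2 : fminus s η (↑y : T) ≤ 0 := by
    simp only [fminus, ContinuousMap.coe_mk]
    apply max_le le_rfl ((min_le_right _ _).trans this)
  linarith



lemma integrable_cm_real (g : C(T, ℝ)) : Integrable g (haarAddCircle : Measure T) :=
  g.continuous.integrable_of_hasCompactSupport
    (IsCompact.of_isClosed_subset isCompact_univ (isClosed_tsupport _) (subset_univ _))

lemma haar_closedBall (c : T) (r : ℝ) :
    (haarAddCircle : Measure T) (closedBall c r) = ENNReal.ofReal (min 1 (2*r)) := by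
  have hv : (volume : Measure T) = (haarAddCircle : Measure T) := by
    rw [volume_eq_smul_haarAddCircle, ENNReal.ofReal_one, one_smul]
  rw [← hv, AddCircle.volume_closedBall]

lemma integral_fplus_le (hs0 : 0 ≤ s) (hη : 0 < η) :
    ∫ z, fplus s η z ∂(haarAddCircle : Measure T) ≤ s + 2*η := by
  have hle : ∀ z, fplus s η z ≤
      Set.indicator (closedBall (↑(s/2) : T) (s/2 + η)) (fun _ => (1:ℝ)) z := by
    intro z
    by_cases hz : z ∈ closedBall (↑(s/2) : T) (s/2 + η)
    · rw [Set.indicator_of_mem hz]; exact fplus_le_one z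
    · rw [Set.indicator_of_notMem hz]
      rw [mem_closedBall, not_le] at hz
      have h1 : 1 < (dist z (↑(s/2) : T) - s/2)/η := by
        rw [lt_div_iff₀ hη]; linarith
      simp only [fplus, ContinuousMap.coe_mk]
      rw [max_eq_left]
      exact (min_le_right _ _).trans (by linarith)
  calc ∫ z, fplus s η z ∂(haarAddCircle : Measure T)
      ≤ ∫ z, Set.indicator (closedBall (↑(s/2) : T) (s/2 + η)) (fun _ => (1:ℝ)) z
          ∂(haarAddCircle : Measure T) := by
        apply integral_mono (integrable_cm_real _) _ hle
        exact (integrable_const 1).indicator measurableSet_closedBall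
    _ = ((haarAddCircle : Measure T) (closedBall (↑(s/2) : T) (s/2 + η))).toReal • (1:ℝ) := by
        rw [integral_indicator_const _ measurableSet_closedBall, Measure.real]
    _ ≤ s + 2*η := by
        rw [haar_closedBall, smul_eq_mul, mul_one, ENNReal.toReal_ofReal]
        · exact (min_le_right _ _).trans (by linarith)
        · exact le_min (by norm_num) (by linarith)

lemma integral_fminus_ge (hs1 : s ≤ 1) (hη : 0 < η) :
    s - 3*η ≤ ∫ z, fminus s η z ∂(haarAddCircle : Measure T) := by
  rcases lt_or_ge (s/2) η with hcase | hcase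
  · have h0 : 0 ≤ ∫ z, fminus s η z ∂(haarAddCircle : Measure T) :=
      integral_nonneg fun z => fminus_nonneg z
    linarith
  · have hge : ∀ z, Set.indicator (closedBall (↑(s/2) : T) (s/2 - η)) (fun _ => (1:ℝ)) z
        ≤ fminus s η z := by
      intro z
      by_cases hz : z ∈ closedBall (↑(s/2) : T) (s/2 - η)
      · rw [Set.indicator_of_mem hz]
        rw [mem_closedBall] at hz
        have h1 : 1 ≤ (s/2 - dist z (↑(s/2) : T))/η := by
          rw [le_div_iff₀ hη]; linarith
        simp only [fminus, ContinuousMap.coe_mk]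
        rw [min_eq_left h1, max_eq_right zero_le_one]
      · rw [Set.indicator_of_notMem hz]; exact fminus_nonneg z
    calc (s:ℝ) - 3*η ≤ s - 2*η := by linarith
      _ = ((haarAddCircle : Measure T) (closedBall (↑(s/2) : T) (s/2 - η))).toReal • (1:ℝ) := by
          rw [haar_closedBall, smul_eq_mul, mul_one, ENNReal.toReal_ofReal (le_min (by norm_num) (by linarith))]
          rw [min_eq_right (by linarith)]
          ring
      _ = ∫ z, Set.indicator (closedBall (↑(s/2) : T) (s/2 - η)) (fun _ => (1:ℝ)) z
            ∂(haarAddCircle : Measure T) := by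
          rw [integral_indicator_const _ measurableSet_closedBall, Measure.real]
      _ ≤ ∫ z, fminus s η z ∂(haarAddCircle : Measure T) := by
          apply integral_mono _ (integrable_cm_real _) hge
          exact (integrable_const 1).indicator measurableSet_closedBall


lemma weyl_real {α : ℝ} (hα : Irrational α) (f : C(T, ℝ)) :
    ∀ ε > (0:ℝ), ∃ N : ℕ, 1 ≤ N ∧ ∀ n ≥ N, ∀ x : ℝ,
      |(∑ k ∈ Finset.range n, f ((x + k*α : ℝ) : T)) / n
        - ∫ z, f z ∂(haarAddCircle : Measure T)| < ε := by
  intro ε hε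
  set g : C(T, ℂ) := ⟨fun z => ((f z : ℝ) : ℂ), Complex.continuous_ofReal.comp f.continuous⟩ with hg
  obtain ⟨N, hN⟩ := weylProp_all hα g ε hε
  refine ⟨max N 1, le_max_right _ _, fun n hn x => ?_⟩
  have h := hN n (le_of_max_le_left hn) x
  have hb : birk α g n x = (((∑ k ∈ Finset.range n, f ((x + k*α : ℝ) : T)) / n : ℝ) : ℂ) := by
    simp only [birk, ContinuousMap.coe_mk, hg, smul_eq_mul]
    push_cast
    ring
  have hi : ∫ z, g z ∂(haarAddCircle : Measure T)
      = ((∫ z, f z ∂(haarAddCircle : Measure T) : ℝ) : ℂ) := by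
    simp only [hg, ContinuousMap.coe_mk]
    exact integral_ofReal
  rw [hb, hi, ← Complex.ofReal_sub] at h
  rwa [Complex.norm_real, Real.norm_eq_abs] at h

def cnt (α : ℝ) (n : ℕ) (x s : ℝ) : ℕ :=
  ((Finset.range n).filter (fun k : ℕ => Int.fract (x + (k:ℝ)*α) < s)).card

lemma cnt_mono (α : ℝ) (n : ℕ) (x : ℝ) {s s' : ℝ} (h : s ≤ s') :
    cnt α n x s ≤ cnt α n x s' := by
  apply Finset.card_le_card
  intro k hk
  simp only [Finset.mem_filter] at hk ⊢
  exact ⟨hk.1, lt_of_lt_of_le hk.2 h⟩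

lemma cnt_le_sum {s η : ℝ} (hη : 0 < η) (α : ℝ) (n : ℕ) (x : ℝ) :
    (cnt α n x s : ℝ) ≤ ∑ k ∈ Finset.range n, fplus s η ((x + k*α : ℝ) : T) := by
  classical
  rw [cnt]
  have h1 : (((Finset.range n).filter (fun k : ℕ => Int.fract (x + (k:ℝ)*α) < s)).card : ℝ)
      = ∑ k ∈ (Finset.range n).filter (fun k : ℕ => Int.fract (x + (k:ℝ)*α) < s), (1:ℝ) := by
    simp
  rw [h1]
  calc ∑ k ∈ (Finset.range n).filter (fun k : ℕ => Int.fract (x + (k:ℝ)*α) < s), (1:ℝ)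
      ≤ ∑ k ∈ (Finset.range n).filter (fun k : ℕ => Int.fract (x + (k:ℝ)*α) < s),
          fplus s η ((x + k*α : ℝ) : T) := by
        apply Finset.sum_le_sum
        intro k hk
        rw [fplus_eq_one hη (Finset.mem_filter.mp hk).2]
    _ ≤ ∑ k ∈ Finset.range n, fplus s η ((x + k*α : ℝ) : T) :=
        Finset.sum_le_sum_of_subset_of_nonneg (Finset.filter_subset _ _)
          (fun k _ _ => fplus_nonneg _)

lemma sum_le_cnt {s η : ℝ} (hη : 0 < η) (hs1 : s ≤ 1) (α : ℝ) (n : ℕ) (x : ℝ) :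
    ∑ k ∈ Finset.range n, fminus s η ((x + k*α : ℝ) : T) ≤ (cnt α n x s : ℝ) := by
  classical
  rw [cnt, ← Finset.sum_filter_add_sum_filter_not (Finset.range n)
    (fun k : ℕ => Int.fract (x + (k:ℝ)*α) < s) (fun k => fminus s η ((x + k*α : ℝ) : T))]
  have h2 : ∑ k ∈ (Finset.range n).filter (fun k : ℕ => ¬ Int.fract (x + (k:ℝ)*α) < s),
      fminus s η ((x + k*α : ℝ) : T) = 0 := by
    apply Finset.sum_eq_zero
    intro k hk
    have hns := (Finset.mem_filter.mp hk).2
    by_contra hne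
    have hpos : 0 < fminus s η ((x + k*α : ℝ) : T) :=
      lt_of_le_of_ne (fminus_nonneg _) (Ne.symm hne)
    exact hns (fminus_lt hη hs1 hpos)
  rw [h2, add_zero]
  calc ∑ k ∈ (Finset.range n).filter (fun k : ℕ => Int.fract (x + (k:ℝ)*α) < s),
        fminus s η ((x + k*α : ℝ) : T)
      ≤ ∑ k ∈ (Finset.range n).filter (fun k : ℕ => Int.fract (x + (k:ℝ)*α) < s), (1:ℝ) :=
        Finset.sum_le_sum fun k _ => fminus_le_one _
    _ = _ := by simp

lemma cnt_conv {α : ℝ} (hα : Irrational α) {s : ℝ} (hs0 : 0 ≤ s) (hs1 : s ≤ 1)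
    {δ : ℝ} (hδ : 0 < δ) :
    ∃ N : ℕ, 1 ≤ N ∧ ∀ n ≥ N, ∀ x : ℝ, |(cnt α n x s : ℝ)/n - s| ≤ δ := by
  set η := δ/8 with hη
  have hηpos : 0 < η := by rw [hη]; linarith
  obtain ⟨N1, hN1one, hN1⟩ := weyl_real hα (fplus s η) (δ/8) (by linarith)
  obtain ⟨N2, hN2one, hN2⟩ := weyl_real hα (fminus s η) (δ/8) (by linarith)
  refine ⟨max N1 N2, le_trans hN1one (le_max_left _ _), fun n hn x => ?_⟩
  have hn1 : 1 ≤ n := le_trans hN1one (le_trans (le_max_left _ _) hn)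
  have hnpos : (0:ℝ) < n := by exact_mod_cast hn1
  have hup := hN1 n (le_trans (le_max_left _ _) hn) x
  have hlo := hN2 n (le_trans (le_max_right _ _) hn) x
  have hIu := integral_fplus_le hs0 hηpos
  have hIl := integral_fminus_ge hs1 hηpos
  rw [abs_lt] at hup hlo
  have hu2 : (cnt α n x s : ℝ)/n ≤ (∑ k ∈ Finset.range n, fplus s η ((x + k*α : ℝ) : T)) / n :=
    (div_le_div_iff_of_pos_right hnpos).mpr (cnt_le_sum hηpos α n x)
  have hl2 : (∑ k ∈ Finset.range n, fminus s η ((x + k*α : ℝ) : T)) / n ≤ (cnt α n x s : ℝ)/n :=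
    (div_le_div_iff_of_pos_right hnpos).mpr (sum_le_cnt hηpos hs1 α n x)
  rw [abs_le]
  constructor
  · have := hlo.1
    have h3 : s - 3*η - δ/8 < (∑ k ∈ Finset.range n, fminus s η ((x + k*α : ℝ) : T)) / n := by
      linarith
    nlinarith [hl2]
  · have := hup.2
    nlinarith [hu2]

end DiscrepancyAux

/-- For irrational `α`, the discrepancy of `{x}, {x+α}, …, {x+(n−1)α}`
tends to `0` as `n → ∞`, uniformly in `x`. -/
theorem discrepancy_orbit_tendsto_zero (α : ℝ) (hα : Irrational α) :
    ∀ ε > (0:ℝ), ∃ N : ℕ, ∀ n ≥ N, ∀ x : ℝ,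
      discrepancy n (fun j : Fin n => Int.fract (x + (j : ℕ) * α)) < ε := by
  classical
  intro ε hε
  obtain ⟨m, hm⟩ := exists_nat_gt (3/ε)
  have hm0 : (0:ℝ) < m := lt_trans (by positivity) hm
  have hminv : (1:ℝ)/m < ε/3 := by
    rw [div_lt_div_iff₀ hm0 (by norm_num : (0:ℝ) < 3)]
    have := (div_lt_iff₀ hε).mp hm
    nlinarith
  have H : ∀ i : ℕ, i ≤ m → ∃ N : ℕ, 1 ≤ N ∧ ∀ n ≥ N, ∀ x : ℝ,
      |(DiscrepancyAux.cnt α n x ((i:ℝ)/m) : ℝ)/n - (i:ℝ)/m| ≤ ε/3 := fun i hi =>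
    DiscrepancyAux.cnt_conv hα (by positivity)
      (by rw [div_le_one hm0]; exact_mod_cast hi) (by linarith)
  choose! Nf hNf1 hNf2 using H
  refine ⟨((Finset.range (m+1)).sup Nf) + 1, fun n hn x => ?_⟩
  have hn1 : 1 ≤ n := le_trans (Nat.le_add_left 1 _) hn
  have hnpos : (0:ℝ) < n := by exact_mod_cast hn1
  have hnN : ∀ i, i ≤ m → Nf i ≤ n := fun i hi =>
    le_trans (le_trans (Finset.le_sup (Finset.mem_range.mpr (Nat.lt_succ_of_le hi)))
      (Nat.le_succ _)) hn
  have key : ∀ t : ℝ, 0 < t → t ≤ 1 →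
      |(DiscrepancyAux.cnt α n x t : ℝ)/n - t| ≤ 1/m + ε/3 := by
    intro t ht0 ht1
    set i := ⌈t*(m:ℝ)⌉₊ with hidef
    have hi1 : 1 ≤ i := Nat.one_le_ceil_iff.mpr (by positivity)
    have him : i ≤ m := Nat.ceil_le.mpr (by nlinarith)
    have hle : t ≤ (i:ℝ)/m := by
      rw [le_div_iff₀ hm0]; exact Nat.le_ceil _
    have hceil : (i:ℝ) < t*m + 1 := by
      exact_mod_cast Nat.ceil_lt_add_one (by positivity : (0:ℝ) ≤ t*m)
    have hcast : (((i-1:ℕ)):ℝ) = (i:ℝ) - 1 := by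
      push_cast [Nat.cast_sub hi1]
      ring
    have him1 : i - 1 ≤ m := le_trans (Nat.sub_le _ _) him
    have hu := hNf2 i him n (hnN i him) x
    have hl := hNf2 (i-1) him1 n (hnN _ him1) x
    rw [abs_le] at hu hl
    rw [hcast] at hl
    have hmono1 : (DiscrepancyAux.cnt α n x t : ℝ)/n
        ≤ (DiscrepancyAux.cnt α n x ((i:ℝ)/m) : ℝ)/n := by
      apply (div_le_div_iff_of_pos_right hnpos).mpr
      exact_mod_cast DiscrepancyAux.cnt_mono α n x hle
    have hmono2 : (DiscrepancyAux.cnt α n x (((i:ℝ)-1)/m) : ℝ)/n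
        ≤ (DiscrepancyAux.cnt α n x t : ℝ)/n := by
      apply (div_le_div_iff_of_pos_right hnpos).mpr
      have h2 : ((i:ℝ)-1)/m ≤ t := by
        rw [div_le_iff₀ hm0]; linarith
      exact_mod_cast DiscrepancyAux.cnt_mono α n x h2
    rw [abs_le]
    constructor
    · have h1 := hl.1
      have h3 : t - 1/m ≤ ((i:ℝ)-1)/m := by
        rw [sub_div]
        linarith [hle]
      linarith
    · have h1 := hu.2
      have h3 : (i:ℝ)/m ≤ t + 1/m := by
        have h4 : ((i:ℝ)-1)/m < t := by
          rw [div_lt_iff₀ hm0]; linarith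
        rw [show (i:ℝ)/m = ((i:ℝ)-1)/m + 1/m by ring]
        linarith
      linarith
  have hne : Nonempty (Set.Ioc (0:ℝ) 1) := ⟨⟨1, by norm_num⟩⟩
  refine lt_of_le_of_lt (ciSup_le fun t => ?_) (show (1:ℝ)/m + ε/3 < ε by linarith)
  have hcard : (Nat.card {k : Fin n // 0 ≤ Int.fract (x + (k:ℕ)*α)
      ∧ Int.fract (x + (k:ℕ)*α) < (t:ℝ)}) = DiscrepancyAux.cnt α n x t := by
    rw [Nat.card_eq_fintype_card, Fintype.card_subtype, DiscrepancyAux.cnt,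
      Finset.card_filter, Finset.card_filter]
    rw [Fin.sum_univ_eq_sum_range (fun k =>
      if 0 ≤ Int.fract (x + (k:ℝ)*α) ∧ Int.fract (x + (k:ℝ)*α) < (t:ℝ) then 1 else 0)]
    apply Finset.sum_congr rfl
    intro k _
    simp [Int.fract_nonneg]
  rw [hcard]
  exact key t t.2.1 t.2.2
end
end

section
/- Let α be irrational and let {g_m}_{m∈ℕ} be a subadditive cocycle of measurable 1-periodic functions over the rotation x ↦ x+α, i.e. g_{n+m}(x) ≤ g_n(x) + g_m(x+nα) for all n, m and x. Suppose g₁ is bounded from above, Var [g_m]_A < ∞ for every m ∈ ℕ and every A ∈ ℝ, and L(α, g) := lim_{n→∞} (1/n)∫₀¹ g_n(x) dx > −∞. Then for every ε > 0 there exists n₀ = n₀(ε, α, g) such that for every n ≥ n₀ and every x ∈ [0,1), (1/n) g_n(x) ≤ L(α, g) + ε. -/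
open MeasureTheory Filter
open scoped ENNReal NNReal

noncomputable section

/-- The truncation `[f]_B` of a real-valued function: `[f]_B x = f x` if `|f x| ≤ B`,
and `B` otherwise. -/
def trunc (f : ℝ → ℝ) (B : ℝ) : ℝ → ℝ := fun x => if |f x| ≤ B then f x else B

/-- The total variation of a `1`-periodic function over the period `[0,1]`. -/
def pVar (f : ℝ → ℝ) : ℝ≥0∞ := eVariationOn f (Set.Icc 0 1)

/-- The semi-bounded variation `𝒱(f) = sup_{B ≥ 1} (1/B) Var [f]_B`. -/
def sVar (f : ℝ → ℝ) : ℝ≥0∞ :=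
  ⨆ B : {B : ℝ // 1 ≤ B}, (ENNReal.ofReal B.1)⁻¹ * pVar (trunc f B.1)

open Set

section Aux

lemma aux_integrableOn {h : ℝ → ℝ} (hm : Measurable h) {A : ℝ} (hA : ∀ x, |h x| ≤ A)
    {s : Set ℝ} (hs : volume s ≠ ⊤) : IntegrableOn h s volume := by
  refine Integrable.mono' (g := fun _ => A) (integrableOn_const hs)
    hm.aestronglyMeasurable (ae_of_all _ fun x => ?_)
  simpa [Real.norm_eq_abs] using hA x

lemma aux_intint {h : ℝ → ℝ} (hm : Measurable h) {A : ℝ} (hA : ∀ x, |h x| ≤ A)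
    (a b : ℝ) : IntervalIntegrable h volume a b := by
  rw [intervalIntegrable_iff]
  exact aux_integrableOn hm hA measure_Ioc_lt_top.ne

lemma icc_add_icc' (f : ℝ → ℝ) {a b c : ℝ} (hab : a ≤ b) (hbc : b ≤ c) :
    eVariationOn f (Icc a b) + eVariationOn f (Icc b c) = eVariationOn f (Icc a c) := by
  have := eVariationOn.Icc_add_Icc f (s := Set.univ) hab hbc (Set.mem_univ b)
  simpa using this

lemma evar_chain (f : ℝ → ℝ) (a d : ℝ) (hd : 0 ≤ d) (n : ℕ) :
    ∑ i ∈ Finset.range n, eVariationOn f (Icc (a + i*d) (a + (i+1)*d))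
      = eVariationOn f (Icc a (a + n*d)) := by
  induction n with
  | zero => simp [eVariationOn.subsingleton f (s := Icc a (a + 0*d)) (by simp [Set.Icc_self, Set.subsingleton_singleton])]
  | succ n ih =>
      rw [Finset.sum_range_succ, ih]
      have h1 : a ≤ a + n*d := by nlinarith [Nat.cast_nonneg (α := ℝ) n]
      have h2 : a + n*d ≤ a + (n+1)*d := by nlinarith
      have := icc_add_icc' f h1 h2
      push_cast
      rw [this]

lemma evar_translate {f : ℝ → ℝ} (hp : Function.Periodic f 1) (k : ℤ) :
    eVariationOn f (Icc (k:ℝ) (k+1)) = eVariationOn f (Icc 0 1) := by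
  have hmono : MonotoneOn (fun y : ℝ => y + k) (Icc 0 1) := fun x _ y _ hxy => by
    simpa using hxy
  have := eVariationOn.comp_eq_of_monotoneOn f (fun y : ℝ => y + (k:ℝ)) hmono
  have himg : (fun y : ℝ => y + (k:ℝ)) '' Icc 0 1 = Icc (k:ℝ) (k+1) := by
    rw [Set.image_add_const_Icc]; norm_num; rw [add_comm]
  have hfe : (f ∘ fun y : ℝ => y + (k:ℝ)) = f := by
    funext y
    have h2 : f (y + (k : ℝ) * 1) = f y := (hp.int_mul k) y
    simpa using h2
  rw [hfe, himg] at this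
  exact this.symm

lemma evar_m2_2 {f : ℝ → ℝ} (hp : Function.Periodic f 1)
    (hV : eVariationOn f (Icc 0 1) ≠ ⊤) : eVariationOn f (Icc (-2:ℝ) 2) ≠ ⊤ := by
  have e1 : eVariationOn f (Icc (-2:ℝ) (-1)) = eVariationOn f (Icc 0 1) := by
    have := evar_translate hp (-2); norm_num at this; convert this using 3
  have e2 : eVariationOn f (Icc (-1:ℝ) 0) = eVariationOn f (Icc 0 1) := by
    have := evar_translate hp (-1); norm_num at this; convert this using 3
  have e4 : eVariationOn f (Icc (1:ℝ) 2) = eVariationOn f (Icc 0 1) := by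
    have := evar_translate hp 1; norm_num at this; convert this using 3
  have c1 := icc_add_icc' f (by norm_num : (-2:ℝ) ≤ -1) (by norm_num : (-1:ℝ) ≤ 0)
  have c2 := icc_add_icc' f (by norm_num : (-2:ℝ) ≤ 0) (by norm_num : (0:ℝ) ≤ 1)
  have c3 := icc_add_icc' f (by norm_num : (-2:ℝ) ≤ 1) (by norm_num : (1:ℝ) ≤ 2)
  rw [← c3, ← c2, ← c1, e1, e2, e4]
  simp only [ne_eq, ENNReal.add_eq_top, not_or]
  exact ⟨⟨⟨hV, hV⟩, hV⟩, hV⟩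

lemma exists_good_rat {β : ℝ} (hβ : Irrational β) (N : ℕ) :
    ∃ r : ℚ, N ≤ r.den ∧ |β - r| < 1/(r.den:ℝ)^2 := by
  by_contra hcon
  push_neg at hcon
  have hinf := Real.infinite_rat_abs_sub_lt_one_div_den_sq_of_irrational hβ
  set M : ℤ := ⌈(|β|+1) * N⌉ with hM
  have hsub : {q : ℚ | |β - q| < 1 / (q.den : ℝ) ^ 2} ⊆
      {q : ℚ | |q.num| ≤ M ∧ q.den < N} := by
    intro r hr
    simp only [Set.mem_setOf_eq] at hr ⊢
    have hden : r.den < N := by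
      by_contra hd
      push_neg at hd
      exact absurd hr (not_lt.2 (hcon r hd))
    have hd1 : (1:ℝ) ≤ (r.den : ℝ) := by exact_mod_cast r.pos
    have hle1 : 1 / (r.den : ℝ)^2 ≤ 1 := by
      rw [div_le_one (by positivity)]; nlinarith
    have habs : |(r:ℝ)| ≤ |β| + 1 := by
      have := abs_sub_abs_le_abs_sub (r:ℝ) β
      rw [abs_sub_comm] at hr
      linarith [hr.le.trans hle1]
    constructor
    · have hnum : (|r.num| : ℝ) = |(r:ℝ)| * r.den := by
        rw [← abs_of_pos (show (0:ℝ) < (r.den:ℝ) by positivity), ← abs_mul]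
        congr 1
        rw [Rat.cast_def]
        field_simp
      have hNle : (r.den : ℝ) ≤ N := by exact_mod_cast hden.le
      have : (|r.num| : ℝ) ≤ (|β|+1) * N := by
        rw [hnum]
        have h0 : (0:ℝ) ≤ (r.den:ℝ) := by positivity
        calc |(r:ℝ)| * r.den ≤ (|β|+1) * r.den := by nlinarith
          _ ≤ (|β|+1) * N := by nlinarith [abs_nonneg β]
      exact_mod_cast this.trans (Int.le_ceil _)
    · exact hden
  have hfin : Set.Finite {q : ℚ | |q.num| ≤ M ∧ q.den < N} := by
    have : Set.Finite ((Set.Icc (-M) M) ×ˢ (Set.Iio N)) :=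
      (Set.finite_Icc _ _).prod (Set.finite_Iio N)
    apply Set.Finite.of_finite_image (f := fun r : ℚ => (r.num, r.den))
    · apply this.subset
      rintro ⟨a, b⟩ ⟨r, hrm, hab⟩
      obtain ⟨h1, h2⟩ := Prod.mk.injEq .. ▸ hab
      subst h1; subst h2
      exact ⟨by simpa [abs_le] using hrm.1, hrm.2⟩
    · intro r _ s _ hrs
      have h1 : r.num = s.num := congrArg Prod.fst hrs
      have h2 : r.den = s.den := congrArg Prod.snd hrs
      exact Rat.ext h1 h2
  exact hinf (hfin.subset hsub)

lemma point_vs_avg {h : ℝ → ℝ} (hm : Measurable h) {A : ℝ} (hA : ∀ x, |h x| ≤ A)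
    {b : ℝ} {q : ℕ} (hq : 0 < q) {z : ℝ}
    (hz : z ∈ Icc (b - 1/q) (b + 1/q))
    (hVW : eVariationOn h (Icc (b - 1/q) (b + 1/q)) ≠ ⊤) :
    h z ≤ q * (∫ t in Icc b (b + 1/q), h t)
      + (eVariationOn h (Icc (b - 1/q) (b + 1/q))).toReal := by
  set w := (eVariationOn h (Icc (b - 1/q) (b + 1/q))).toReal with hw
  have hqr : (0:ℝ) < q := by exact_mod_cast hq
  have hsub : Icc b (b + 1/q) ⊆ Icc (b - 1/q) (b + 1/q) := by
    apply Icc_subset_Icc _ le_rfl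
    have : (0:ℝ) < 1/q := by positivity
    linarith
  have hpt : ∀ t ∈ Icc b (b + 1/q), h z - w ≤ h t := by
    intro t ht
    have h1 := eVariationOn.edist_le h hz (hsub ht)
    have h2 : dist (h z) (h t) ≤ w := by
      rw [hw]
      refine le_trans (le_of_eq ?_) (ENNReal.toReal_mono hVW h1)
      rw [edist_dist, ENNReal.toReal_ofReal dist_nonneg]
    have h3 : h z - h t ≤ dist (h z) (h t) := by
      rw [Real.dist_eq]; exact le_abs_self _
    linarith
  have hIfin : volume (Icc b (b + 1/q)) ≠ ⊤ := measure_Icc_lt_top.ne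
  have hIint : IntegrableOn h (Icc b (b + 1/q)) volume := aux_integrableOn hm hA hIfin
  have hmono : ∫ _t in Icc b (b + 1/q), (h z - w) ≤ ∫ t in Icc b (b + 1/q), h t := by
    refine setIntegral_mono_on (integrableOn_const hIfin) hIint
      measurableSet_Icc hpt
  have hconst : ∫ _t in Icc b (b + 1/q), (h z - w) = (1/q) * (h z - w) := by
    rw [setIntegral_const, measureReal_def, Real.volume_Icc, smul_eq_mul]
    congr 1
    rw [show b + 1/(q:ℝ) - b = 1/q by ring, ENNReal.toReal_ofReal (by positivity)]
  rw [hconst] at hmono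
  have hqq : (q:ℝ) * (1/q) = 1 := by field_simp
  have hfin := mul_le_mul_of_nonneg_left hmono hqr.le
  rw [← mul_assoc, hqq, one_mul] at hfin
  linarith

lemma dk_core {h : ℝ → ℝ} (hm : Measurable h) (hp : Function.Periodic h 1)
    {A : ℝ} (hA : ∀ x, |h x| ≤ A)
    (hV : eVariationOn h (Icc (-2:ℝ) 2) ≠ ⊤) {β : ℝ}
    {r : ℚ} (hr : |β - r| < 1/(r.den:ℝ)^2)
    {x : ℝ} (hx : x ∈ Ico (0:ℝ) 1) :
    ∑ j ∈ Finset.range r.den, h (x + j*β)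
      ≤ r.den * (∫ t in Ico (0:ℝ) 1, h t)
        + 2 * (eVariationOn h (Icc (-2:ℝ) 2)).toReal := by
  obtain ⟨hx0, hx1⟩ := hx
  set q : ℕ := r.den with hqdef
  set p : ℤ := r.num with hpdef
  have hq : 0 < q := r.pos
  have hqr : (0:ℝ) < q := by exact_mod_cast hq
  have hq1 : (1:ℝ) ≤ q := by exact_mod_cast hq
  have hqz : ((q:ℤ)) ≠ 0 := by exact_mod_cast hq.ne'
  -- the points of the grid
  set a : ℕ → ℝ := fun i => x + i/q with hadef
  set G : ℕ → ℝ := fun i => q * (∫ t in Icc (a i) (a i + 1/q), h t)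
      + (eVariationOn h (Icc (a i - 1/q) (a i + 1/q))).toReal with hGdef
  set res : ℕ → ℕ := fun j => (((j:ℤ) * p) % (q:ℤ)).toNat with hresdef
  have hres_lt : ∀ j, res j < q := by
    intro j
    have h1 := Int.emod_nonneg ((j:ℤ)*p) hqz
    have h2 := Int.emod_lt_of_pos ((j:ℤ)*p) (by exact_mod_cast hq : (0:ℤ) < q)
    simp only [hresdef]
    omega
  -- windows are inside [-2,2]
  have hWsub : ∀ i < q, Icc (a i - 1/q) (a i + 1/q) ⊆ Icc (-2:ℝ) 2 := by
    intro i hi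
    have hi' : (i:ℝ) ≤ (q:ℝ) - 1 := by
      have : (i:ℝ) + 1 ≤ q := by exact_mod_cast hi
      linarith
    have hiq0 : (0:ℝ) ≤ (i:ℝ)/q := by positivity
    have hiq1 : (i:ℝ)/q ≤ 1 - 1/q := by
      rw [div_le_iff₀ hqr]
      have : (1 - 1/(q:ℝ)) * q = q - 1 := by field_simp
      rw [this]; exact hi'
    have h1q : 1/(q:ℝ) ≤ 1 := by
      rw [div_le_one hqr]; exact hq1
    apply Icc_subset_Icc <;> simp only [hadef] <;> nlinarith
  have hWfin : ∀ i < q, eVariationOn h (Icc (a i - 1/q) (a i + 1/q)) ≠ ⊤ :=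
    fun i hi => ne_top_of_le_ne_top hV (eVariationOn.mono h (hWsub i hi))
  -- step 1 : per-j bound
  have step1 : ∀ j ∈ Finset.range q, h (x + j*β) ≤ G (res j) := by
    intro j hj
    rw [Finset.mem_range] at hj
    set i : ℕ := res j with hidef
    have hiq : i < q := hres_lt j
    set e : ℤ := ((j:ℤ)*p) / (q:ℤ) with hedef
    have hdiv : ((j:ℤ)*p) % (q:ℤ) + (q:ℤ) * (((j:ℤ)*p)/(q:ℤ)) = (j:ℤ)*p :=
      Int.emod_add_mul_ediv _ _
    have hitonat : ((i:ℤ)) = ((j:ℤ)*p) % (q:ℤ) := by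
      simp only [hidef, hresdef]
      exact Int.toNat_of_nonneg (Int.emod_nonneg _ hqz)
    have hcast : (i:ℝ) + (q:ℝ) * (e:ℝ) = (j:ℝ) * (p:ℝ) := by
      exact_mod_cast hitonat ▸ (congrArg (fun t : ℤ => (t:ℝ)) hdiv)
    -- h (x + jβ) = h z with z = a i + j(β - p/q)
    set z : ℝ := a i + (j:ℝ) * (β - (p:ℝ)/q) with hzdef
    have harg : x + (j:ℝ)*β = z + (e:ℝ)*1 := by
      simp only [hzdef, hadef]
      have hiq' : (i:ℝ) = (j:ℝ)*(p:ℝ) - (q:ℝ)*(e:ℝ) := by linarith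
      rw [hiq']
      field_simp
      ring
    have hperiod : h (x + (j:ℝ)*β) = h z := by
      rw [harg]
      exact (hp.int_mul e) z
    -- z in the window
    have hrq : (r:ℝ) = (p:ℝ)/(q:ℝ) := by
      rw [Rat.cast_def]
    have hdelta : |(j:ℝ) * (β - (p:ℝ)/q)| ≤ 1/q := by
      rw [abs_mul, ← hrq]
      have hj' : (j:ℝ) ≤ q := by
        have : (j:ℝ) + 1 ≤ q := by exact_mod_cast hj
        linarith
      have habs0 : (0:ℝ) ≤ |β - (r:ℝ)| := abs_nonneg _
      have hjabs : |(j:ℝ)| = (j:ℝ) := abs_of_nonneg (by positivity)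
      rw [hjabs]
      calc (j:ℝ) * |β - (r:ℝ)| ≤ (q:ℝ) * |β - (r:ℝ)| := by nlinarith
        _ ≤ (q:ℝ) * (1/(q:ℝ)^2) := by nlinarith [hr]
        _ = 1/q := by field_simp
    have hzW : z ∈ Icc (a i - 1/q) (a i + 1/q) := by
      rw [hzdef]
      constructor
      · have := (abs_le.1 hdelta).1; linarith
      · have := (abs_le.1 hdelta).2; linarith
    rw [hperiod]
    exact point_vs_avg hm hA hq hzW (hWfin i hiq)
  -- step 2 : the sum over residues equals the sum over i
  have step2 : ∑ j ∈ Finset.range q, G (res j) = ∑ i ∈ Finset.range q, G i := by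
    have hcop : Int.gcd (q:ℤ) p = 1 := by
      have := r.reduced
      simpa [Int.gcd, Nat.coprime_comm, hpdef, hqdef] using (Nat.coprime_comm.1 this)
    have hinj : ∀ j1 ∈ Finset.range q, ∀ j2 ∈ Finset.range q,
        res j1 = res j2 → j1 = j2 := by
      intro j1 hj1 j2 hj2 heq
      rw [Finset.mem_range] at hj1 hj2
      have h1 := Int.emod_nonneg ((j1:ℤ)*p) hqz
      have h2 := Int.emod_nonneg ((j2:ℤ)*p) hqz
      have hmodeq : ((j1:ℤ)*p) % (q:ℤ) = ((j2:ℤ)*p) % (q:ℤ) := by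
        simp only [hresdef] at heq
        omega
      have hM : (j1:ℤ)*p ≡ (j2:ℤ)*p [ZMOD (q:ℤ)] := hmodeq
      have := hM.cancel_right_div_gcd (by exact_mod_cast hq : (0:ℤ) < q)
      rw [hcop] at this
      simp only [Int.ofNat_one, Int.ediv_one] at this
      have h4 : (j1:ℤ) % (q:ℤ) = (j2:ℤ) % (q:ℤ) := this
      rw [Int.emod_eq_of_lt (by positivity) (by exact_mod_cast hj1),
          Int.emod_eq_of_lt (by positivity) (by exact_mod_cast hj2)] at h4
      exact_mod_cast h4
    refine Finset.sum_bij (fun j _ => res j) (fun j _ => Finset.mem_range.2 (hres_lt j))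
      (fun j1 hj1 j2 hj2 => hinj j1 hj1 j2 hj2) ?_ (fun j _ => rfl)
    intro i hi
    obtain ⟨j, hj, hji⟩ := Finset.surj_on_of_inj_on_of_card_le (fun j _ => res j)
      (fun j _ => Finset.mem_range.2 (hres_lt j))
      (fun j1 j2 hj1 hj2 => hinj j1 hj1 j2 hj2) (le_refl _) i hi
    exact ⟨j, hj, hji.symm⟩
  -- step 3 : sum of the interval integrals
  have hle : ∀ i : ℕ, a i ≤ a i + 1/q := by
    intro i
    have : (0:ℝ) < 1/q := by positivity
    linarith
  have hq11 : (q:ℝ) * (1/q) = 1 := by field_simp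
  have hintsum : ∑ i ∈ Finset.range q, ∫ t in Icc (a i) (a i + 1/q), h t
      = ∫ t in Ico (0:ℝ) 1, h t := by
    have h1 : ∀ i : ℕ, ∫ t in Icc (a i) (a i + 1/q), h t
        = ∫ t in (a i)..(a (i+1)), h t := by
      intro i
      have hstep : a (i+1) = a i + 1/q := by
        simp only [hadef]; push_cast; field_simp; ring
      rw [hstep, intervalIntegral.integral_of_le (hle i), integral_Icc_eq_integral_Ioc]
    have hsum3 : ∑ i ∈ Finset.range q, ∫ t in (a i)..(a (i+1)), h t
        = ∫ t in (a 0)..(a q), h t :=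
      intervalIntegral.sum_integral_adjacent_intervals (fun k _ => aux_intint hm hA _ _)
    have ha0 : a 0 = x := by simp [hadef]
    have haq : a q = x + 1 := by
      simp only [hadef]
      rw [div_self hqr.ne']
    have hper1 : ∫ t in x..(x+1), h t = ∫ t in (0:ℝ)..(0+1), h t :=
      hp.intervalIntegral_add_eq x 0
    calc ∑ i ∈ Finset.range q, ∫ t in Icc (a i) (a i + 1/q), h t
        = ∑ i ∈ Finset.range q, ∫ t in (a i)..(a (i+1)), h t :=
          Finset.sum_congr rfl (fun i _ => h1 i)
      _ = ∫ t in (a 0)..(a q), h t := hsum3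
      _ = ∫ t in x..(x+1), h t := by rw [ha0, haq]
      _ = ∫ t in (0:ℝ)..(0+1), h t := hper1
      _ = ∫ t in Ico (0:ℝ) 1, h t := by
          norm_num
          rw [intervalIntegral.integral_of_le zero_le_one,
            MeasureTheory.integral_Ico_eq_integral_Ioo,
            MeasureTheory.integral_Ioc_eq_integral_Ioo]
  -- step 4 : sum of the variations
  have h1qpos : (0:ℝ) < 1/q := by positivity
  have hsplit : ∀ i ∈ Finset.range q, eVariationOn h (Icc (a i - 1/q) (a i + 1/q))
      = eVariationOn h (Icc (a i - 1/q) (a i)) + eVariationOn h (Icc (a i) (a i + 1/q)) := by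
    intro i _
    rw [icc_add_icc' h (by linarith) (hle i)]
  have hchain1 : ∑ i ∈ Finset.range q, eVariationOn h (Icc (a i - 1/q) (a i))
      = eVariationOn h (Icc (x - 1/q) ((x - 1/q) + q * (1/q))) := by
    rw [← evar_chain h (x - 1/q) (1/q) (by positivity) q]
    refine Finset.sum_congr rfl (fun i _ => ?_)
    congr 1 <;> (simp only [hadef]; ring)
  have hchain2 : ∑ i ∈ Finset.range q, eVariationOn h (Icc (a i) (a i + 1/q))
      = eVariationOn h (Icc x (x + q * (1/q))) := by
    rw [← evar_chain h x (1/q) (by positivity) q]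
    refine Finset.sum_congr rfl (fun i _ => ?_)
    congr 1 <;> (simp only [hadef]; ring)
  have h1q : 1/(q:ℝ) ≤ 1 := by
    rw [div_le_one hqr]; exact hq1
  have hs1 : Icc (x - 1/q) ((x - 1/q) + q * (1/q)) ⊆ Icc (-2:ℝ) 2 := by
    rw [hq11]
    apply Icc_subset_Icc <;> linarith
  have hs2 : Icc x (x + (q:ℝ) * (1/q)) ⊆ Icc (-2:ℝ) 2 := by
    rw [hq11]
    apply Icc_subset_Icc <;> linarith
  have hbound : ∑ i ∈ Finset.range q, eVariationOn h (Icc (a i - 1/q) (a i + 1/q))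
      ≤ eVariationOn h (Icc (-2:ℝ) 2) + eVariationOn h (Icc (-2:ℝ) 2) := by
    calc ∑ i ∈ Finset.range q, eVariationOn h (Icc (a i - 1/q) (a i + 1/q))
        = ∑ i ∈ Finset.range q, (eVariationOn h (Icc (a i - 1/q) (a i))
            + eVariationOn h (Icc (a i) (a i + 1/q))) :=
          Finset.sum_congr rfl hsplit
      _ = (∑ i ∈ Finset.range q, eVariationOn h (Icc (a i - 1/q) (a i)))
            + ∑ i ∈ Finset.range q, eVariationOn h (Icc (a i) (a i + 1/q)) :=
          Finset.sum_add_distrib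
      _ ≤ _ := by
          rw [hchain1, hchain2]
          exact add_le_add (eVariationOn.mono h hs1) (eVariationOn.mono h hs2)
  have hreal : ∑ i ∈ Finset.range q, (eVariationOn h (Icc (a i - 1/q) (a i + 1/q))).toReal
      ≤ 2 * (eVariationOn h (Icc (-2:ℝ) 2)).toReal := by
    rw [← ENNReal.toReal_sum (fun i hi => hWfin i (Finset.mem_range.1 hi))]
    have h2top : eVariationOn h (Icc (-2:ℝ) 2) + eVariationOn h (Icc (-2:ℝ) 2) ≠ ⊤ := by
      simp [ENNReal.add_eq_top, hV]
    refine le_trans (ENNReal.toReal_mono h2top hbound) ?_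
    rw [ENNReal.toReal_add hV hV]
    linarith
  -- final assembly
  calc ∑ j ∈ Finset.range q, h (x + j*β)
      ≤ ∑ j ∈ Finset.range q, G (res j) := Finset.sum_le_sum step1
    _ = ∑ i ∈ Finset.range q, G i := step2
    _ = (q:ℝ) * (∑ i ∈ Finset.range q, ∫ t in Icc (a i) (a i + 1/q), h t)
          + ∑ i ∈ Finset.range q, (eVariationOn h (Icc (a i - 1/q) (a i + 1/q))).toReal := by
        simp only [hGdef, Finset.sum_add_distrib, Finset.mul_sum]
    _ ≤ (q:ℝ) * (∫ t in Ico (0:ℝ) 1, h t) + 2 * (eVariationOn h (Icc (-2:ℝ) 2)).toReal := by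
        rw [hintsum]
        exact add_le_add_right hreal _

lemma dk_bound {h : ℝ → ℝ} (hm : Measurable h) (hp : Function.Periodic h 1)
    {A : ℝ} (hA : ∀ x, |h x| ≤ A)
    (hV : eVariationOn h (Icc (-2:ℝ) 2) ≠ ⊤) {β : ℝ} (hβ : Irrational β)
    {δ : ℝ} (hδ : 0 < δ) :
    ∃ q : ℕ, 1 ≤ q ∧ ∀ x : ℝ,
      ∑ j ∈ Finset.range q, h (x + j*β) ≤ q * ((∫ t in Ico (0:ℝ) 1, h t) + δ) := by
  set Vr : ℝ := (eVariationOn h (Icc (-2:ℝ) 2)).toReal with hVr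
  have hVr0 : 0 ≤ Vr := ENNReal.toReal_nonneg
  obtain ⟨r, hrden, hrapp⟩ := exists_good_rat hβ (⌈(2*Vr)/δ⌉₊ + 1)
  refine ⟨r.den, r.pos, fun x => ?_⟩
  -- reduce to fract x
  have hfract : ∀ j : ℕ, h (x + j*β) = h (Int.fract x + j*β) := by
    intro j
    have harg : x + (j:ℝ)*β = (Int.fract x + j*β) + (⌊x⌋:ℝ)*1 := by
      rw [Int.fract]; ring
    rw [harg]
    exact (hp.int_mul ⌊x⌋) _
  simp only [hfract]
  have hcore := dk_core hm hp hA hV hrapp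
    (x := Int.fract x) ⟨Int.fract_nonneg x, Int.fract_lt_one x⟩
  refine hcore.trans ?_
  have hq : (0:ℝ) < r.den := by exact_mod_cast r.pos
  have hN : (2*Vr)/δ ≤ (r.den:ℝ) := by
    calc (2*Vr)/δ ≤ (⌈(2*Vr)/δ⌉₊ : ℝ) := Nat.le_ceil _
      _ ≤ (⌈(2*Vr)/δ⌉₊ + 1 : ℕ) := by push_cast; linarith
      _ ≤ (r.den:ℝ) := by exact_mod_cast hrden
  have h2V : 2 * Vr ≤ r.den * δ := by
    rw [div_le_iff₀ hδ] at hN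
    linarith
  rw [← hVr]
  nlinarith [h2V]

lemma birkhoff_upper {h : ℝ → ℝ} (hm : Measurable h) (hp : Function.Periodic h 1)
    {A : ℝ} (hA : ∀ x, |h x| ≤ A)
    (hV : eVariationOn h (Icc (-2:ℝ) 2) ≠ ⊤) {β : ℝ} (hβ : Irrational β)
    {δ : ℝ} (hδ : 0 < δ) :
    ∃ K : ℕ, 1 ≤ K ∧ ∀ k ≥ K, ∀ x : ℝ,
      ∑ j ∈ Finset.range k, h (x + j*β) ≤ k * ((∫ t in Ico (0:ℝ) 1, h t) + δ) := by
  set J : ℝ := ∫ t in Ico (0:ℝ) 1, h t with hJ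
  have hδ2 : 0 < δ/2 := by linarith
  obtain ⟨q, hq1, hq⟩ := dk_bound hm hp hA hV hβ hδ2
  have hA0 : 0 ≤ A := le_trans (abs_nonneg _) (hA 0)
  have hqr : (0:ℝ) < q := by exact_mod_cast hq1
  -- blocks
  have hblock : ∀ a : ℕ, ∀ x : ℝ, ∑ j ∈ Finset.range (a*q), h (x + j*β)
      ≤ (a*q : ℕ) * (J + δ/2) := by
    intro a
    induction a with
    | zero => intro x; simp
    | succ a ih =>
        intro x
        have hsplit : ∑ j ∈ Finset.range (a*q + q), h (x + j*β)
            = (∑ j ∈ Finset.range (a*q), h (x + j*β))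
              + ∑ j ∈ Finset.range q, h ((x + (a*q : ℕ)*β) + j*β) := by
          rw [Finset.sum_range_add]
          congr 1
          refine Finset.sum_congr rfl (fun j _ => ?_)
          congr 1
          push_cast
          ring
        have : (a+1)*q = a*q + q := by ring
        rw [this, hsplit]
        have h2 := hq (x + (a*q : ℕ)*β)
        have h3 := ih x
        push_cast
        push_cast at h2 h3
        nlinarith
  -- remainder
  have hrem : ∀ n : ℕ, ∀ x : ℝ, ∑ j ∈ Finset.range n, h (x + j*β)
      ≤ n * (J + δ/2) + q * (|J| + δ/2 + A) := by
    intro n x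
    have hmods : q * (n/q) + n % q = n := Nat.div_add_mod n q
    have hsplit : ∑ j ∈ Finset.range ((n/q)*q + n % q), h (x + j*β)
        = (∑ j ∈ Finset.range ((n/q)*q), h (x + j*β))
          + ∑ j ∈ Finset.range (n % q), h ((x + ((n/q)*q : ℕ)*β) + j*β) := by
      rw [Finset.sum_range_add]
      congr 1
      refine Finset.sum_congr rfl (fun j _ => ?_)
      congr 1
      push_cast
      ring
    have hn : (n/q)*q + n % q = n := Nat.div_add_mod' n q
    rw [← hn, hsplit]
    have h1 := hblock (n/q) x
    have h2 : ∑ j ∈ Finset.range (n % q), h ((x + ((n/q)*q : ℕ)*β) + j*β)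
        ≤ (n % q : ℕ) * A := by
      calc ∑ j ∈ Finset.range (n % q), h ((x + ((n/q)*q : ℕ)*β) + j*β)
          ≤ ∑ _j ∈ Finset.range (n % q), A :=
            Finset.sum_le_sum (fun j _ => le_trans (le_abs_self _) (hA _))
        _ = (n % q : ℕ) * A := by
            rw [Finset.sum_const, Finset.card_range, nsmul_eq_mul]
    have hr1 : (n % q : ℕ) < q := Nat.mod_lt _ hq1
    have hr1' : ((n % q : ℕ) : ℝ) ≤ q := by exact_mod_cast hr1.le
    have hr0 : (0:ℝ) ≤ ((n % q : ℕ) : ℝ) := by positivity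
    have hc : ((n/q : ℕ) : ℝ) * (q:ℝ) = (n:ℝ) - ((n % q : ℕ) : ℝ) := by
      have h5 : (((n/q)*q + n % q : ℕ) : ℝ) = (n:ℝ) := by exact_mod_cast congrArg (Nat.cast : ℕ → ℝ) hn
      push_cast at h5
      linarith
    have habsJ : J ≤ |J| := le_abs_self J
    have habsJ' : -|J| ≤ J := neg_abs_le J
    push_cast at h1 h2 ⊢
    nlinarith [h1, h2, mul_nonneg hr0 (by linarith : (0:ℝ) ≤ J + |J|),
      mul_nonneg (by linarith : (0:ℝ) ≤ (q:ℝ) - ((n % q : ℕ):ℝ)) (abs_nonneg J),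
      mul_nonneg (by linarith : (0:ℝ) ≤ (q:ℝ) - ((n % q : ℕ):ℝ)) hA0,
      mul_nonneg hr0 hδ2.le]
  -- choose K
  set T : ℝ := q * (|J| + δ/2 + A) with hT
  have hT0 : 0 ≤ T := by
    have : 0 ≤ |J| + δ/2 + A := by positivity
    positivity
  refine ⟨⌈T / (δ/2)⌉₊ + 1, by omega, fun k hk x => ?_⟩
  have hk1 : 1 ≤ k := le_trans (by omega) hk
  have hkr : (0:ℝ) < k := by exact_mod_cast hk1
  have hTk : T ≤ k * (δ/2) := by
    have h1 : T/(δ/2) ≤ (⌈T/(δ/2)⌉₊ : ℝ) := Nat.le_ceil _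
    have h2 : ((⌈T/(δ/2)⌉₊ + 1 : ℕ) : ℝ) ≤ k := by exact_mod_cast hk
    push_cast at h2
    rw [div_le_iff₀ hδ2] at h1
    nlinarith
  have := hrem k x
  have hsum : (k:ℝ) * (J + δ/2) + T ≤ k * (J + δ) := by nlinarith
  linarith


end Aux

set_option maxHeartbeats 1000000 in
/-- (Uniform upper bound for subadditive cocycles of bounded variation.) Let
`α` be irrational and `{g_m}` a subadditive cocycle of measurable `1`-periodic functions over
the rotation by `α` with `g₁` bounded above, `Var [g_m]_A < ∞` for all `m, A`, and finite
Lyapunov exponent `L = lim_n (1/n)∫₀¹ g_n > −∞`. Then for every `ε > 0` there is `n₀` such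
that `(1/n) g_n(x) ≤ L + ε` for all `n ≥ n₀` and all `x ∈ [0,1)`. -/
theorem uniform_upper_bound_subadditive_BV (α : ℝ) (hα : Irrational α) (g : ℕ → ℝ → ℝ)
    (hper : ∀ m, Function.Periodic (g m) 1) (hmeas : ∀ m, Measurable (g m))
    (hsub : ∀ n m : ℕ, ∀ x : ℝ, g (n + m) x ≤ g n x + g m (x + n * α))
    (hbound : ∃ C : ℝ, ∀ x, g 1 x ≤ C)
    (hVar : ∀ m : ℕ, ∀ A : ℝ, eVariationOn (trunc (g m) A) (Set.Icc 0 1) ≠ ⊤)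
    (hint : ∀ m : ℕ, IntegrableOn (g m) (Set.Ico 0 1) volume)
    (L : ℝ)
    (hL : Tendsto (fun n : ℕ => (1 / n : ℝ) * ∫ x in Set.Ico (0:ℝ) 1, g n x) atTop (nhds L)) :
    ∀ ε > (0:ℝ), ∃ n₀ : ℕ, ∀ n ≥ n₀, ∀ x ∈ Set.Ico (0:ℝ) 1,
      (1 / n : ℝ) * g n x ≤ L + ε := by
  intro ε hε
  obtain ⟨C, hC⟩ := hbound
  -- linear upper bound on g n
  have hgC : ∀ n : ℕ, 1 ≤ n → ∀ x, g n x ≤ n * C := by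
    intro n hn
    induction n, hn using Nat.le_induction with
    | base => intro x; simpa using hC x
    | succ n hn ih =>
        intro x
        have h1 := hsub n 1 x
        have h2 := hC (x + n*α)
        have h3 := ih x
        push_cast
        push_cast at h3
        linarith
  -- chaining of subadditivity
  have hchain : ∀ m : ℕ, 1 ≤ m → ∀ k : ℕ, 1 ≤ k → ∀ x : ℝ,
      g (m*k) x ≤ ∑ j ∈ Finset.range k, g m (x + j*((m:ℝ)*α)) := by
    intro m _hm k hk
    induction k, hk using Nat.le_induction with
    | base => intro x; norm_num
    | succ k hk ih =>
        intro x
        have h1 : g (m*(k+1)) x ≤ g (m*k) x + g m (x + ((m*k : ℕ):ℝ)*α) := by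
          have := hsub (m*k) m x
          rwa [show m*k + m = m*(k+1) by ring] at this
        rw [Finset.sum_range_succ]
        have harg : ((m*k : ℕ):ℝ)*α = (k:ℝ)*((m:ℝ)*α) := by push_cast; ring
        rw [harg] at h1
        linarith [ih x]
  -- choose m
  have hev1 := (hL.eventually_lt_const (by linarith : L < L + ε/4)).and
    (eventually_ge_atTop 1)
  obtain ⟨m, hmL, hm1⟩ := hev1.exists
  have hmr : (0:ℝ) < m := by exact_mod_cast hm1
  set Jg : ℝ := ∫ x in Set.Ico (0:ℝ) 1, g m x with hJgdef
  have hJg : Jg ≤ m * (L + ε/4) := by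
    have h2 : (1/(m:ℝ)) * Jg ≤ L + ε/4 := le_of_lt hmL
    have h3 := mul_le_mul_of_nonneg_left h2 hmr.le
    rw [← mul_assoc, mul_one_div, div_self hmr.ne', one_mul] at h3
    exact h3
  -- truncation
  set A₀ : ℝ := max ((m:ℝ) * |C|) 1 with hA₀def
  have hA₀1 : 1 ≤ A₀ := le_max_right _ _
  have hA₀C : (m:ℝ)*|C| ≤ A₀ := le_max_left _ _
  have htr_meas : ∀ B : ℝ, Measurable (trunc (g m) B) := by
    intro B
    exact Measurable.ite (measurableSet_le (hmeas m).abs measurable_const)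
      (hmeas m) measurable_const
  have habs_tr : ∀ B : ℝ, 0 ≤ B → ∀ x, |trunc (g m) B x| ≤ |g m x| := by
    intro B hB x
    unfold trunc
    split_ifs with hcase
    · exact le_refl _
    · push_neg at hcase
      rw [abs_of_nonneg hB]
      linarith
  -- dominated convergence for the truncation
  have hdom : Tendsto (fun k : ℕ => ∫ x in Set.Ico (0:ℝ) 1, trunc (g m) (A₀ + k) x)
      atTop (nhds Jg) := by
    apply MeasureTheory.tendsto_integral_of_dominated_convergence
      (bound := fun x => |g m x|)
    · intro k; exact (htr_meas _).aestronglyMeasurable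
    · exact (hint m).abs
    · intro k
      apply Filter.Eventually.of_forall
      intro x
      rw [Real.norm_eq_abs]
      exact habs_tr _ (by positivity) x
    · apply Filter.Eventually.of_forall
      intro x
      apply Tendsto.congr' _ tendsto_const_nhds
      filter_upwards [eventually_ge_atTop ⌈|g m x|⌉₊] with k hk
      have hk' : |g m x| ≤ A₀ + k := by
        have h1 : |g m x| ≤ (⌈|g m x|⌉₊ : ℝ) := Nat.le_ceil _
        have h2 : ((⌈|g m x|⌉₊ : ℕ) : ℝ) ≤ k := by exact_mod_cast hk
        linarith
      simp [trunc, hk']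
  have hev2 := hdom.eventually_lt_const
    (by nlinarith : Jg < Jg + (m:ℝ) * (ε/4))
  obtain ⟨k₀, hk₀⟩ := hev2.exists
  set A : ℝ := A₀ + k₀ with hAdef
  set h : ℝ → ℝ := trunc (g m) A with hhdef
  have hA1 : 1 ≤ A := by
    have : (0:ℝ) ≤ k₀ := by positivity
    linarith
  have hge : ∀ x, g m x ≤ h x := by
    intro x
    simp only [hhdef, trunc]
    split_ifs with hcase
    · exact le_refl _
    · push_neg at hcase
      have h1 := hgC m hm1 x
      have h2 : (m:ℝ)*C ≤ (m:ℝ)*|C| := by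
        have := le_abs_self C
        nlinarith
      have : (0:ℝ) ≤ k₀ := by positivity
      linarith
  have hhb : ∀ x, |h x| ≤ A := by
    intro x
    simp only [hhdef, trunc]
    split_ifs with hcase
    · exact hcase
    · rw [abs_of_nonneg (by linarith)]
  have hhper : Function.Periodic h 1 := by
    intro x
    simp only [hhdef, trunc, hper m x]
  have hhmeas : Measurable h := htr_meas A
  set Jh : ℝ := ∫ x in Set.Ico (0:ℝ) 1, h x with hJhdef
  have hJh : Jh ≤ (m:ℝ) * (L + ε/2) := by
    have : Jh < Jg + (m:ℝ)*(ε/4) := hk₀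
    linarith
  have hV2 : eVariationOn h (Set.Icc (-2:ℝ) 2) ≠ ⊤ := evar_m2_2 hhper (hVar m A)
  have hβ : Irrational ((m:ℝ)*α) := hα.natCast_mul (by omega)
  have hδ' : (0:ℝ) < (m:ℝ) * (ε/8) := by positivity
  obtain ⟨K, _hK1, hKb⟩ := birkhoff_upper hhmeas hhper hhb hV2 hβ hδ'
  have hBirk : ∀ k ≥ K, ∀ x : ℝ,
      ∑ j ∈ Finset.range k, h (x + j*((m:ℝ)*α)) ≤ k * ((m:ℝ)*(L + 5*ε/8)) := by
    intro k hk x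
    refine (hKb k hk x).trans ?_
    have hkr : (0:ℝ) ≤ k := by positivity
    have h5 : Jh + (m:ℝ)*(ε/8) ≤ (m:ℝ)*(L + 5*ε/8) := by nlinarith
    nlinarith
  -- choose n₀
  set D : ℝ := |L| + ε + |C| with hDdef
  have hD0 : 0 ≤ D := by positivity
  set K' : ℕ := max K (⌈8*D/(3*ε)⌉₊ + 1) with hK'def
  refine ⟨m*(K'+1), fun n hn x _hx => ?_⟩
  set k : ℕ := n / m with hkdef
  set r : ℕ := n % m with hrdef
  have hdm : m*k + r = n := by rw [hkdef, hrdef]; exact Nat.div_add_mod n m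
  have hk_ge : K'+1 ≤ k := by
    rw [hkdef, Nat.le_div_iff_mul_le (by omega : 0 < m)]
    calc (K'+1)*m = m*(K'+1) := by ring
      _ ≤ n := hn
  have hKK' : K ≤ K' := le_max_left _ _
  have hkK : K ≤ k := by omega
  have hk1 : 1 ≤ k := by omega
  have hrm : r < m := Nat.mod_lt _ (by omega)
  have hn1 : 1 ≤ n := le_trans (Nat.mul_pos (by omega) (by omega) : 0 < m*(K'+1)) hn
  -- bound g n by the block plus remainder
  have hgnb : g n x ≤ g (m*k) x + (m:ℝ)*|C| := by
    have hmC0 : (0:ℝ) ≤ (m:ℝ)*|C| := by positivity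
    rcases Nat.eq_zero_or_pos r with hr0 | hr1
    · have : n = m*k := by omega
      rw [this]
      linarith
    · have h1 := hsub (m*k) r x
      rw [show m*k + r = n by omega] at h1
      have h2 := hgC r (by omega) (x + ((m*k : ℕ):ℝ)*α)
      have hrle : ((r:ℕ):ℝ) ≤ (m:ℝ) := by exact_mod_cast hrm.le
      have hrpos : (0:ℝ) ≤ ((r:ℕ):ℝ) := by positivity
      have h3 : ((r:ℕ):ℝ)*C ≤ (m:ℝ)*|C| := by
        nlinarith [le_abs_self C, abs_nonneg C]
      linarith
  have hblockb : g (m*k) x ≤ (k:ℝ) * ((m:ℝ)*(L + 5*ε/8)) := by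
    calc g (m*k) x ≤ ∑ j ∈ Finset.range k, g m (x + j*((m:ℝ)*α)) := hchain m hm1 k hk1 x
      _ ≤ ∑ j ∈ Finset.range k, h (x + j*((m:ℝ)*α)) :=
          Finset.sum_le_sum (fun j _ => hge _)
      _ ≤ (k:ℝ) * ((m:ℝ)*(L + 5*ε/8)) := hBirk k hkK x
  -- final arithmetic
  have hkD : D ≤ (k:ℝ) * (3*ε/8) := by
    have h1 : (8*D/(3*ε)) ≤ (⌈8*D/(3*ε)⌉₊ : ℝ) := Nat.le_ceil _
    have h2 : ((⌈8*D/(3*ε)⌉₊ + 1 : ℕ) : ℝ) ≤ (k:ℝ) := by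
      have h9 : ⌈8*D/(3*ε)⌉₊ + 1 ≤ K' := le_max_right _ _
      have : ⌈8*D/(3*ε)⌉₊ + 1 ≤ k := by omega
      exact_mod_cast this
    push_cast at h2
    have h3 : 8*D/(3*ε) ≤ (k:ℝ) := by linarith
    rw [div_le_iff₀ (by linarith : (0:ℝ) < 3*ε)] at h3
    linarith
  have hcast : ((n:ℕ):ℝ) = (m:ℝ)*(k:ℝ) + ((r:ℕ):ℝ) := by
    exact_mod_cast hdm.symm
  have hrle : ((r:ℕ):ℝ) ≤ (m:ℝ) := by exact_mod_cast hrm.le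
  have hrpos : (0:ℝ) ≤ ((r:ℕ):ℝ) := by positivity
  have hkpos : (0:ℝ) < (k:ℝ) := by exact_mod_cast hk1
  have harith : ∀ (kr mr rr LL CC e : ℝ), 0 < e → 1 ≤ mr → 0 ≤ rr → rr ≤ mr → 0 < kr →
      (|LL| + e + |CC|) ≤ kr*(3*e/8) →
      kr*(mr*(LL + 5*e/8)) + mr*|CC| ≤ (mr*kr + rr)*(LL + e) := by
    intro kr mr rr LL CC e he hm hr0 hrm' hk hD
    nlinarith [mul_le_mul_of_nonneg_left hD (by linarith : (0:ℝ) ≤ mr),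
      mul_nonneg hr0 (by nlinarith [le_abs_self LL, neg_abs_le LL] : (0:ℝ) ≤ LL + |LL|),
      mul_nonneg (by linarith : (0:ℝ) ≤ mr - rr) (abs_nonneg LL),
      mul_nonneg hr0 he.le, abs_nonneg CC, le_abs_self LL, neg_abs_le LL]
  have hgn_final : g n x ≤ (n:ℝ) * (L + ε) := by
    have hmr1 : (1:ℝ) ≤ (m:ℝ) := by exact_mod_cast hm1
    have key := harith (k:ℝ) (m:ℝ) ((r:ℕ):ℝ) L C ε hε hmr1 hrpos hrle hkpos
      (by rw [← hDdef]; exact hkD)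
    rw [hcast]
    linarith
  have hnr : (0:ℝ) < (n:ℝ) := by exact_mod_cast hn1
  calc (1/(n:ℝ)) * g n x ≤ (1/(n:ℝ)) * ((n:ℝ)*(L+ε)) := by
        apply mul_le_mul_of_nonneg_left hgn_final (by positivity)
    _ = L + ε := by field_simp
end
end

section
/- Let f be a 1-periodic function on ℝ that is non-decreasing on [0,1) and satisfies |f(x)| ≤ B for all x ∈ ℝ. Then for every δ ∈ (0,1) and every A > 0, the Lebesgue measure of the set {x ∈ [0,1) : |f(x+δ) − f(x)| > Aδ} is at most 2δ + 6B/A. -/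
open MeasureTheory Filter
open scoped ENNReal NNReal

noncomputable section

/-- If `f` is `1`-periodic, non-decreasing on `[0,1)` and `|f| ≤ B`, then for
`δ ∈ (0,1)` and `A > 0` the measure of `{x ∈ [0,1) : |f(x+δ) − f(x)| > Aδ}` is at most
`2δ + 6B/A`. -/
theorem measure_large_increment_monotone (f : ℝ → ℝ) (B : ℝ)
    (hper : Function.Periodic f 1) (hmono : MonotoneOn f (Set.Ico 0 1))
    (hB : ∀ x, |f x| ≤ B) (δ A : ℝ) (hδ : δ ∈ Set.Ioo (0:ℝ) 1) (hA : 0 < A) :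
    volume {x ∈ Set.Ico (0:ℝ) 1 | A * δ < |f (x + δ) - f x|} ≤
      ENNReal.ofReal (2 * δ + 6 * B / A) := by
  obtain ⟨hδ0, hδ1⟩ := hδ
  have hB0 : 0 ≤ B := (abs_nonneg _).trans (hB 0)
  set c : ℝ := 1 - δ with hc
  have hc0 : 0 < c := by simp only [hc]; linarith
  have hc1 : c < 1 := by simp only [hc]; linarith
  -- measurability of f on [0,1)
  have hmeas : AEMeasurable f (volume.restrict (Set.Ico (0:ℝ) 1)) :=
    aemeasurable_restrict_of_monotoneOn measurableSet_Ico hmono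
  -- f is integrable on [0,1)
  have hfin : volume (Set.Ico (0:ℝ) 1) < ⊤ := by simp [Real.volume_Ico]
  have hint : IntegrableOn f (Set.Ico (0:ℝ) 1) := by
    refine Integrable.mono' (integrableOn_const hfin.ne)
      hmeas.aestronglyMeasurable (Eventually.of_forall fun x => by simpa using hB x)
  have hint01 : IntegrableOn f (Set.Ioc (0:ℝ) 1) := by
    rwa [IntegrableOn, ← Measure.restrict_congr_set Ico_ae_eq_Ioc]
  have hii : ∀ a b : ℝ, 0 ≤ a → a ≤ 1 → 0 ≤ b → b ≤ 1 →
      IntervalIntegrable f volume a b := by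
    intro a b ha ha' hb hb'
    constructor
    · exact hint01.mono_set (Set.Ioc_subset_Ioc ha hb')
    · exact hint01.mono_set (Set.Ioc_subset_Ioc hb ha')
  -- the shifted measure
  have hmap : Measure.map (· + δ) (volume.restrict (Set.Ico (0:ℝ) c)) =
      volume.restrict (Set.Ico δ 1) := by
    have hpre : (· + δ) ⁻¹' Set.Ico δ 1 = Set.Ico (0:ℝ) c := by
      ext x
      simp only [Set.mem_preimage, Set.mem_Ico, hc]
      constructor <;> intro h <;> constructor <;> linarith [h.1, h.2]
    rw [← hpre, ← Measure.restrict_map (measurable_add_const δ) measurableSet_Ico,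
      map_add_right_eq_self volume δ]
  have hmeas_shift : AEMeasurable (fun x => f (x + δ))
      (volume.restrict (Set.Ico (0:ℝ) c)) := by
    refine AEMeasurable.comp_aemeasurable ?_ (measurable_add_const δ).aemeasurable
    rw [hmap]
    exact hmeas.mono_measure
      (Measure.restrict_mono (Set.Ico_subset_Ico (le_of_lt hδ0) le_rfl) le_rfl)
  set F : ℝ → ℝ := fun x => f (x + δ) - f x with hF
  have hFmeas : AEMeasurable F (volume.restrict (Set.Ico (0:ℝ) c)) := by
    refine hmeas_shift.sub (hmeas.mono_measure ?_)
    exact Measure.restrict_mono (Set.Ico_subset_Ico le_rfl (le_of_lt hc1)) le_rfl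
  have hFint : IntegrableOn F (Set.Ico (0:ℝ) c) := by
    refine Integrable.mono' (g := fun _ => B + B) (integrableOn_const ?_)
      hFmeas.aestronglyMeasurable (Eventually.of_forall fun x => ?_)
    · simp [Real.volume_Ico]
    · calc ‖F x‖ = |f (x + δ) - f x| := rfl
        _ ≤ |f (x + δ)| + |f x| := abs_sub _ _
        _ ≤ B + B := add_le_add (hB _) (hB _)
  -- nonnegativity of F on [0, c)
  have hFpos : ∀ x ∈ Set.Ico (0:ℝ) c, 0 ≤ F x := by
    intro x hx
    have hx1 : x ∈ Set.Ico (0:ℝ) 1 := ⟨hx.1, lt_trans hx.2 hc1⟩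
    have hx2 : x + δ ∈ Set.Ico (0:ℝ) 1 := by
      constructor
      · linarith [hx.1]
      · have := hx.2; simp only [hc] at this; linarith
    have := hmono hx1 hx2 (by linarith)
    simp only [hF]; linarith
  have hFpos_ae : 0 ≤ᵐ[volume.restrict (Set.Ico (0:ℝ) c)] F :=
    (ae_restrict_iff' measurableSet_Ico).2 (Eventually.of_forall hFpos)
  -- integral bound
  have hshift_int : (∫ x in (0:ℝ)..c, f (x + δ)) = ∫ x in δ..(1:ℝ), f x := by
    simpa [hc] using intervalIntegral.integral_comp_add_right (a := (0:ℝ)) (b := c) f δ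
  have hδc : IntervalIntegrable f volume δ c := hii δ c hδ0.le hδ1.le hc0.le hc1.le
  have hc1' : IntervalIntegrable f volume c 1 := hii c 1 hc0.le hc1.le zero_le_one le_rfl
  have h0δ : IntervalIntegrable f volume 0 δ := hii 0 δ le_rfl zero_le_one hδ0.le hδ1.le
  have hadd1 : (∫ x in δ..c, f x) + ∫ x in c..(1:ℝ), f x = ∫ x in δ..(1:ℝ), f x :=
    intervalIntegral.integral_add_adjacent_intervals hδc hc1'
  have hadd2 : (∫ x in (0:ℝ)..δ, f x) + ∫ x in δ..c, f x = ∫ x in (0:ℝ)..c, f x :=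
    intervalIntegral.integral_add_adjacent_intervals h0δ hδc
  have hFii : IntervalIntegrable F volume 0 c := by
    rw [intervalIntegrable_iff_integrableOn_Ioc_of_le hc0.le, IntegrableOn,
      ← Measure.restrict_congr_set Ico_ae_eq_Ioc]
    exact hFint
  have hIF : (∫ x in (0:ℝ)..c, F x) =
      (∫ x in c..(1:ℝ), f x) - ∫ x in (0:ℝ)..δ, f x := by
    have hs : IntervalIntegrable (fun x => f (x + δ)) volume 0 c := by
      have := (hii δ 1 hδ0.le hδ1.le zero_le_one le_rfl).comp_add_right δ
      simpa [hc] using this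
    have hf0c : IntervalIntegrable f volume 0 c := hii 0 c le_rfl zero_le_one hc0.le hc1.le
    have hsub' : (∫ x in (0:ℝ)..c, F x) =
        (∫ x in (0:ℝ)..c, f (x + δ)) - ∫ x in (0:ℝ)..c, f x :=
      intervalIntegral.integral_sub hs hf0c
    rw [hsub', hshift_int, ← hadd1, ← hadd2]
    ring
  have hbound1 : ‖∫ x in c..(1:ℝ), f x‖ ≤ B * |(1:ℝ) - c| :=
    intervalIntegral.norm_integral_le_of_norm_le_const fun x _ => by simpa using hB x
  have hbound2 : ‖∫ x in (0:ℝ)..δ, f x‖ ≤ B * |δ - 0| :=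
    intervalIntegral.norm_integral_le_of_norm_le_const fun x _ => by simpa using hB x
  have hIF_le : (∫ x in (0:ℝ)..c, F x) ≤ 2 * B * δ := by
    have h1 : |(1:ℝ) - c| = δ := by rw [hc]; rw [abs_of_nonneg] <;> linarith
    have h2 : |δ - (0:ℝ)| = δ := by rw [abs_of_nonneg] <;> linarith
    rw [hIF]
    have hb1 := hbound1
    have hb2 := hbound2
    rw [Real.norm_eq_abs, h1] at hb1
    rw [Real.norm_eq_abs, h2] at hb2
    have b1 : (∫ x in c..(1:ℝ), f x) ≤ B * δ := (abs_le.mp hb1).2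
    have b2' : -(B * δ) ≤ ∫ x in (0:ℝ)..δ, f x := (abs_le.mp hb2).1
    linarith
  -- Markov's inequality
  set μ₀ := volume.restrict (Set.Ico (0:ℝ) c) with hμ₀
  have hμ₀fin : μ₀ Set.univ < ⊤ := by
    simp [hμ₀, Measure.restrict_apply, Real.volume_Ico]
  have markov := mul_meas_ge_le_integral_of_nonneg hFpos_ae hFint (A * δ)
  have hIeq : (∫ x, F x ∂μ₀) = ∫ x in (0:ℝ)..c, F x := by
    rw [hμ₀, Measure.restrict_congr_set Ico_ae_eq_Ioc,
      ← intervalIntegral.integral_of_le hc0.le]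
  have hm_ne : μ₀ {x | A * δ ≤ F x} ≠ ⊤ :=
    ((measure_mono (Set.subset_univ _)).trans_lt hμ₀fin).ne
  have hmle : (μ₀ {x | A * δ ≤ F x}).toReal ≤ 2 * B / A := by
    have h1 : A * δ * (μ₀ {x | A * δ ≤ F x}).toReal ≤ 2 * B * δ := by
      calc A * δ * (μ₀ {x | A * δ ≤ F x}).toReal ≤ ∫ x, F x ∂μ₀ := markov
        _ = ∫ x in (0:ℝ)..c, F x := hIeq
        _ ≤ 2 * B * δ := hIF_le
    have hAδ : 0 < A * δ := mul_pos hA hδ0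
    rw [div_eq_mul_inv]
    calc (μ₀ {x | A * δ ≤ F x}).toReal
        = (A * δ * (μ₀ {x | A * δ ≤ F x}).toReal) / (A * δ) := by
          exact (mul_div_cancel_left₀ _ hAδ.ne').symm
      _ ≤ (2 * B * δ) / (A * δ) := div_le_div_of_nonneg_right h1 hAδ.le
      _ = 2 * B * A⁻¹ := by
          field_simp
  have hmle' : μ₀ {x | A * δ ≤ F x} ≤ ENNReal.ofReal (2 * B / A) := by
    rw [← ENNReal.ofReal_toReal hm_ne]
    exact ENNReal.ofReal_le_ofReal hmle
  -- decompose the bad set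
  have hsub : {x ∈ Set.Ico (0:ℝ) 1 | A * δ < |f (x + δ) - f x|} ⊆
      ({x | A * δ ≤ F x} ∩ Set.Ico (0:ℝ) c) ∪ Set.Ico c 1 := by
    rintro x ⟨hx, hgx⟩
    by_cases hxc : x < c
    · left
      have hx' : x ∈ Set.Ico (0:ℝ) c := ⟨hx.1, hxc⟩
      have h0 := hFpos x hx'
      refine ⟨?_, hx'⟩
      have : |f (x + δ) - f x| = F x := abs_of_nonneg h0
      simp only [Set.mem_setOf_eq]
      rw [← this]
      exact hgx.le
    · right
      exact ⟨le_of_not_gt hxc, hx.2⟩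
  calc volume {x ∈ Set.Ico (0:ℝ) 1 | A * δ < |f (x + δ) - f x|}
      ≤ volume (({x | A * δ ≤ F x} ∩ Set.Ico (0:ℝ) c) ∪ Set.Ico c 1) := measure_mono hsub
    _ ≤ volume ({x | A * δ ≤ F x} ∩ Set.Ico (0:ℝ) c) + volume (Set.Ico c 1) :=
        measure_union_le _ _
    _ ≤ ENNReal.ofReal (2 * B / A) + ENNReal.ofReal δ := by
        refine add_le_add ?_ ?_
        · have : volume ({x | A * δ ≤ F x} ∩ Set.Ico (0:ℝ) c) = μ₀ {x | A * δ ≤ F x} := by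
            rw [hμ₀, Measure.restrict_apply']
            exact measurableSet_Ico
          rw [this]
          exact hmle'
        · rw [Real.volume_Ico]
          exact ENNReal.ofReal_le_ofReal (by simp [hc])
    _ = ENNReal.ofReal (2 * B / A + δ) := by
        rw [ENNReal.ofReal_add (by positivity) hδ0.le]
    _ ≤ ENNReal.ofReal (2 * δ + 6 * B / A) := by
        apply ENNReal.ofReal_le_ofReal
        have : 2 * B / A ≤ 6 * B / A := by
          exact div_le_div_of_nonneg_right (by linarith) hA.le
        linarith
end
end

section
/- Let f be a 1-periodic function on ℝ with Var f < ∞. Then for every δ ∈ (0,1) and every A > 0, the Lebesgue measure of the set {x ∈ [0,1) : |f(x+δ) − f(x)| > Aδ} is at most 4δ + 6 (Var f)/A. -/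
open MeasureTheory Filter
open scoped ENNReal NNReal

noncomputable section

/-- If `f` is `1`-periodic with `Var f < ∞`, then for `δ ∈ (0,1)` and `A > 0`
the measure of `{x ∈ [0,1) : |f(x+δ) − f(x)| > Aδ}` is at most `4δ + 6 (Var f)/A`. -/
theorem measure_large_increment_boundedVariation (f : ℝ → ℝ)
    (hper : Function.Periodic f 1) (hBV : pVar f ≠ ⊤)
    (δ A : ℝ) (hδ : δ ∈ Set.Ioo (0:ℝ) 1) (hA : 0 < A) :
    volume {x ∈ Set.Ico (0:ℝ) 1 | A * δ < |f (x + δ) - f x|} ≤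
      ENNReal.ofReal (4 * δ + 6 * (pVar f).toReal / A) := by
  obtain ⟨hδ0, hδ1⟩ := hδ
  -- variation on [1,2] equals variation on [0,1]
  have hper12 : eVariationOn f (Set.Icc (1:ℝ) 2) = pVar f := by
    have hmono : MonotoneOn (fun x : ℝ => x + 1) (Set.Icc (0:ℝ) 1) :=
      fun a _ b _ hab => by simpa using hab
    have hcomp := eVariationOn.comp_eq_of_monotoneOn f (fun x : ℝ => x + 1) hmono
    have himg : (fun x : ℝ => x + 1) '' Set.Icc (0:ℝ) 1 = Set.Icc (1:ℝ) 2 := by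
      rw [Set.image_add_const_Icc]; norm_num
    have hfun : (f ∘ fun x : ℝ => x + 1) = f := by
      funext x; exact hper x
    rw [himg, hfun] at hcomp
    exact hcomp.symm
  -- variation on [0,2]
  have h02 : eVariationOn f (Set.Icc (0:ℝ) 2) = pVar f + pVar f := by
    have := eVariationOn.Icc_add_Icc f (s := (Set.univ : Set ℝ)) (a := 0) (b := 1) (c := 2)
      (by norm_num) (by norm_num) (Set.mem_univ _)
    simpa [Set.univ_inter, pVar, hper12] using this.symm
  have h02top : eVariationOn f (Set.Icc (0:ℝ) 2) ≠ ⊤ := by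
    rw [h02]; exact ENNReal.add_ne_top.2 ⟨hBV, hBV⟩
  set V : ℝ → ℝ≥0∞ := fun t => eVariationOn f (Set.Icc 0 t) with hV
  have hVmono : Monotone V := fun a b hab =>
    eVariationOn.mono f (Set.Icc_subset_Icc_right hab)
  have hVle2 : ∀ t, t ≤ 2 → V t ≤ eVariationOn f (Set.Icc (0:ℝ) 2) := fun t ht =>
    hVmono ht
  have hVtop : ∀ t, t ≤ 2 → V t ≠ ⊤ := fun t ht =>
    ne_top_of_le_ne_top h02top (hVle2 t ht)
  have hVmeas : Measurable V := hVmono.measurable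
  set W : ℝ → ℝ≥0∞ := fun x => V (x + δ) - V x with hW
  have hWmeas : Measurable W := (hVmeas.comp (measurable_add_const δ)).sub hVmeas
  -- pointwise bound
  have hpt : ∀ x, 0 ≤ x → x ≤ 1 → ENNReal.ofReal (|f (x + δ) - f x|) ≤ W x := by
    intro x hx hx1
    have hxd : x ≤ x + δ := le_add_of_nonneg_right hδ0.le
    have hedist : ENNReal.ofReal (|f (x + δ) - f x|) ≤ eVariationOn f (Set.Icc x (x + δ)) := by
      have := eVariationOn.edist_le f (x := x + δ) (y := x)
        (Set.mem_Icc.2 ⟨hxd, le_rfl⟩) (Set.mem_Icc.2 ⟨le_rfl, hxd⟩)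
      rwa [edist_dist, Real.dist_eq] at this
    refine hedist.trans ?_
    have hadd := eVariationOn.Icc_add_Icc f (s := (Set.univ : Set ℝ)) (a := 0) (b := x)
      (c := x + δ) hx hxd (Set.mem_univ _)
    simp only [Set.univ_inter] at hadd
    have : eVariationOn f (Set.Icc x (x + δ)) + V x ≤ V (x + δ) := by
      rw [add_comm]; exact hadd.le
    exact ENNReal.le_sub_of_add_le_right (hVtop x (by linarith)) this
  -- the target set is contained in a superlevel set of W
  set S : Set ℝ := {x | ENNReal.ofReal (A * δ) ≤ W x} with hS
  have hsub : {x ∈ Set.Ico (0:ℝ) 1 | A * δ < |f (x + δ) - f x|} ⊆ S ∩ Set.Ico 0 1 := by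
    rintro x ⟨hx, hfx⟩
    refine ⟨?_, hx⟩
    have h1 : ENNReal.ofReal (A * δ) ≤ ENNReal.ofReal (|f (x + δ) - f x|) :=
      ENNReal.ofReal_le_ofReal hfx.le
    exact h1.trans (hpt x hx.1 hx.2.le)
  set μ := volume.restrict (Set.Ico (0:ℝ) 1) with hμ
  have hres : volume (S ∩ Set.Ico (0:ℝ) 1) = μ S := by
    rw [hμ, Measure.restrict_apply' measurableSet_Ico]
  have hAδ : 0 < A * δ := mul_pos hA hδ0
  have cheb : μ S ≤ (∫⁻ x, W x ∂μ) / ENNReal.ofReal (A * δ) :=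
    meas_ge_le_lintegral_div hWmeas.aemeasurable
      (ENNReal.ofReal_pos.2 hAδ).ne' ENNReal.ofReal_ne_top
  -- computing the integral of W
  have hI0top : (∫⁻ x in Set.Ico (0:ℝ) 1, V x) ≠ ⊤ := by
    have : (∫⁻ x in Set.Ico (0:ℝ) 1, V x) ≤ ∫⁻ _ in Set.Ico (0:ℝ) 1,
        eVariationOn f (Set.Icc (0:ℝ) 2) := by
      refine setLIntegral_mono' measurableSet_Ico fun x hx => hVle2 x (by linarith [hx.2])
    refine ne_top_of_le_ne_top ?_ this
    rw [setLIntegral_const]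
    exact ENNReal.mul_ne_top h02top (by simp)
  have hVleae : ∀ x, V x ≤ V (x + δ) := fun x => hVmono (le_add_of_nonneg_right hδ0.le)
  have hsubint : ∫⁻ x, W x ∂μ =
      (∫⁻ x in Set.Ico (0:ℝ) 1, V (x + δ)) - ∫⁻ x in Set.Ico (0:ℝ) 1, V x := by
    rw [hμ]
    exact lintegral_sub hVmeas hI0top (Filter.Eventually.of_forall hVleae)
  -- translation
  have htrans : (∫⁻ x in Set.Ico (0:ℝ) 1, V (x + δ)) = ∫⁻ y in Set.Ico δ (1 + δ), V y := by
    rw [← lintegral_indicator measurableSet_Ico, ← lintegral_indicator measurableSet_Ico]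
    have : ∀ x : ℝ, (Set.Ico (0:ℝ) 1).indicator (fun x => V (x + δ)) x =
        (Set.Ico δ (1 + δ)).indicator V (x + δ) := by
      intro x
      by_cases h : x ∈ Set.Ico (0:ℝ) 1
      · rw [Set.indicator_of_mem h, Set.indicator_of_mem (by constructor <;> [linarith [h.1]; linarith [h.2]])]
      · rw [Set.indicator_of_notMem h, Set.indicator_of_notMem]
        intro hc
        exact h ⟨by linarith [hc.1], by linarith [hc.2]⟩
    simp_rw [this]
    exact lintegral_add_right_eq_self ((Set.Ico δ (1 + δ)).indicator V) δ
  -- splitting the intervals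
  have hsplit1 : (∫⁻ y in Set.Ico δ (1 + δ), V y) =
      (∫⁻ y in Set.Ico δ 1, V y) + ∫⁻ y in Set.Ico (1:ℝ) (1 + δ), V y := by
    rw [← Set.Ico_union_Ico_eq_Ico hδ1.le (by linarith),
      lintegral_union measurableSet_Ico (Set.Ico_disjoint_Ico_same)]
  have hsplit0 : (∫⁻ y in Set.Ico δ 1, V y) ≤ ∫⁻ x in Set.Ico (0:ℝ) 1, V x := by
    exact lintegral_mono_set (Set.Ico_subset_Ico_left hδ0.le)
  have hJ : (∫⁻ y in Set.Ico (1:ℝ) (1 + δ), V y) ≤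
      eVariationOn f (Set.Icc (0:ℝ) 2) * ENNReal.ofReal δ := by
    have h1 : (∫⁻ y in Set.Ico (1:ℝ) (1 + δ), V y) ≤ ∫⁻ _ in Set.Ico (1:ℝ) (1 + δ),
        eVariationOn f (Set.Icc (0:ℝ) 2) :=
      setLIntegral_mono' measurableSet_Ico fun x hx => hVle2 x (by linarith [hx.2])
    refine h1.trans ?_
    rw [setLIntegral_const, Real.volume_Ico]
    simp
  have hint : ∫⁻ x, W x ∂μ ≤ eVariationOn f (Set.Icc (0:ℝ) 2) * ENNReal.ofReal δ := by
    rw [hsubint, htrans]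
    refine (tsub_le_iff_left.2 ?_).trans hJ
    rw [hsplit1]
    calc (∫⁻ y in Set.Ico δ 1, V y) + ∫⁻ y in Set.Ico (1:ℝ) (1 + δ), V y
        ≤ (∫⁻ x in Set.Ico (0:ℝ) 1, V x) + ∫⁻ y in Set.Ico (1:ℝ) (1 + δ), V y :=
          add_le_add_left hsplit0 _
      _ = (∫⁻ x in Set.Ico (0:ℝ) 1, V x) + ∫⁻ y in Set.Ico (1:ℝ) (1 + δ), V y := rfl
      _ ≤ _ := by rw [add_comm]
  -- final arithmetic
  calc volume {x ∈ Set.Ico (0:ℝ) 1 | A * δ < |f (x + δ) - f x|}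
      ≤ volume (S ∩ Set.Ico 0 1) := measure_mono hsub
    _ = μ S := hres
    _ ≤ (∫⁻ x, W x ∂μ) / ENNReal.ofReal (A * δ) := cheb
    _ ≤ (eVariationOn f (Set.Icc (0:ℝ) 2) * ENNReal.ofReal δ) / ENNReal.ofReal (A * δ) :=
        ENNReal.div_le_div_right hint _
    _ = eVariationOn f (Set.Icc (0:ℝ) 2) / ENNReal.ofReal A := by
        rw [ENNReal.ofReal_mul hA.le]
        exact ENNReal.mul_div_mul_right _ _ (ENNReal.ofReal_pos.2 hδ0).ne'
          ENNReal.ofReal_ne_top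
    _ ≤ ENNReal.ofReal (4 * δ + 6 * (pVar f).toReal / A) := by
        set t := (pVar f).toReal with htdef
        have ht : 0 ≤ t := ENNReal.toReal_nonneg
        have hpp : pVar f + pVar f = ENNReal.ofReal (t + t) := by
          rw [ENNReal.ofReal_add ht ht, htdef, ENNReal.ofReal_toReal hBV]
        rw [h02, hpp, ← ENNReal.ofReal_div_of_pos hA]
        apply ENNReal.ofReal_le_ofReal
        have h6 : (t + t) / A ≤ 6 * t / A := (div_le_div_iff_of_pos_right hA).2 (by linarith)
        nlinarith [h6, mul_pos hA hδ0]
end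
end

section
/- Let f : ℝ → [−∞, ∞) be a 1-periodic function with ∫₀¹ log(1+|f(x)|) dx < ∞. Then for every δ ∈ (0,1) and all A, B > 0, the Lebesgue measure of the set {x ∈ [0,1) : |f(x+δ) − f(x)| > Aδ} is at most 4δ + 6 A^{−1} e^{B} Var [f]_{e^B} + (2/B) ∫_{{x ∈ [0,1) : log(1+|f(x)|) > B}} log(1+|f(x)|) dx. -/
open MeasureTheory Filter
open scoped ENNReal NNReal

noncomputable section

/-- The truncation `[h]_A` of an extended-real-valued function: `[h]_A x = h x` if
`|h x| ≤ A`, and `A` otherwise (in particular `[h]_A x = A` when `h x = −∞`). -/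
def truncE (h : ℝ → EReal) (A : ℝ) : ℝ → ℝ :=
  fun x => if -(A : EReal) ≤ h x ∧ h x ≤ (A : EReal) then (h x).toReal else A

/-- `log(1 + |f x|) ∈ [0,∞]`, with the value `∞` when `f x = −∞`. -/
def logOnePlusAbs (f : ℝ → EReal) (x : ℝ) : ℝ≥0∞ :=
  if f x = ⊥ then ⊤ else ENNReal.ofReal (Real.log (1 + |(f x).toReal|))

private lemma truncE_measurable {f : ℝ → EReal} (hf : Measurable f) (A : ℝ) :
    Measurable (truncE f A) := by
  unfold truncE
  refine Measurable.ite ?_ (measurable_ereal_toReal.comp hf) measurable_const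
  exact hf measurableSet_Icc

private lemma logOnePlusAbs_measurable {f : ℝ → EReal} (hf : Measurable f) :
    Measurable (logOnePlusAbs f) := by
  unfold logOnePlusAbs
  refine Measurable.ite (hf (measurableSet_singleton ⊥)) measurable_const ?_
  exact ENNReal.measurable_ofReal.comp
    (Real.measurable_log.comp (measurable_const.add (measurable_ereal_toReal.comp hf).abs))

private lemma good_point {f : ℝ → EReal} {B : ℝ} (hB : 0 < B) {z : ℝ} (htop : f z ≠ ⊤)
    (h : ¬ (ENNReal.ofReal B < logOnePlusAbs f z)) :
    f z = ((f z).toReal : EReal) ∧ |(f z).toReal| ≤ Real.exp B := by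
  push_neg at h
  have hbot : f z ≠ ⊥ := by
    intro hb
    rw [logOnePlusAbs, if_pos hb] at h
    exact (h.trans_lt ENNReal.ofReal_lt_top).ne rfl
  rw [logOnePlusAbs, if_neg hbot] at h
  rw [ENNReal.ofReal_le_ofReal_iff hB.le] at h
  refine ⟨(EReal.coe_toReal htop hbot).symm, ?_⟩
  have h1 : (0:ℝ) < 1 + |(f z).toReal| := by positivity
  have h2 : 1 + |(f z).toReal| ≤ Real.exp B := by
    calc 1 + |(f z).toReal| = Real.exp (Real.log (1 + |(f z).toReal|)) := (Real.exp_log h1).symm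
      _ ≤ Real.exp B := Real.exp_le_exp.mpr h
  linarith

private lemma truncE_eq {f : ℝ → EReal} {E z : ℝ} (hco : f z = ((f z).toReal : EReal))
    (habs : |(f z).toReal| ≤ E) : truncE f E z = (f z).toReal := by
  rw [truncE, if_pos]
  constructor
  · rw [hco, ← EReal.coe_neg, EReal.coe_le_coe_iff]
    exact (abs_le.mp habs).1
  · rw [hco, EReal.coe_le_coe_iff]
    exact (abs_le.mp habs).2

private lemma evar_shift {g : ℝ → ℝ} (hg : ∀ x, g (x + 1) = g x) (a b : ℝ) :
    eVariationOn g (Set.Icc (a + 1) (b + 1)) = eVariationOn g (Set.Icc a b) := by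
  have h := eVariationOn.comp_eq_of_monotoneOn g (fun x => x + 1)
    ((monotone_id.add_const 1).monotoneOn (Set.Icc a b))
  rw [Set.image_add_const_Icc] at h
  rw [← h]
  exact eVariationOn.eq_of_eqOn (fun x _ => hg x)

/-- Let `f : ℝ → [−∞,∞)` be `1`-periodic with `∫₀¹ log(1+|f|) < ∞`. Then for
`δ ∈ (0,1)` and `A, B > 0`, the measure of `{x ∈ [0,1) : |f(x+δ) − f(x)| > Aδ}` is at most
`4δ + 6 A⁻¹ e^B Var [f]_{e^B} + (2/B) ∫_{{log(1+|f|) > B}} log(1+|f|)`. -/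
theorem measure_large_increment_semiBoundedVariation (f : ℝ → EReal)
    (hmeas : Measurable f) (hper : Function.Periodic f 1) (htop : ∀ x, f x ≠ ⊤)
    (hint : ∫⁻ x in Set.Ico (0:ℝ) 1, logOnePlusAbs f x < ⊤)
    (δ A B : ℝ) (hδ : δ ∈ Set.Ioo (0:ℝ) 1) (hA : 0 < A) (hB : 0 < B) :
    volume {x ∈ Set.Ico (0:ℝ) 1 | ENNReal.ofReal (A * δ) < (f (x + δ) - f x).abs} ≤
      ENNReal.ofReal (4 * δ) +
        ENNReal.ofReal (6 / A * Real.exp B) *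
          eVariationOn (truncE f (Real.exp B)) (Set.Icc 0 1) +
        ENNReal.ofReal (2 / B) *
          ∫⁻ x in {y ∈ Set.Ico (0:ℝ) 1 | ENNReal.ofReal B < logOnePlusAbs f y},
            logOnePlusAbs f x := by
  obtain ⟨hδ0, hδ1⟩ := hδ
  have hE1 : (1:ℝ) ≤ Real.exp B := by nlinarith [Real.add_one_le_exp B]
  set g : ℝ → ℝ := truncE f (Real.exp B) with hgdef
  have hgm : Measurable g := truncE_measurable hmeas _
  have hgper : ∀ x, g (x + 1) = g x := by
    intro x
    simp only [hgdef, truncE, hper x]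
  set V := eVariationOn g (Set.Icc (0:ℝ) 1) with hVdef
  -- variation of g on [0,3] equals V + V + V
  have h12 : eVariationOn g (Set.Icc (1:ℝ) 2) = V := by
    have h := evar_shift hgper 0 1
    norm_num at h
    rw [h]
  have h23 : eVariationOn g (Set.Icc (2:ℝ) 3) = V := by
    have h := evar_shift hgper 1 2
    norm_num at h
    rw [h, h12]
  have h13 : eVariationOn g (Set.Icc (1:ℝ) 3) = V + V := by
    have h := eVariationOn.Icc_add_Icc g (s := Set.univ) (a := (1:ℝ)) (b := 2) (c := 3)
      (by norm_num) (by norm_num) trivial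
    simp only [Set.univ_inter] at h
    rw [← h, h12, h23]
  have hV3 : eVariationOn g (Set.Icc (0:ℝ) 3) = V + V + V := by
    have h := eVariationOn.Icc_add_Icc g (s := Set.univ) (a := (0:ℝ)) (b := 1) (c := 3)
      (by norm_num) (by norm_num) trivial
    simp only [Set.univ_inter] at h
    rw [← h, h13, ← hVdef, add_assoc]
  -- the difference function
  set F : ℝ → ℝ≥0∞ := fun x => edist (g (x + δ)) (g x) with hFdef
  have hFm : Measurable F := (hgm.comp (measurable_add_const δ)).edist hgm
  -- the integral bound
  set N : ℕ := ⌈δ⁻¹⌉₊ with hNdef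
  have hN1 : (1:ℝ) ≤ (N:ℝ) * δ := by
    have h := Nat.le_ceil δ⁻¹
    have h2 := mul_le_mul_of_nonneg_right h hδ0.le
    rwa [inv_mul_cancel₀ hδ0.ne'] at h2
  have hN2 : (N:ℝ) * δ < 1 + δ := by
    have h := Nat.ceil_lt_add_one (by positivity : (0:ℝ) ≤ δ⁻¹)
    have h2 := mul_lt_mul_of_pos_right h hδ0
    rwa [add_mul, inv_mul_cancel₀ hδ0.ne', one_mul] at h2
  have hcover : Set.Ico (0:ℝ) 1 ⊆ ⋃ j ∈ Finset.range N, Set.Ico ((j:ℝ)*δ) (((j:ℝ)+1)*δ) := by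
    intro x hx
    obtain ⟨hx0, hx1⟩ := hx
    have hj1 : (⌊x/δ⌋₊ : ℝ) ≤ x/δ := Nat.floor_le (by positivity)
    have hj2 : x/δ < ⌊x/δ⌋₊ + 1 := Nat.lt_floor_add_one _
    have hxeq : (x/δ)*δ = x := div_mul_cancel₀ x hδ0.ne'
    refine Set.mem_biUnion (show ⌊x/δ⌋₊ ∈ Finset.range N from ?_) ?_
    · rw [Finset.mem_range]
      by_contra hcon
      push_neg at hcon
      have hNle : (N:ℝ) ≤ (⌊x/δ⌋₊:ℝ) := Nat.cast_le.mpr hcon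
      have h1 : (⌊x/δ⌋₊:ℝ)*δ ≤ x := by
        calc (⌊x/δ⌋₊:ℝ)*δ ≤ (x/δ)*δ := mul_le_mul_of_nonneg_right hj1 hδ0.le
          _ = x := hxeq
      nlinarith
    · constructor
      · calc (⌊x/δ⌋₊:ℝ)*δ ≤ (x/δ)*δ := mul_le_mul_of_nonneg_right hj1 hδ0.le
          _ = x := hxeq
      · have := mul_lt_mul_of_pos_right hj2 hδ0
        rw [hxeq] at this
        exact this
  have hdisj : Set.PairwiseDisjoint (↑(Finset.range N))
      (fun j : ℕ => Set.Ico ((j:ℝ)*δ) (((j:ℝ)+1)*δ)) := by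
    intro i _ j _ hij
    refine Set.disjoint_left.mpr ?_
    rintro x ⟨h1, h2⟩ ⟨h3, h4⟩
    rcases lt_or_gt_of_ne hij with h | h
    · have hc : ((i:ℝ)+1) ≤ (j:ℝ) := by exact_mod_cast h
      nlinarith
    · have hc : ((j:ℝ)+1) ≤ (i:ℝ) := by exact_mod_cast h
      nlinarith
  have htrans : ∀ j : ℕ, (∫⁻ x in Set.Ico ((j:ℝ)*δ) (((j:ℝ)+1)*δ), F x)
      = ∫⁻ y in Set.Ico (0:ℝ) δ, F (y + (j:ℝ)*δ) := by
    intro j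
    rw [← lintegral_indicator measurableSet_Ico, ← lintegral_indicator measurableSet_Ico,
      ← lintegral_add_right_eq_self
        (fun x => (Set.Ico ((j:ℝ)*δ) (((j:ℝ)+1)*δ)).indicator F x) ((j:ℝ)*δ)]
    congr 1
    funext y
    rw [Set.indicator_apply, Set.indicator_apply]
    have hiff : y + (j:ℝ)*δ ∈ Set.Ico ((j:ℝ)*δ) (((j:ℝ)+1)*δ) ↔ y ∈ Set.Ico (0:ℝ) δ := by
      simp only [Set.mem_Ico]
      constructor <;> rintro ⟨h1, h2⟩ <;> constructor <;> linarith
    rw [if_congr hiff rfl rfl]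
  have hsum : ∀ y ∈ Set.Ico (0:ℝ) δ,
      (∑ j ∈ Finset.range N, F (y + (j:ℝ)*δ)) ≤ V + V + V := by
    intro y hy
    obtain ⟨hy0, hy1⟩ := hy
    rw [← hV3]
    have hmono : MonotoneOn (fun i : ℕ => y + (i:ℝ)*δ) (Set.Icc 0 N) := by
      intro a _ b _ hab
      have : (a:ℝ) ≤ (b:ℝ) := Nat.cast_le.mpr hab
      simp only
      nlinarith
    have hmem : ∀ i ∈ Set.Icc 0 N, y + (i:ℝ)*δ ∈ Set.Icc (0:ℝ) 3 := by
      intro i hi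
      have hiN : (i:ℝ) ≤ (N:ℝ) := Nat.cast_le.mpr hi.2
      have h1 : (i:ℝ)*δ ≤ (N:ℝ)*δ := mul_le_mul_of_nonneg_right hiN hδ0.le
      constructor
      · positivity
      · nlinarith
    have h := eVariationOn.sum_le_of_monotoneOn_Icc (f := g) hmono hmem
    rw [← Finset.range_eq_Ico] at h
    refine le_trans (le_of_eq ?_) h
    apply Finset.sum_congr rfl
    intro i _
    simp only [hFdef]
    rw [edist_comm]
    rw [edist_comm (g (y + ((i:ℕ)+1:ℕ)*δ))]
    congr 2 <;> push_cast <;> ring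
  have hIbound : (∫⁻ x in Set.Ico (0:ℝ) 1, F x) ≤ (V + V + V) * ENNReal.ofReal δ := by
    calc ∫⁻ x in Set.Ico (0:ℝ) 1, F x
        ≤ ∫⁻ x in ⋃ j ∈ Finset.range N, Set.Ico ((j:ℝ)*δ) (((j:ℝ)+1)*δ), F x :=
          lintegral_mono_set hcover
      _ = ∑ j ∈ Finset.range N, ∫⁻ x in Set.Ico ((j:ℝ)*δ) (((j:ℝ)+1)*δ), F x :=
          lintegral_biUnion_finset hdisj (fun _ _ => measurableSet_Ico) F
      _ = ∑ j ∈ Finset.range N, ∫⁻ y in Set.Ico (0:ℝ) δ, F (y + (j:ℝ)*δ) :=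
          Finset.sum_congr rfl (fun j _ => htrans j)
      _ = ∫⁻ y in Set.Ico (0:ℝ) δ, ∑ j ∈ Finset.range N, F (y + (j:ℝ)*δ) :=
          (lintegral_finset_sum _ (fun j _ => hFm.comp (measurable_add_const _))).symm
      _ ≤ ∫⁻ _ in Set.Ico (0:ℝ) δ, (V + V + V) := setLIntegral_mono measurable_const hsum
      _ = (V + V + V) * ENNReal.ofReal δ := by
          rw [setLIntegral_const, Real.volume_Ico, sub_zero]
  -- Markov for the truncated part
  have hc0 : ENNReal.ofReal (A*δ) ≠ 0 := by
    rw [Ne, ENNReal.ofReal_eq_zero, not_le]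
    positivity
  have hct : ENNReal.ofReal (A*δ) ≠ ⊤ := ENNReal.ofReal_ne_top
  have hmarkov : volume {x ∈ Set.Ico (0:ℝ) 1 | ENNReal.ofReal (A*δ) < F x}
      ≤ ENNReal.ofReal (6/A * Real.exp B) * V := by
    have h1 : ENNReal.ofReal (A*δ) * volume {x ∈ Set.Ico (0:ℝ) 1 | ENNReal.ofReal (A*δ) < F x}
        ≤ (V + V + V) * ENNReal.ofReal δ := by
      refine le_trans ?_ hIbound
      calc ENNReal.ofReal (A*δ) * volume {x ∈ Set.Ico (0:ℝ) 1 | ENNReal.ofReal (A*δ) < F x}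
          ≤ ENNReal.ofReal (A*δ) *
            (volume.restrict (Set.Ico (0:ℝ) 1)) {x | ENNReal.ofReal (A*δ) ≤ F x} := by
            refine mul_le_mul_right ?_ _
            rw [Measure.restrict_apply' measurableSet_Ico]
            exact measure_mono (fun x hx => ⟨hx.2.le, hx.1⟩)
        _ ≤ ∫⁻ x in Set.Ico (0:ℝ) 1, F x := mul_meas_ge_le_lintegral₀ hFm.aemeasurable _
    rw [mul_comm] at h1
    have h2 := (ENNReal.le_div_iff_mul_le (Or.inl hc0) (Or.inl hct)).mpr h1
    refine h2.trans ?_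
    rw [ENNReal.div_le_iff hc0 hct]
    calc (V + V + V) * ENNReal.ofReal δ = V * ENNReal.ofReal (3*δ) := by
          rw [ENNReal.ofReal_mul (by norm_num : (0:ℝ) ≤ 3)]
          have : ENNReal.ofReal (3:ℝ) = 3 := by
            rw [show (3:ℝ) = ((3:ℕ):ℝ) by norm_num, ENNReal.ofReal_natCast]
            norm_num
          rw [this]; ring
      _ ≤ V * ENNReal.ofReal (6/A * Real.exp B * (A*δ)) := by
          refine mul_le_mul_right ?_ _
          apply ENNReal.ofReal_le_ofReal
          have heq : 6/A * Real.exp B * (A*δ) = 6 * Real.exp B * δ := by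
            field_simp
          rw [heq]
          nlinarith
      _ = ENNReal.ofReal (6/A * Real.exp B) * V * ENNReal.ofReal (A*δ) := by
          rw [ENNReal.ofReal_mul (by positivity)]
          ring
  -- the bad set
  set Gs := {y ∈ Set.Ico (0:ℝ) 1 | ENNReal.ofReal B < logOnePlusAbs f y} with hGsdef
  set I := ∫⁻ x in Gs, logOnePlusAbs f x with hIdef
  have hLm : Measurable (logOnePlusAbs f) := logOnePlusAbs_measurable hmeas
  have hB0 : ENNReal.ofReal B ≠ 0 := by
    rw [Ne, ENNReal.ofReal_eq_zero, not_le]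
    exact hB
  have hgvol : volume Gs ≤ (ENNReal.ofReal B)⁻¹ * I := by
    have h1 : ENNReal.ofReal B * volume Gs ≤ I := by
      rw [hIdef]
      calc ENNReal.ofReal B * volume Gs = ∫⁻ _ in Gs, ENNReal.ofReal B :=
            (setLIntegral_const _ _).symm
        _ ≤ ∫⁻ x in Gs, logOnePlusAbs f x := setLIntegral_mono hLm (fun x hx => hx.2.le)
    calc volume Gs = (ENNReal.ofReal B)⁻¹ * (ENNReal.ofReal B * volume Gs) := by
          rw [← mul_assoc, ENNReal.inv_mul_cancel hB0 ENNReal.ofReal_ne_top, one_mul]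
      _ ≤ (ENNReal.ofReal B)⁻¹ * I := by gcongr
  -- the shifted bad set
  have hPper : ∀ x, logOnePlusAbs f (x + 1) = logOnePlusAbs f x := by
    intro x
    simp only [logOnePlusAbs, hper x]
  set Gs' := {x ∈ Set.Ico (0:ℝ) 1 | ENNReal.ofReal B < logOnePlusAbs f (x + δ)} with hGs'def
  have hGs'vol : volume Gs' = volume Gs := by
    have e1 : {x ∈ Set.Ico (0:ℝ) (1-δ) | ENNReal.ofReal B < logOnePlusAbs f (x + δ)}
        = (fun x => x + δ) ⁻¹' {y ∈ Set.Ico δ 1 | ENNReal.ofReal B < logOnePlusAbs f y} := by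
      ext x
      simp only [Set.mem_setOf_eq, Set.mem_preimage, Set.mem_Ico]
      constructor <;> rintro ⟨⟨h1, h2⟩, h3⟩ <;> exact ⟨⟨by linarith, by linarith⟩, h3⟩
    have e2 : {x ∈ Set.Ico (1-δ:ℝ) 1 | ENNReal.ofReal B < logOnePlusAbs f (x + δ)}
        = (fun x => x + (δ-1)) ⁻¹' {y ∈ Set.Ico (0:ℝ) δ | ENNReal.ofReal B < logOnePlusAbs f y} := by
      ext x
      simp only [Set.mem_setOf_eq, Set.mem_preimage, Set.mem_Ico]
      constructor <;> rintro ⟨⟨h1, h2⟩, h3⟩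
      · refine ⟨⟨by linarith, by linarith⟩, ?_⟩
        have heq : x + δ = (x + (δ-1)) + 1 := by ring
        rwa [heq, hPper] at h3
      · refine ⟨⟨by linarith, by linarith⟩, ?_⟩
        have heq : x + δ = (x + (δ-1)) + 1 := by ring
        rw [heq, hPper]
        exact h3
    have hsplitG : Gs' = {x ∈ Set.Ico (0:ℝ) (1-δ) | ENNReal.ofReal B < logOnePlusAbs f (x + δ)}
        ∪ {x ∈ Set.Ico (1-δ:ℝ) 1 | ENNReal.ofReal B < logOnePlusAbs f (x + δ)} := by
      rw [hGs'def, ← Set.Ico_union_Ico_eq_Ico (by linarith : (0:ℝ) ≤ 1-δ)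
        (by linarith : (1-δ:ℝ) ≤ 1)]
      ext x
      simp only [Set.mem_setOf_eq, Set.mem_union, Set.mem_Ico]
      tauto
    have hsplitG2 : Gs = {y ∈ Set.Ico δ 1 | ENNReal.ofReal B < logOnePlusAbs f y}
        ∪ {y ∈ Set.Ico (0:ℝ) δ | ENNReal.ofReal B < logOnePlusAbs f y} := by
      rw [hGsdef, ← Set.Ico_union_Ico_eq_Ico hδ0.le hδ1.le]
      ext x
      simp only [Set.mem_setOf_eq, Set.mem_union, Set.mem_Ico]
      tauto
    have hd1 : Disjoint {x ∈ Set.Ico (0:ℝ) (1-δ) | ENNReal.ofReal B < logOnePlusAbs f (x + δ)}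
        {x ∈ Set.Ico (1-δ:ℝ) 1 | ENNReal.ofReal B < logOnePlusAbs f (x + δ)} := by
      refine Set.disjoint_left.mpr ?_
      rintro x ⟨⟨_, h2⟩, _⟩ ⟨⟨h3, _⟩, _⟩
      linarith
    have hd2 : Disjoint {y ∈ Set.Ico δ 1 | ENNReal.ofReal B < logOnePlusAbs f y}
        {y ∈ Set.Ico (0:ℝ) δ | ENNReal.ofReal B < logOnePlusAbs f y} := by
      refine Set.disjoint_left.mpr ?_
      rintro x ⟨⟨h1, _⟩, _⟩ ⟨⟨_, h4⟩, _⟩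
      linarith
    have hm1 : MeasurableSet {x ∈ Set.Ico (1-δ:ℝ) 1 | ENNReal.ofReal B < logOnePlusAbs f (x + δ)} :=
      measurableSet_Ico.inter ((hLm.comp (measurable_add_const δ)) measurableSet_Ioi)
    have hm2 : MeasurableSet {y ∈ Set.Ico (0:ℝ) δ | ENNReal.ofReal B < logOnePlusAbs f y} :=
      measurableSet_Ico.inter (hLm measurableSet_Ioi)
    rw [hsplitG, measure_union hd1 hm1, e1, e2, measure_preimage_add_right,
      measure_preimage_add_right, hsplitG2, measure_union hd2 hm2]
  -- the inclusion
  have hincl : {x ∈ Set.Ico (0:ℝ) 1 | ENNReal.ofReal (A * δ) < (f (x + δ) - f x).abs}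
      ⊆ Gs ∪ Gs' ∪ {x ∈ Set.Ico (0:ℝ) 1 | ENNReal.ofReal (A*δ) < F x} := by
    intro x hx
    by_cases h1 : ENNReal.ofReal B < logOnePlusAbs f x
    · exact Or.inl (Or.inl ⟨hx.1, h1⟩)
    by_cases h2 : ENNReal.ofReal B < logOnePlusAbs f (x + δ)
    · exact Or.inl (Or.inr ⟨hx.1, h2⟩)
    refine Or.inr ⟨hx.1, ?_⟩
    obtain ⟨hco1, hab1⟩ := good_point hB (htop x) h1
    obtain ⟨hco2, hab2⟩ := good_point hB (htop (x + δ)) h2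
    have hg1 : g x = (f x).toReal := truncE_eq hco1 hab1
    have hg2 : g (x + δ) = (f (x + δ)).toReal := truncE_eq hco2 hab2
    have habs : (f (x + δ) - f x).abs
        = ENNReal.ofReal |(f (x + δ)).toReal - (f x).toReal| := by
      rw [hco1, hco2, ← EReal.coe_sub, EReal.abs_def]
      simp
    have hF : F x = ENNReal.ofReal |(f (x + δ)).toReal - (f x).toReal| := by
      show edist (g (x + δ)) (g x) = _
      rw [hg1, hg2, edist_dist, Real.dist_eq]
    rw [hF, ← habs]
    exact hx.2
  -- put everything together
  calc volume {x ∈ Set.Ico (0:ℝ) 1 | ENNReal.ofReal (A * δ) < (f (x + δ) - f x).abs}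
      ≤ volume (Gs ∪ Gs' ∪ {x ∈ Set.Ico (0:ℝ) 1 | ENNReal.ofReal (A*δ) < F x}) :=
        measure_mono hincl
    _ ≤ volume (Gs ∪ Gs') + volume {x ∈ Set.Ico (0:ℝ) 1 | ENNReal.ofReal (A*δ) < F x} :=
        measure_union_le _ _
    _ ≤ volume Gs + volume Gs' + volume {x ∈ Set.Ico (0:ℝ) 1 | ENNReal.ofReal (A*δ) < F x} :=
        add_le_add_left (measure_union_le _ _) _
    _ = volume Gs + volume Gs + volume {x ∈ Set.Ico (0:ℝ) 1 | ENNReal.ofReal (A*δ) < F x} := by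
        rw [hGs'vol]
    _ ≤ ((ENNReal.ofReal B)⁻¹ * I + (ENNReal.ofReal B)⁻¹ * I)
        + ENNReal.ofReal (6/A * Real.exp B) * V := by
        gcongr
    _ ≤ ENNReal.ofReal (4 * δ) + ENNReal.ofReal (6/A * Real.exp B) * V
        + ENNReal.ofReal (2/B) * I := by
        have h2B : (ENNReal.ofReal B)⁻¹ * I + (ENNReal.ofReal B)⁻¹ * I
            = ENNReal.ofReal (2/B) * I := by
          rw [← add_mul]
          congr 1
          rw [← ENNReal.ofReal_inv_of_pos hB, ← ENNReal.ofReal_add (by positivity) (by positivity)]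
          rw [div_eq_mul_inv]
          ring
        rw [h2B, add_assoc, add_comm (ENNReal.ofReal (2/B) * I)
          (ENNReal.ofReal (6/A * Real.exp B) * V)]
        exact le_add_self
end
end

section
/- Let r₀,…,r_{n−1} ∈ [0,1) with discrepancy D := D*_n(r₀,…,r_{n−1}), let h ∈ L¹[0,1) (extended 1-periodically), and suppose for some B > 0 that V := Var [h]_B < ∞. Then the Lebesgue measure of the set {x ∈ [0,1) : (1/n) Σ_{j=0}^{n−1} h(x + r_j) > ∫₀¹ [h]_B(y) dy + 2DV} is at most (n/B) ∫_{{x ∈ [0,1) : h(x) > B}} h(x) dx. -/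
open MeasureTheory Filter
open scoped ENNReal NNReal

noncomputable section

section AuxProofs
open Finset
namespace KoksmaAux

def cl (t : ℝ) : ℝ := max 0 (min 1 t)

lemma cl_mono : Monotone cl := fun a b hab => max_le_max le_rfl (min_le_min le_rfl hab)

lemma cl_mem (t : ℝ) : cl t ∈ Set.Icc (0:ℝ) 1 :=
  ⟨le_max_left _ _, max_le (by norm_num) (min_le_left _ _)⟩

lemma cl_of_mem {t : ℝ} (ht : t ∈ Set.Icc (0:ℝ) 1) : cl t = t := by
  rcases ht with ⟨h0, h1⟩
  simp [cl, min_eq_right h1, max_eq_right h0]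

lemma cl_of_nonpos {t : ℝ} (ht : t ≤ 0) : cl t = 0 := by
  simp [cl, max_eq_left, min_le_of_right_le ht]

lemma cl_of_one_le {t : ℝ} (ht : 1 ≤ t) : cl t = 1 := by
  have : min 1 t = 1 := min_eq_left ht
  simp [cl, this]

def pts (D : ℝ) (n : ℕ) (k : ℕ) : ℝ := D + k / n

lemma cnt_comp {n : ℕ} (y : Fin n → ℝ) (σ : Equiv.Perm (Fin n)) (t : ℝ) :
    (univ.filter fun k => y (σ k) < t).card = (univ.filter fun k => y k < t).card := by
  rw [Finset.card_filter, Finset.card_filter]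
  exact Equiv.sum_comp σ (fun k => if y k < t then 1 else 0)

lemma mono_upper {n : ℕ} (hn : 0 < n) (y : Fin n → ℝ) (hy : ∀ j, y j ∈ Set.Ico (0:ℝ) 1)
    {D : ℝ}
    (hD : ∀ t ∈ Set.Ioc (0:ℝ) 1, |((univ.filter fun j => y j < t).card : ℝ) / n - t| ≤ D)
    (p : ℝ → ℝ) (hp : Monotone p) (hp0 : ∀ t, t ≤ 0 → p t = p 0) (hp1 : ∀ t, 1 ≤ t → p t = p 1) :
    ∑ j, p (y j) ≤ n * ((∫ t in (0:ℝ)..1, p t) + D * (p 1 - p 0)) := by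
  have hD0 : 0 ≤ D := le_trans (abs_nonneg _) (hD 1 ⟨one_pos, le_rfl⟩)
  have hn' : (0:ℝ) < n := by exact_mod_cast hn
  set σ := Tuple.sort y with hσ
  have hz : Monotone (y ∘ σ) := Tuple.monotone_sort y
  -- key bound for sorted values
  have key : ∀ j : Fin n, y (σ j) ≤ (j : ℝ) / n + D := by
    intro j
    rcases le_or_gt (y (σ j)) 0 with h0 | h0
    · have : (0:ℝ) ≤ (j:ℝ)/n + D := by positivity
      linarith
    · have h1 : y (σ j) < 1 := (hy (σ j)).2
      have hmem : y (σ j) ∈ Set.Ioc (0:ℝ) 1 := ⟨h0, h1.le⟩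
      have hsub : (univ.filter fun k => y (σ k) < y (σ j)) ⊆ Finset.Iio j := by
        intro k hk
        rw [Finset.mem_filter] at hk
        rw [Finset.mem_Iio]
        by_contra hc
        exact absurd (hz (not_lt.1 hc)) (not_le.2 hk.2)
      have hcard : ((univ.filter fun k => y k < y (σ j)).card : ℝ) ≤ (j : ℝ) := by
        rw [← cnt_comp y σ]
        have := (Finset.card_le_card hsub).trans_eq (Fin.card_Iio j)
        exact_mod_cast this
      have habs := (abs_le.1 (hD _ hmem)).1
      set C := ((univ.filter fun k => y k < y (σ j)).card : ℝ) with hC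
      have habs' : -D ≤ C / n - y (σ j) := habs
      have hdiv : C / (n:ℝ) ≤ (j : ℝ) / n := by gcongr
      linarith [habs', hdiv]
  set a : ℕ → ℝ := pts D n with ha
  have hIp : ∀ u v : ℝ, IntervalIntegrable p volume u v := fun u v => hp.intervalIntegrable
  have hlen : ∀ k : ℕ, a (k+1) - a k = 1 / n := by
    intro k
    simp only [ha, pts]
    push_cast
    field_simp
    ring
  have step : ∀ j : Fin n, p ((j : ℝ) / n + D) ≤ n * ∫ t in a j..a (j + 1), p t := by
    intro j
    have h1n : (0:ℝ) < 1 / n := by positivity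
    have hle : a (↑j) ≤ a (↑j + 1) := by have := hlen (↑j); linarith
    have hmono : (∫ t in a j..a (j+1), (fun _ => p (a j)) t) ≤ ∫ t in a j..a (j+1), p t := by
      refine intervalIntegral.integral_mono_on hle intervalIntegrable_const (hIp _ _) ?_
      intro x hx
      exact hp hx.1
    rw [intervalIntegral.integral_const] at hmono
    rw [hlen ↑j] at hmono
    have : (1 / (n:ℝ)) * p (a j) ≤ ∫ t in a j..a (j+1), p t := by
      simpa [smul_eq_mul] using hmono
    have h2 : p ((j : ℝ) / n + D) = p (a j) := by rw [ha]; simp only [pts]; ring_nf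
    rw [h2]
    calc p (a j) = n * ((1 / (n:ℝ)) * p (a j)) := by field_simp
    _ ≤ n * ∫ t in a j..a (j+1), p t := by
        apply mul_le_mul_of_nonneg_left this hn'.le
  have sum_eq : ∑ j : Fin n, p (y j) = ∑ j : Fin n, p (y (σ j)) :=
    (Equiv.sum_comp σ (fun k => p (y k))).symm
  have sum1 : ∑ j : Fin n, p (y (σ j)) ≤ ∑ j : Fin n, p ((j : ℝ) / n + D) :=
    Finset.sum_le_sum fun j _ => hp (key j)
  have sum2 : ∑ j : Fin n, p ((j : ℝ) / n + D) ≤ n * ∫ t in (a 0)..(a n), p t := by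
    calc ∑ j : Fin n, p ((j : ℝ) / n + D) ≤ ∑ j : Fin n, n * ∫ t in a j..a (j+1), p t :=
          Finset.sum_le_sum fun j _ => step j
    _ = n * ∑ j ∈ Finset.range n, ∫ t in a j..a (j+1), p t := by
          rw [Finset.mul_sum, Fin.sum_univ_eq_sum_range (fun j => n * ∫ t in a j..a (j+1), p t)]
    _ = n * ∫ t in (a 0)..(a n), p t := by
          rw [intervalIntegral.sum_integral_adjacent_intervals (fun k _ => hIp _ _)]
  have ha0 : a 0 = D := by simp [ha, pts]
  have han : a n = D + 1 := by
    simp only [ha, pts]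
    rw [div_self (ne_of_gt hn')]
  have final : ∫ t in (a 0)..(a n), p t ≤ (∫ t in (0:ℝ)..1, p t) + D * (p 1 - p 0) := by
    rw [ha0, han]
    have e1 : (∫ t in (0:ℝ)..D, p t) + (∫ t in D..(D+1), p t) = ∫ t in (0:ℝ)..(D+1), p t :=
      intervalIntegral.integral_add_adjacent_intervals (hIp _ _) (hIp _ _)
    have e2 : (∫ t in (0:ℝ)..1, p t) + (∫ t in (1:ℝ)..(D+1), p t) = ∫ t in (0:ℝ)..(D+1), p t :=
      intervalIntegral.integral_add_adjacent_intervals (hIp _ _) (hIp _ _)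
    have e3 : (∫ t in (1:ℝ)..(D+1), p t) = D * p 1 := by
      have : (∫ t in (1:ℝ)..(D+1), p t) = ∫ t in (1:ℝ)..(D+1), (fun _ => p 1) t := by
        apply intervalIntegral.integral_congr
        intro t ht
        rw [Set.uIcc_of_le (by linarith)] at ht
        exact hp1 t ht.1
      rw [this, intervalIntegral.integral_const, smul_eq_mul]
      ring
    have e4 : D * p 0 ≤ ∫ t in (0:ℝ)..D, p t := by
      have hmono : (∫ t in (0:ℝ)..D, (fun _ => p 0) t) ≤ ∫ t in (0:ℝ)..D, p t := by
        refine intervalIntegral.integral_mono_on hD0 intervalIntegrable_const (hIp _ _) ?_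
        intro x hx
        exact hp hx.1
      rw [intervalIntegral.integral_const, smul_eq_mul] at hmono
      simpa using hmono
    linarith
  calc ∑ j : Fin n, p (y j) ≤ n * ∫ t in (a 0)..(a n), p t := by
        rw [sum_eq]; exact sum1.trans sum2
  _ ≤ n * ((∫ t in (0:ℝ)..1, p t) + D * (p 1 - p 0)) :=
      mul_le_mul_of_nonneg_left final hn'.le

end KoksmaAux

namespace KoksmaAux2
open KoksmaAux

lemma mono_lower {n : ℕ} (hn : 0 < n) (y : Fin n → ℝ) (hy : ∀ j, y j ∈ Set.Ico (0:ℝ) 1)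
    {D : ℝ}
    (hD : ∀ t ∈ Set.Ioc (0:ℝ) 1, |((univ.filter fun j => y j < t).card : ℝ) / n - t| ≤ D)
    (p : ℝ → ℝ) (hp : Monotone p) (hp0 : ∀ t, t ≤ 0 → p t = p 0) (hp1 : ∀ t, 1 ≤ t → p t = p 1) :
    n * ((∫ t in (0:ℝ)..1, p t) - D * (p 1 - p 0)) ≤ ∑ j, p (y j) := by
  have hD0 : 0 ≤ D := le_trans (abs_nonneg _) (hD 1 ⟨one_pos, le_rfl⟩)
  have hn' : (0:ℝ) < n := by exact_mod_cast hn
  set σ := Tuple.sort y with hσ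
  have hz : Monotone (y ∘ σ) := Tuple.monotone_sort y
  have key : ∀ j : Fin n, ((j : ℝ) + 1) / n - D ≤ y (σ j) := by
    intro j
    have h1 : y (σ j) < 1 := (hy (σ j)).2
    have h0 : 0 ≤ y (σ j) := (hy (σ j)).1
    have main : ∀ ε : ℝ, 0 < ε → ((j : ℝ) + 1) / n - D ≤ y (σ j) + ε := by
      intro ε hε
      set t := min (y (σ j) + ε) 1 with ht
      have htj : y (σ j) < t := lt_min (by linarith) h1
      have htmem : t ∈ Set.Ioc (0:ℝ) 1 := ⟨lt_min (by linarith) one_pos, min_le_right _ _⟩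
      have hsub : Finset.Iic j ⊆ (univ.filter fun k => y (σ k) < t) := by
        intro k hk
        rw [Finset.mem_Iic] at hk
        rw [Finset.mem_filter]
        exact ⟨Finset.mem_univ _, lt_of_le_of_lt (hz hk) htj⟩
      have hcard : ((j : ℝ) + 1) ≤ ((univ.filter fun k => y k < t).card : ℝ) := by
        rw [← cnt_comp y σ]
        have := (Fin.card_Iic j) ▸ Finset.card_le_card hsub
        exact_mod_cast this
      set C := ((univ.filter fun k => y k < t).card : ℝ) with hC
      have habs : C / (n:ℝ) - t ≤ D := (abs_le.1 (hD _ htmem)).2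
      have hdiv : ((j : ℝ) + 1) / n ≤ C / (n:ℝ) := by gcongr
      have htle : t ≤ y (σ j) + ε := min_le_left _ _
      linarith
    by_contra hc
    push_neg at hc
    have := main ((((j : ℝ) + 1) / n - D - y (σ j)) / 2) (by linarith)
    linarith
  set a : ℕ → ℝ := fun k => pts (-D) n k with ha
  have hIp : ∀ u v : ℝ, IntervalIntegrable p volume u v := fun u v => hp.intervalIntegrable
  have hlen : ∀ k : ℕ, a (k+1) - a k = 1 / n := by
    intro k
    simp only [ha, pts]
    push_cast
    field_simp
    ring
  have step : ∀ j : Fin n, (n:ℝ) * ∫ t in a j..a (j + 1), p t ≤ p (((j : ℝ) + 1) / n - D) := by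
    intro j
    have h1n : (0:ℝ) < 1 / n := by positivity
    have hle : a (↑j) ≤ a (↑j + 1) := by have := hlen (↑j); linarith
    have hmono : (∫ t in a j..a (j+1), p t) ≤ ∫ t in a j..a (j+1), (fun _ => p (a (↑j + 1))) t := by
      refine intervalIntegral.integral_mono_on hle (hIp _ _) intervalIntegrable_const ?_
      intro x hx
      exact hp hx.2
    rw [intervalIntegral.integral_const, hlen ↑j, smul_eq_mul] at hmono
    have h2 : p (((j : ℝ) + 1) / n - D) = p (a (↑j + 1)) := by
      rw [ha]; simp only [pts]; push_cast; ring_nf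
    rw [h2]
    calc (n:ℝ) * ∫ t in a j..a (j+1), p t ≤ n * ((1 / (n:ℝ)) * p (a (↑j + 1))) :=
          mul_le_mul_of_nonneg_left hmono hn'.le
    _ = p (a (↑j + 1)) := by field_simp
  have sum_eq : ∑ j : Fin n, p (y j) = ∑ j : Fin n, p (y (σ j)) :=
    (Equiv.sum_comp σ (fun k => p (y k))).symm
  have sum1 : ∑ j : Fin n, p (((j : ℝ) + 1) / n - D) ≤ ∑ j : Fin n, p (y (σ j)) :=
    Finset.sum_le_sum fun j _ => hp (key j)
  have sum2 : (n:ℝ) * ∫ t in (a 0)..(a n), p t ≤ ∑ j : Fin n, p (((j : ℝ) + 1) / n - D) := by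
    calc (n:ℝ) * ∫ t in (a 0)..(a n), p t
        = (n:ℝ) * ∑ j ∈ Finset.range n, ∫ t in a j..a (j+1), p t := by
          rw [intervalIntegral.sum_integral_adjacent_intervals (fun k _ => hIp _ _)]
    _ = ∑ j : Fin n, (n:ℝ) * ∫ t in a j..a (j+1), p t := by
          rw [Finset.mul_sum, Fin.sum_univ_eq_sum_range (fun j => (n:ℝ) * ∫ t in a j..a (j+1), p t)]
    _ ≤ ∑ j : Fin n, p (((j : ℝ) + 1) / n - D) := Finset.sum_le_sum fun j _ => step j
  have ha0 : a 0 = -D := by simp [ha, pts]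
  have han : a n = -D + 1 := by
    simp only [ha, pts]
    rw [div_self (ne_of_gt hn')]
  have final : (∫ t in (0:ℝ)..1, p t) - D * (p 1 - p 0) ≤ ∫ t in (a 0)..(a n), p t := by
    rw [ha0, han]
    have e1 : (∫ t in (-D)..(0:ℝ), p t) + (∫ t in (0:ℝ)..(-D+1), p t)
        = ∫ t in (-D)..(-D+1), p t :=
      intervalIntegral.integral_add_adjacent_intervals (hIp _ _) (hIp _ _)
    have e2 : (∫ t in (0:ℝ)..(-D+1), p t) + (∫ t in (-D+1)..(1:ℝ), p t)
        = ∫ t in (0:ℝ)..1, p t :=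
      intervalIntegral.integral_add_adjacent_intervals (hIp _ _) (hIp _ _)
    have e3 : (∫ t in (-D)..(0:ℝ), p t) = D * p 0 := by
      have : (∫ t in (-D)..(0:ℝ), p t) = ∫ t in (-D)..(0:ℝ), (fun _ => p 0) t := by
        apply intervalIntegral.integral_congr
        intro t ht
        rw [Set.uIcc_of_le (by linarith : -D ≤ (0:ℝ))] at ht
        exact hp0 t ht.2
      rw [this, intervalIntegral.integral_const, smul_eq_mul]
      ring
    have e4 : (∫ t in (-D+1)..(1:ℝ), p t) ≤ D * p 1 := by
      have hmono : (∫ t in (-D+1)..(1:ℝ), p t) ≤ ∫ t in (-D+1)..(1:ℝ), (fun _ => p 1) t := by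
        refine intervalIntegral.integral_mono_on (by linarith) (hIp _ _) intervalIntegrable_const ?_
        intro x hx
        exact hp hx.2
      rw [intervalIntegral.integral_const, smul_eq_mul] at hmono
      calc (∫ t in (-D+1)..(1:ℝ), p t) ≤ (1 - (-D+1)) * p 1 := hmono
      _ = D * p 1 := by ring
    linarith
  calc (n:ℝ) * ((∫ t in (0:ℝ)..1, p t) - D * (p 1 - p 0))
      ≤ (n:ℝ) * ∫ t in (a 0)..(a n), p t := mul_le_mul_of_nonneg_left final hn'.le
  _ ≤ ∑ j : Fin n, p (y j) := by rw [sum_eq]; exact sum2.trans sum1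

end KoksmaAux2

namespace KoksmaMain
open KoksmaAux KoksmaAux2

lemma koksma {n : ℕ} (hn : 0 < n) (y : Fin n → ℝ) (hy : ∀ j, y j ∈ Set.Ico (0:ℝ) 1)
    {D : ℝ}
    (hD : ∀ t ∈ Set.Ioc (0:ℝ) 1, |((univ.filter fun j => y j < t).card : ℝ) / n - t| ≤ D)
    (g : ℝ → ℝ) (hg : eVariationOn g (Set.Icc (0:ℝ) 1) ≠ ⊤) :
    ∑ j, g (y j) ≤
      n * ((∫ t in (0:ℝ)..1, g t) + D * (eVariationOn g (Set.Icc (0:ℝ) 1)).toReal) := by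
  set s : Set ℝ := Set.Icc 0 1 with hs
  have h0s : (0:ℝ) ∈ s := ⟨le_rfl, zero_le_one⟩
  have h1s : (1:ℝ) ∈ s := ⟨zero_le_one, le_rfl⟩
  have hbv : LocallyBoundedVariationOn g s :=
    BoundedVariationOn.locallyBoundedVariationOn hg
  set v : ℝ → ℝ := variationOnFromTo g s 0 with hv
  have hkey : ∀ x z : ℝ, x ∈ s → z ∈ s → x ≤ z → |g z - g x| ≤ v z - v x := by
    intro x z hx hz hxz
    have hadd := variationOnFromTo.add hbv h0s hx hz
    have h1 : |g z - g x| ≤ variationOnFromTo g s x z := by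
      calc |g z - g x| = dist (g x) (g z) := by rw [dist_comm, Real.dist_eq]
      _ ≤ variationOnFromTo g s x z := by
          rw [variationOnFromTo.eq_of_le g s hxz, dist_edist]
          exact ENNReal.toReal_mono (hbv x z hx hz)
            (eVariationOn.edist_le g ⟨hx, le_rfl, hxz⟩ ⟨hz, hxz, le_rfl⟩)
    linarith
  set P : ℝ → ℝ := fun t => (v (cl t) + g (cl t)) / 2 with hP
  set N : ℝ → ℝ := fun t => (v (cl t) - g (cl t)) / 2 with hN
  have hPmono : Monotone P := by
    intro a b hab
    have hc : cl a ≤ cl b := cl_mono hab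
    have := hkey (cl a) (cl b) (cl_mem a) (cl_mem b) hc
    have h2 := neg_abs_le (g (cl b) - g (cl a))
    have h3 := le_abs_self (g (cl b) - g (cl a))
    simp only [hP]
    linarith
  have hNmono : Monotone N := by
    intro a b hab
    have hc : cl a ≤ cl b := cl_mono hab
    have := hkey (cl a) (cl b) (cl_mem a) (cl_mem b) hc
    have h3 := le_abs_self (g (cl b) - g (cl a))
    simp only [hN]
    linarith
  have hcl0 : cl 0 = 0 := cl_of_mem h0s
  have hcl1 : cl 1 = 1 := cl_of_mem h1s
  have hP0 : ∀ t, t ≤ 0 → P t = P 0 := by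
    intro t ht; simp only [hP, cl_of_nonpos ht, hcl0]
  have hP1 : ∀ t, 1 ≤ t → P t = P 1 := by
    intro t ht; simp only [hP, cl_of_one_le ht, hcl1]
  have hN0 : ∀ t, t ≤ 0 → N t = N 0 := by
    intro t ht; simp only [hN, cl_of_nonpos ht, hcl0]
  have hN1 : ∀ t, 1 ≤ t → N t = N 1 := by
    intro t ht; simp only [hN, cl_of_one_le ht, hcl1]
  have hgid : ∀ t, t ∈ s → g t = P t - N t := by
    intro t ht
    simp only [hP, hN, cl_of_mem ht]
    ring
  have hv0 : v 0 = 0 := variationOnFromTo.self g s 0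
  have hV : (P 1 - P 0) + (N 1 - N 0) = (eVariationOn g s).toReal := by
    simp only [hP, hN, hcl0, hcl1, hv0]
    have : v 1 = (eVariationOn g (s ∩ Set.Icc 0 1)).toReal :=
      variationOnFromTo.eq_of_le g s zero_le_one
    rw [show s ∩ Set.Icc 0 1 = s by rw [hs]; exact Set.inter_self _] at this
    rw [this]
    ring
  have hintg : (∫ t in (0:ℝ)..1, g t) = (∫ t in (0:ℝ)..1, P t) - ∫ t in (0:ℝ)..1, N t := by
    rw [← intervalIntegral.integral_sub hPmono.intervalIntegrable hNmono.intervalIntegrable]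
    apply intervalIntegral.integral_congr
    intro t ht
    rw [Set.uIcc_of_le zero_le_one] at ht
    exact hgid t ht
  have upper := mono_upper hn y hy hD P hPmono hP0 hP1
  have lower := mono_lower hn y hy hD N hNmono hN0 hN1
  have hsum : ∑ j, g (y j) = (∑ j, P (y j)) - ∑ j, N (y j) := by
    rw [← Finset.sum_sub_distrib]
    exact Finset.sum_congr rfl fun j _ => hgid (y j) (Set.Ico_subset_Icc_self (hy j))
  rw [hsum, hintg, ← hV]
  ring_nf
  ring_nf at upper lower
  linarith
end KoksmaMain

namespace Transfer
open KoksmaAux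

lemma card_real {n : ℕ} (p : Fin n → Prop) [DecidablePred p] :
    ((univ.filter p).card : ℝ) = ∑ j, if p j then (1:ℝ) else 0 := by
  rw [Finset.card_filter]
  push_cast
  rfl

lemma nat_card_eq {n : ℕ} (r : Fin n → ℝ) (hr : ∀ j, r j ∈ Set.Ico (0:ℝ) 1) (t : ℝ) :
    (Nat.card {k : Fin n // 0 ≤ r k ∧ r k < t} : ℝ)
      = ((univ.filter fun k => r k < t).card : ℝ) := by
  rw [Nat.card_eq_fintype_card, Fintype.card_subtype]
  norm_cast
  apply Finset.card_bij (fun a _ => a) <;> intro a ha <;>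
    simp_all [(hr a).1]

lemma card_le {n : ℕ} (p : Fin n → Prop) [DecidablePred p] :
    ((univ.filter p).card : ℝ) ≤ n := by
  have := Finset.card_filter_le (univ : Finset (Fin n)) p
  simp only [Finset.card_univ, Fintype.card_fin] at this
  exact_mod_cast this

lemma disc_bound {n : ℕ} (hn : 0 < n) (r : Fin n → ℝ) (hr : ∀ j, r j ∈ Set.Ico (0:ℝ) 1)
    {t : ℝ} (ht : t ∈ Set.Ioc (0:ℝ) 1) :
    |((univ.filter fun k => r k < t).card : ℝ) / n - t| ≤ discrepancy n r := by
  have hn' : (0:ℝ) < n := by exact_mod_cast hn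
  have hb : BddAbove (Set.range fun u : Set.Ioc (0:ℝ) 1 =>
      |(Nat.card {k : Fin n // 0 ≤ r k ∧ r k < (u:ℝ)} : ℝ) / n - (u:ℝ)|) := by
    refine ⟨2, ?_⟩
    rintro w ⟨u, rfl⟩
    dsimp only
    rw [nat_card_eq r hr]
    have h1 : ((univ.filter fun k => r k < (u:ℝ)).card : ℝ) / n ≤ 1 := by
      rw [div_le_one hn']
      exact card_le _
    have h2 : (0:ℝ) ≤ ((univ.filter fun k => r k < (u:ℝ)).card : ℝ) / n := by positivity
    have h3 := u.2.1
    have h4 := u.2.2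
    rw [abs_le]
    constructor <;> simp <;> linarith
  have hle := le_ciSup hb (⟨t, ht⟩ : Set.Ioc (0:ℝ) 1)
  rw [nat_card_eq r hr] at hle
  exact hle

lemma shift_count {n : ℕ} (hn : 0 < n) (r : Fin n → ℝ) (hr : ∀ j, r j ∈ Set.Ico (0:ℝ) 1)
    {x : ℝ} (hx : x ∈ Set.Ico (0:ℝ) 1) {t : ℝ} (ht : t ∈ Set.Ioc (0:ℝ) 1) :
    |((univ.filter fun j => Int.fract (x + r j) < t).card : ℝ) / n - t|
      ≤ 2 * discrepancy n r := by
  have hn' : (0:ℝ) < n := by exact_mod_cast hn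
  obtain ⟨hx0, hx1⟩ := hx
  obtain ⟨ht0, ht1⟩ := ht
  -- the key counting identity
  have hident : ((univ.filter fun j => Int.fract (x + r j) < t).card : ℝ)
      + ((univ.filter fun j => r j < 1 - x).card : ℝ)
      = ((univ.filter fun j => r j < t - x).card : ℝ)
      + ((univ.filter fun j => r j < t + 1 - x).card : ℝ) := by
    have : ∀ j : Fin n,
        ((if Int.fract (x + r j) < t then 1 else 0) : ℝ) + (if r j < 1 - x then 1 else 0)
        = (if r j < t - x then 1 else 0) + (if r j < t + 1 - x then 1 else 0) := by
      intro j
      obtain ⟨hr0, hr1⟩ := hr j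
      rcases lt_or_ge (r j) (1 - x) with hc | hc
      · have hfr : Int.fract (x + r j) = x + r j :=
          Int.fract_eq_self.2 ⟨by linarith, by linarith⟩
        have h1 : Int.fract (x + r j) < t ↔ r j < t - x := by rw [hfr]; constructor <;> intro <;> linarith
        have h2 : r j < t + 1 - x := by linarith
        simp [h1, h2, hc]
      · have hfr : Int.fract (x + r j) = x + r j - 1 := by
          have h₁ : Int.fract (x + r j - 1) = x + r j - 1 :=
            Int.fract_eq_self.2 ⟨by linarith, by linarith⟩
          calc Int.fract (x + r j) = Int.fract (x + r j - 1 + 1) := by congr 1; ring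
          _ = Int.fract (x + r j - 1) := Int.fract_add_one _
          _ = x + r j - 1 := h₁
        have h1 : Int.fract (x + r j) < t ↔ r j < t + 1 - x := by
          rw [hfr]; constructor <;> intro <;> linarith
        have h2 : ¬ (r j < t - x) := by push_neg; linarith
        have h3 : ¬ (r j < 1 - x) := by push_neg; linarith
        simp [h1, h2, h3]
    calc ((univ.filter fun j => Int.fract (x + r j) < t).card : ℝ)
        + ((univ.filter fun j => r j < 1 - x).card : ℝ)
        = ∑ j : Fin n, (((if Int.fract (x + r j) < t then 1 else 0) : ℝ)
            + (if r j < 1 - x then 1 else 0)) := by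
          rw [card_real, card_real, ← Finset.sum_add_distrib]
    _ = ∑ j : Fin n, (((if r j < t - x then 1 else 0) : ℝ)
            + (if r j < t + 1 - x then 1 else 0)) := Finset.sum_congr rfl fun j _ => this j
    _ = _ := by
          rw [card_real, card_real, ← Finset.sum_add_distrib]
  have he2 : |((univ.filter fun j => r j < 1 - x).card : ℝ) / n - (1 - x)| ≤ discrepancy n r :=
    disc_bound hn r hr ⟨by linarith, by linarith⟩
  rcases lt_or_ge x t with hcase | hcase
  · -- t > x
    have hfull : ((univ.filter fun j => r j < t + 1 - x).card : ℝ) = n := by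
      rw [Finset.filter_true_of_mem fun j _ => by linarith [(hr j).2]]
      simp
    have he1 : |((univ.filter fun j => r j < t - x).card : ℝ) / n - (t - x)| ≤ discrepancy n r :=
      disc_bound hn r hr ⟨by linarith, by linarith⟩
    have b1 := abs_le.1 he1
    have b2 := abs_le.1 he2
    rw [abs_le]
    have hexp : ((univ.filter fun j => Int.fract (x + r j) < t).card : ℝ) / n - t
        = (((univ.filter fun j => r j < t - x).card : ℝ) / n - (t - x))
          - (((univ.filter fun j => r j < 1 - x).card : ℝ) / n - (1 - x)) := by
      field_simp
      linarith [hident, hfull]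
    rw [hexp]
    constructor <;> linarith
  · -- t ≤ x
    have hempty : ((univ.filter fun j => r j < t - x).card : ℝ) = 0 := by
      rw [Finset.filter_false_of_mem fun j _ => by push_neg; linarith [(hr j).1]]
      simp
    have he1 : |((univ.filter fun j => r j < t + 1 - x).card : ℝ) / n - (t + 1 - x)|
        ≤ discrepancy n r :=
      disc_bound hn r hr ⟨by linarith, by linarith⟩
    have b1 := abs_le.1 he1
    have b2 := abs_le.1 he2
    rw [abs_le]
    have hexp : ((univ.filter fun j => Int.fract (x + r j) < t).card : ℝ) / n - t
        = (((univ.filter fun j => r j < t + 1 - x).card : ℝ) / n - (t + 1 - x))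
          - (((univ.filter fun j => r j < 1 - x).card : ℝ) / n - (1 - x)) := by
      field_simp
      linarith [hident, hempty]
    rw [hexp]
    constructor <;> linarith

end Transfer

namespace FinalAux
open KoksmaAux KoksmaMain

lemma vol_preimage_add (c : ℝ) (s : Set ℝ) :
    volume ((fun x => x + c) ⁻¹' s) = volume s := by
  calc volume ((fun x => x + c) ⁻¹' s) = Measure.map (fun x => x + c) volume s :=
        ((Homeomorph.addRight c).toMeasurableEquiv.map_apply s).symm
  _ = volume s := by rw [MeasureTheory.map_add_right_eq_self volume c]

lemma periodic_fract_eq {f : ℝ → ℝ} (hf : Function.Periodic f 1) (z : ℝ) :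
    f (Int.fract z) = f z := by
  have h := hf.sub_int_mul_eq (x := z) ⌊z⌋
  rw [mul_one] at h
  rw [Int.fract]
  exact h

lemma trunc_periodic {f : ℝ → ℝ} (hf : Function.Periodic f 1) (B : ℝ) :
    Function.Periodic (trunc f B) 1 := by
  intro x
  simp only [trunc, hf x]

lemma le_trunc {f : ℝ → ℝ} {B : ℝ} {x : ℝ} (hx : f x ≤ B) : f x ≤ trunc f B x := by
  unfold trunc
  split_ifs with hc
  · exact le_rfl
  · exact hx

theorem measure_large_sum_le_aux (n : ℕ) (hn : 0 < n) (r : Fin n → ℝ)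
    (hr : ∀ j, r j ∈ Set.Ico (0:ℝ) 1) (h : ℝ → ℝ) (hper : Function.Periodic h 1)
    (hint : IntegrableOn h (Set.Ico 0 1) volume) (B : ℝ) (hB : 0 < B)
    (hVfin : pVar (trunc h B) ≠ ⊤) :
    volume {x ∈ Set.Ico (0:ℝ) 1 |
        (∫ y in Set.Ico (0:ℝ) 1, trunc h B y) +
            2 * discrepancy n r * (pVar (trunc h B)).toReal <
          (1 / n : ℝ) * ∑ j, h (x + r j)} ≤
      ENNReal.ofReal ((n / B) * ∫ x in {y ∈ Set.Ico (0:ℝ) 1 | B < h y}, h x) := by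
  have hn' : (0:ℝ) < n := by exact_mod_cast hn
  set g := trunc h B with hgdef
  -- measurable periodic representative of h
  obtain ⟨h₀, h₀sm, h₀ae⟩ := hint.aestronglyMeasurable
  set h₁ : ℝ → ℝ := fun z => h₀ (Int.fract z) with hh₁
  have h₁meas : Measurable h₁ := h₀sm.measurable.comp measurable_fract
  have h₁per : Function.Periodic h₁ 1 := fun z => by simp only [hh₁, Int.fract_add_one]
  have haeIco : h =ᵐ[volume.restrict (Set.Ico (0:ℝ) 1)] h₁ := by
    filter_upwards [h₀ae, ae_restrict_mem measurableSet_Ico] with z hz hmem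
    have hfz : Int.fract z = z := Int.fract_eq_self.2 ⟨hmem.1, hmem.2⟩
    simp only [hh₁, hfz]
    exact hz
  have hZ : volume {z | z ∈ Set.Ico (0:ℝ) 1 ∧ h z ≠ h₁ z} = 0 := by
    have h1 := (ae_restrict_iff' measurableSet_Ico).1 haeIco
    have h2 : {z | z ∈ Set.Ico (0:ℝ) 1 ∧ h z ≠ h₁ z}
        ⊆ {z | ¬ (z ∈ Set.Ico (0:ℝ) 1 → h z = h₁ z)} := by
      rintro z ⟨hz1, hz2⟩ hcon
      exact hz2 (hcon hz1)
    exact measure_mono_null h2 (ae_iff.1 h1)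
  have hW : volume {z | z ∈ Set.Ico (0:ℝ) 2 ∧ h z ≠ h₁ z} = 0 := by
    have hsub : {z | z ∈ Set.Ico (0:ℝ) 2 ∧ h z ≠ h₁ z}
        ⊆ {z | z ∈ Set.Ico (0:ℝ) 1 ∧ h z ≠ h₁ z}
          ∪ (fun z => z + (-1:ℝ)) ⁻¹' {z | z ∈ Set.Ico (0:ℝ) 1 ∧ h z ≠ h₁ z} := by
      rintro z ⟨⟨hz0, hz2⟩, hne⟩
      rcases lt_or_ge z 1 with hz1 | hz1
      · exact Or.inl ⟨⟨hz0, hz1⟩, hne⟩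
      · refine Or.inr ?_
        simp only [Set.mem_preimage, Set.mem_setOf_eq, Set.mem_Ico]
        refine ⟨⟨by linarith, by linarith⟩, ?_⟩
        have e1 : h (z + (-1)) = h z := by
          have := hper (z + (-1))
          rw [show z + (-1) + 1 = z by ring] at this
          exact this.symm
        have e2 : h₁ (z + (-1)) = h₁ z := by
          have := h₁per (z + (-1))
          rw [show z + (-1) + 1 = z by ring] at this
          exact this.symm
        rw [e1, e2]
        exact hne
    exact measure_mono_null hsub
      (measure_union_null hZ (by rw [vol_preimage_add]; exact hZ))
  -- Koksma-type bound
  have key : ∀ x ∈ Set.Ico (0:ℝ) 1, (∀ j, h (x + r j) ≤ B) →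
      (1 / n : ℝ) * ∑ j, h (x + r j) ≤
        (∫ y in Set.Ico (0:ℝ) 1, g y) + 2 * discrepancy n r * (pVar g).toReal := by
    intro x hx hall
    set y : Fin n → ℝ := fun j => Int.fract (x + r j) with hy
    have hymem : ∀ j, y j ∈ Set.Ico (0:ℝ) 1 :=
      fun j => ⟨Int.fract_nonneg _, Int.fract_lt_one _⟩
    have hDcount : ∀ t ∈ Set.Ioc (0:ℝ) 1,
        |((univ.filter fun j => y j < t).card : ℝ) / n - t| ≤ 2 * discrepancy n r :=
      fun t ht => Transfer.shift_count hn r hr hx ht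
    have hgper : Function.Periodic g 1 := trunc_periodic hper B
    have hgvar : eVariationOn g (Set.Icc (0:ℝ) 1) ≠ ⊤ := hVfin
    have hkok := koksma hn y hymem hDcount g hgvar
    have hsum : ∑ j, h (x + r j) ≤ ∑ j, g (y j) := by
      apply Finset.sum_le_sum
      intro j _
      have h1 : h (x + r j) ≤ g (x + r j) := le_trunc (hall j)
      simp only [hy]
      rw [periodic_fract_eq hgper]
      exact h1
    have hint01 : (∫ t in (0:ℝ)..1, g t) = ∫ y in Set.Ico (0:ℝ) 1, g y := by
      rw [intervalIntegral.integral_of_le zero_le_one, integral_Ioc_eq_integral_Ioo,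
        ← integral_Ico_eq_integral_Ioo]
    calc (1 / n : ℝ) * ∑ j, h (x + r j) ≤ (1 / n : ℝ) * ∑ j, g (y j) :=
          mul_le_mul_of_nonneg_left hsum (by positivity)
    _ ≤ (1 / n : ℝ) * (n * ((∫ t in (0:ℝ)..1, g t)
          + (2 * discrepancy n r) * (eVariationOn g (Set.Icc (0:ℝ) 1)).toReal)) :=
          mul_le_mul_of_nonneg_left hkok (by positivity)
    _ = (∫ y in Set.Ico (0:ℝ) 1, g y) + 2 * discrepancy n r * (pVar g).toReal := by
          rw [hint01]
          have hpv : pVar g = eVariationOn g (Set.Icc (0:ℝ) 1) := rfl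
          rw [hpv]
          field_simp
  -- the union bound
  set T : Fin n → Set ℝ := fun j => {x ∈ Set.Ico (0:ℝ) 1 | B < h (x + r j)} with hT
  have hsubE : {x ∈ Set.Ico (0:ℝ) 1 |
      (∫ y in Set.Ico (0:ℝ) 1, trunc h B y) +
          2 * discrepancy n r * (pVar (trunc h B)).toReal <
        (1 / n : ℝ) * ∑ j, h (x + r j)} ⊆ ⋃ j, T j := by
    rintro x ⟨hx, hlt⟩
    by_contra hc
    simp only [Set.mem_iUnion, hT, Set.mem_setOf_eq, not_exists, not_and, not_lt] at hc
    exact absurd (key x hx (fun j => hc j hx)) (not_le.2 hlt)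
  -- the measurable exceedance set
  set S₁ : Set ℝ := Set.Ico (0:ℝ) 1 ∩ {y | B < h₁ y} with hS₁
  have hS₁meas : MeasurableSet S₁ :=
    measurableSet_Ico.inter (measurableSet_lt measurable_const h₁meas)
  -- each T j has the same volume as S₁
  have hvolT : ∀ j, volume (T j) = volume S₁ := by
    intro j
    obtain ⟨hrj0, hrj1⟩ := hr j
    set T₁ : Set ℝ := Set.Ico (0:ℝ) 1 ∩ (fun x => x + r j) ⁻¹' {y | B < h₁ y} with hT₁
    have hstep1 : volume (T j) = volume T₁ := by
      apply measure_congr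
      rw [MeasureTheory.ae_eq_set]
      constructor
      · refine measure_mono_null ?_ (by rw [vol_preimage_add]; exact hW :
          volume ((fun x => x + r j) ⁻¹' {z | z ∈ Set.Ico (0:ℝ) 2 ∧ h z ≠ h₁ z}) = 0)
        rintro z ⟨hz1, hz2⟩
        simp only [hT, Set.mem_setOf_eq] at hz1
        obtain ⟨⟨hz0, hzlt⟩, hzB⟩ := hz1
        have hz3 : ¬ (B < h₁ (z + r j)) := by
          intro hcon
          exact hz2 ⟨⟨hz0, hzlt⟩, hcon⟩
        simp only [Set.mem_preimage, Set.mem_setOf_eq, Set.mem_Ico]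
        refine ⟨⟨by linarith, by linarith⟩, ?_⟩
        intro heq
        rw [heq] at hzB
        exact hz3 hzB
      · refine measure_mono_null ?_ (by rw [vol_preimage_add]; exact hW :
          volume ((fun x => x + r j) ⁻¹' {z | z ∈ Set.Ico (0:ℝ) 2 ∧ h z ≠ h₁ z}) = 0)
        rintro z ⟨⟨⟨hz0, hzlt⟩, hzB⟩, hz2⟩
        have hz3 : ¬ (B < h (z + r j)) := by
          intro hcon
          apply hz2
          simp only [hT, Set.mem_setOf_eq]
          exact ⟨⟨hz0, hzlt⟩, hcon⟩
        simp only [Set.mem_preimage, Set.mem_setOf_eq, Set.mem_Ico]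
        refine ⟨⟨by linarith, by linarith⟩, ?_⟩
        intro heq
        rw [heq] at hz3
        exact hz3 hzB
    have hstep2 : T₁ = (fun x => x + r j) ⁻¹' (Set.Ico (r j) (1 + r j) ∩ {y | B < h₁ y}) := by
      ext x
      simp only [hT₁, Set.mem_inter_iff, Set.mem_preimage, Set.mem_Ico, Set.mem_setOf_eq]
      constructor
      · rintro ⟨⟨hx0, hx1⟩, hxB⟩
        exact ⟨⟨by linarith, by linarith⟩, hxB⟩
      · rintro ⟨⟨hx0, hx1⟩, hxB⟩
        exact ⟨⟨by linarith, by linarith⟩, hxB⟩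
    have hBmeas : MeasurableSet ({y : ℝ | B < h₁ y}) :=
      measurableSet_lt measurable_const h₁meas
    have hsplit : Set.Ico (r j) (1 + r j) ∩ {y | B < h₁ y}
        = (Set.Ico (r j) 1 ∩ {y | B < h₁ y}) ∪ (Set.Ico 1 (1 + r j) ∩ {y | B < h₁ y}) := by
      rw [← Set.union_inter_distrib_right, Set.Ico_union_Ico_eq_Ico hrj1.le (by linarith)]
    have hdisj1 : Disjoint (Set.Ico (r j) 1 ∩ {y | B < h₁ y})
        (Set.Ico 1 (1 + r j) ∩ {y | B < h₁ y}) := by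
      rw [Set.disjoint_left]
      rintro a ⟨⟨_, ha1⟩, _⟩ ⟨⟨ha2, _⟩, _⟩
      linarith
    have htrans : volume (Set.Ico 1 (1 + r j) ∩ {y | B < h₁ y})
        = volume (Set.Ico (0:ℝ) (r j) ∩ {y | B < h₁ y}) := by
      have hpre : (fun y => y + (1:ℝ)) ⁻¹' (Set.Ico 1 (1 + r j) ∩ {y | B < h₁ y})
          = Set.Ico (0:ℝ) (r j) ∩ {y | B < h₁ y} := by
        ext y
        simp only [Set.mem_inter_iff, Set.mem_preimage, Set.mem_Ico, Set.mem_setOf_eq]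
        rw [h₁per y]
        constructor
        · rintro ⟨⟨hy0, hy1⟩, hyB⟩
          exact ⟨⟨by linarith, by linarith⟩, hyB⟩
        · rintro ⟨⟨hy0, hy1⟩, hyB⟩
          exact ⟨⟨by linarith, by linarith⟩, hyB⟩
      rw [← vol_preimage_add (1:ℝ) (Set.Ico 1 (1 + r j) ∩ {y | B < h₁ y}), hpre]
    have hdisj2 : Disjoint (Set.Ico (r j) 1 ∩ {y | B < h₁ y})
        (Set.Ico (0:ℝ) (r j) ∩ {y | B < h₁ y}) := by
      rw [Set.disjoint_left]
      rintro a ⟨⟨ha1, _⟩, _⟩ ⟨⟨_, ha2⟩, _⟩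
      linarith
    have hrecomb : (Set.Ico (r j) 1 ∩ {y | B < h₁ y}) ∪ (Set.Ico (0:ℝ) (r j) ∩ {y | B < h₁ y})
        = S₁ := by
      rw [← Set.union_inter_distrib_right, Set.union_comm, Set.Ico_union_Ico_eq_Ico hrj0 hrj1.le]
    calc volume (T j) = volume T₁ := hstep1
    _ = volume (Set.Ico (r j) (1 + r j) ∩ {y | B < h₁ y}) := by rw [hstep2, vol_preimage_add]
    _ = volume (Set.Ico (r j) 1 ∩ {y | B < h₁ y})
          + volume (Set.Ico 1 (1 + r j) ∩ {y | B < h₁ y}) := by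
        rw [hsplit]
        exact measure_union hdisj1 (measurableSet_Ico.inter hBmeas)
    _ = volume (Set.Ico (r j) 1 ∩ {y | B < h₁ y})
          + volume (Set.Ico (0:ℝ) (r j) ∩ {y | B < h₁ y}) := by rw [htrans]
    _ = volume S₁ := by
        rw [← measure_union hdisj2 (measurableSet_Ico.inter hBmeas), hrecomb]
  -- Markov inequality
  have hS₁fin : volume S₁ ≠ ⊤ := by
    have hle : volume S₁ ≤ volume (Set.Ico (0:ℝ) 1) := measure_mono Set.inter_subset_left
    rw [Real.volume_Ico] at hle
    exact (lt_of_le_of_lt hle (by simp)).ne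
  have hint₁ : IntegrableOn h₁ (Set.Ico (0:ℝ) 1) volume := hint.congr haeIco
  have hintS₁ : IntegrableOn h₁ S₁ volume := hint₁.mono_set Set.inter_subset_left
  have hge : B * (volume S₁).toReal ≤ ∫ y in S₁, h₁ y :=
    setIntegral_ge_of_const_le_real hS₁meas hS₁fin (fun y hy => le_of_lt hy.2) hintS₁
  have hMarkov : volume S₁ ≤ ENNReal.ofReal ((1 / B) * ∫ y in S₁, h₁ y) := by
    rw [← ENNReal.ofReal_toReal hS₁fin]
    apply ENNReal.ofReal_le_ofReal
    calc (volume S₁).toReal = (1 / B) * (B * (volume S₁).toReal) := by field_simp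
    _ ≤ (1 / B) * ∫ y in S₁, h₁ y := mul_le_mul_of_nonneg_left hge (by positivity)
  -- integral identification
  have hShae : ({y ∈ Set.Ico (0:ℝ) 1 | B < h y} : Set ℝ) =ᵐ[volume] S₁ := by
    rw [MeasureTheory.ae_eq_set]
    constructor
    · refine measure_mono_null ?_ hZ
      rintro z ⟨⟨hz1, hz2⟩, hz3⟩
      refine ⟨hz1, ?_⟩
      intro heq
      rw [heq] at hz2
      exact hz3 ⟨hz1, hz2⟩
    · refine measure_mono_null ?_ hZ
      rintro z ⟨⟨hz1, hz2⟩, hz3⟩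
      refine ⟨hz1, ?_⟩
      intro heq
      exact hz3 ⟨hz1, by rw [heq]; exact hz2⟩
  have hIeq : (∫ x in {y ∈ Set.Ico (0:ℝ) 1 | B < h y}, h x) = ∫ y in S₁, h₁ y := by
    rw [Measure.restrict_congr_set hShae]
    exact integral_congr_ae (ae_restrict_of_ae_restrict_of_subset Set.inter_subset_left haeIco)
  -- put everything together
  calc volume {x ∈ Set.Ico (0:ℝ) 1 |
        (∫ y in Set.Ico (0:ℝ) 1, trunc h B y) +
            2 * discrepancy n r * (pVar (trunc h B)).toReal <
          (1 / n : ℝ) * ∑ j, h (x + r j)}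
      ≤ volume (⋃ j, T j) := measure_mono hsubE
  _ ≤ ∑' j, volume (T j) := measure_iUnion_le _
  _ = ∑ j : Fin n, volume (T j) := tsum_fintype _
  _ = n • volume S₁ := by
      rw [Finset.sum_congr rfl (fun j _ => hvolT j), Finset.sum_const, Finset.card_univ,
        Fintype.card_fin]
  _ ≤ n • ENNReal.ofReal ((1 / B) * ∫ y in S₁, h₁ y) := by
      rw [nsmul_eq_mul, nsmul_eq_mul]
      exact mul_le_mul_right hMarkov _
  _ = ENNReal.ofReal ((n / B) * ∫ x in {y ∈ Set.Ico (0:ℝ) 1 | B < h y}, h x) := by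
      rw [hIeq, nsmul_eq_mul, ← ENNReal.ofReal_natCast n,
        ← ENNReal.ofReal_mul (by positivity : (0:ℝ) ≤ (n:ℝ))]
      congr 1
      ring

end FinalAux

end AuxProofs

/-- If `h ∈ L¹[0,1)` is `1`-periodic and `V = Var [h]_B < ∞` with `B > 0`,
then the measure of the set where `(1/n) Σ_j h(x+r_j) > ∫₀¹ [h]_B + 2DV` is at most
`(n/B) ∫_{{h > B}} h`. -/
theorem measure_large_sum_le (n : ℕ) (hn : 0 < n) (r : Fin n → ℝ)
    (hr : ∀ j, r j ∈ Set.Ico (0:ℝ) 1) (h : ℝ → ℝ) (hper : Function.Periodic h 1)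
    (hint : IntegrableOn h (Set.Ico 0 1) volume) (B : ℝ) (hB : 0 < B)
    (hVfin : pVar (trunc h B) ≠ ⊤) :
    volume {x ∈ Set.Ico (0:ℝ) 1 |
        (∫ y in Set.Ico (0:ℝ) 1, trunc h B y) +
            2 * discrepancy n r * (pVar (trunc h B)).toReal <
          (1 / n : ℝ) * ∑ j, h (x + r j)} ≤
      ENNReal.ofReal ((n / B) * ∫ x in {y ∈ Set.Ico (0:ℝ) 1 | B < h y}, h x) := by
  exact FinalAux.measure_large_sum_le_aux n hn r hr h hper hint B hB hVfin
end
end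

section
/- Let f : ℝ → ℝ be 1-periodic and let B₁ < B₂ < B₃ be real numbers. Then Var [f]_{B₁,B₃} = Var [f]_{B₁,B₂} + Var [f]_{B₂,B₃}. -/
open MeasureTheory Filter
open scoped ENNReal NNReal

noncomputable section

/-- The two-sided truncation `[f]_{B₁,B₂}`. -/
def trunc2 (f : ℝ → ℝ) (B₁ B₂ : ℝ) : ℝ → ℝ :=
  fun x => if f x ≤ B₁ then B₁ else if f x < B₂ then f x else B₂

section aux

variable {E : Type*} [PseudoEMetricSpace E]

lemma my_chain_le (g : ℕ → E) {a b : ℕ} (hab : a ≤ b) :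
    edist (g b) (g a) ≤ ∑ j ∈ Finset.Ico a b, edist (g (j + 1)) (g j) := by
  induction b, hab using Nat.le_induction with
  | base => simp
  | succ b hab ih =>
    rw [Finset.sum_Ico_succ_top (by omega)]
    calc edist (g (b + 1)) (g a) ≤ edist (g (b + 1)) (g b) + edist (g b) (g a) :=
          edist_triangle _ _ _
      _ ≤ edist (g (b + 1)) (g b) + ∑ j ∈ Finset.Ico a b, edist (g (j + 1)) (g j) := by
          gcongr
      _ = _ := by ring

lemma my_sum_comp_le (g : ℕ → E) (φ : ℕ → ℕ) (hφ : Monotone φ) (n : ℕ) :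
    ∑ i ∈ Finset.range n, edist (g (φ (i + 1))) (g (φ i)) ≤
      ∑ j ∈ Finset.Ico (φ 0) (φ n), edist (g (j + 1)) (g j) := by
  induction n with
  | zero => simp
  | succ n ih =>
    rw [Finset.sum_range_succ, ← Finset.sum_Ico_consecutive _ (hφ (Nat.zero_le n))
      (hφ (Nat.le_succ n))]
    exact add_le_add ih (my_chain_le g (hφ (Nat.le_succ n)))

lemma my_abs_min_max_le (a b c : ℝ) (hab : b ≤ a) :
    |min a c - min b c| + |max a c - max b c| = |a - b| := by
  have h1 : min b c ≤ min a c := min_le_min hab le_rfl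
  have h2 : max b c ≤ max a c := max_le_max hab le_rfl
  have e1 : min a c + max a c = a + c := min_add_max a c
  have e2 : min b c + max b c = b + c := min_add_max b c
  rw [abs_of_nonneg (by linarith), abs_of_nonneg (by linarith),
    abs_of_nonneg (by linarith)]
  linarith

lemma my_edist_min_max (a b c : ℝ) :
    edist a b = edist (min a c) (min b c) + edist (max a c) (max b c) := by
  rw [edist_dist, edist_dist, edist_dist, Real.dist_eq, Real.dist_eq, Real.dist_eq,
    ← ENNReal.ofReal_add (abs_nonneg _) (abs_nonneg _)]
  rcases le_total b a with hab | hab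
  · rw [my_abs_min_max_le a b c hab]
  · rw [abs_sub_comm (min a c), abs_sub_comm (max a c), abs_sub_comm a,
      my_abs_min_max_le b a c hab]

/-- The variation of a real function splits as the sum of the variations of its
truncations below and above a level `c`. -/
lemma my_evar_min_add_max (h : ℝ → ℝ) (s : Set ℝ) (c : ℝ) :
    eVariationOn h s =
      eVariationOn (fun x => min (h x) c) s + eVariationOn (fun x => max (h x) c) s := by
  rcases Set.eq_empty_or_nonempty s with rfl | hs
  · rw [eVariationOn.subsingleton _ Set.subsingleton_empty,
      eVariationOn.subsingleton _ Set.subsingleton_empty,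
      eVariationOn.subsingleton _ Set.subsingleton_empty]
    simp
  apply le_antisymm
  · rw [eVariationOn]
    refine iSup_le fun p => ?_
    have : ∀ i, edist (h (p.2.1 (i + 1))) (h (p.2.1 i)) =
        edist (min (h (p.2.1 (i + 1))) c) (min (h (p.2.1 i)) c) +
          edist (max (h (p.2.1 (i + 1))) c) (max (h (p.2.1 i)) c) := fun i =>
      my_edist_min_max _ _ _
    calc ∑ i ∈ Finset.range p.1, edist (h (p.2.1 (i + 1))) (h (p.2.1 i))
        = (∑ i ∈ Finset.range p.1,
              edist (min (h (p.2.1 (i + 1))) c) (min (h (p.2.1 i)) c)) +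
            ∑ i ∈ Finset.range p.1,
              edist (max (h (p.2.1 (i + 1))) c) (max (h (p.2.1 i)) c) := by
          rw [← Finset.sum_add_distrib]
          exact Finset.sum_congr rfl fun i _ => this i
      _ ≤ _ := add_le_add
          (eVariationOn.sum_le p.2.2.1 p.2.2.2)
          (eVariationOn.sum_le p.2.2.1 p.2.2.2)
  · have : Nonempty { u : ℕ → ℝ // Monotone u ∧ ∀ i, u i ∈ s } :=
      eVariationOn.nonempty_monotone_mem hs
    rw [eVariationOn, eVariationOn]
    refine ENNReal.iSup_add_iSup_le ?_
    rintro ⟨n, u, hu, us⟩ ⟨m, v, hv, vs⟩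
    classical
    -- merged partition
    set T : Finset ℝ :=
      (Finset.range (n + 1)).image u ∪ (Finset.range (m + 1)).image v with hT
    have hTne : T.Nonempty := by
      refine ⟨u 0, ?_⟩
      simp [hT]
      exact Or.inl ⟨0, Nat.zero_le n, rfl⟩
    have hTs : ∀ x ∈ T, x ∈ s := by
      intro x hx
      simp only [hT, Finset.mem_union, Finset.mem_image, Finset.mem_range] at hx
      rcases hx with ⟨i, -, rfl⟩ | ⟨i, -, rfl⟩
      · exact us i
      · exact vs i
    set N : ℕ := T.card with hN
    have hN0 : 0 < N := Finset.card_pos.mpr hTne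
    set e : Fin N ≃o {x // x ∈ T} := T.orderIsoOfFin hN.symm with he
    set w : ℕ → ℝ := fun i => if hi : i < N then (e ⟨i, hi⟩ : ℝ) else T.max' hTne with hw
    have hwT : ∀ i, w i ∈ T := by
      intro i
      simp only [hw]
      split_ifs
      · exact (e _).2
      · exact T.max'_mem hTne
    have hws : ∀ i, w i ∈ s := fun i => hTs _ (hwT i)
    have hwm : Monotone w := by
      intro i j hij
      simp only [hw]
      split_ifs with hi hj hj
      · exact Subtype.coe_le_coe.mpr (e.monotone (Fin.mk_le_mk.mpr hij))
      · exact T.le_max' _ (e _).2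
      · omega
      · exact le_rfl
    -- index functions
    have humem : ∀ i, u (min i n) ∈ T := by
      intro i
      simp only [hT, Finset.mem_union, Finset.mem_image, Finset.mem_range]
      exact Or.inl ⟨min i n, by omega, rfl⟩
    have hvmem : ∀ i, v (min i m) ∈ T := by
      intro i
      simp only [hT, Finset.mem_union, Finset.mem_image, Finset.mem_range]
      exact Or.inr ⟨min i m, by omega, rfl⟩
    set φ : ℕ → ℕ := fun i => (e.symm ⟨u (min i n), humem i⟩ : Fin N).val with hφ
    set ψ : ℕ → ℕ := fun i => (e.symm ⟨v (min i m), hvmem i⟩ : Fin N).val with hψ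
    have hφm : Monotone φ := by
      intro i j hij
      exact e.symm.monotone (Subtype.mk_le_mk.mpr (hu (min_le_min hij le_rfl)))
    have hψm : Monotone ψ := by
      intro i j hij
      exact e.symm.monotone (Subtype.mk_le_mk.mpr (hv (min_le_min hij le_rfl)))
    have hwφ : ∀ i, w (φ i) = u (min i n) := by
      intro i
      have hlt : φ i < N := (e.symm ⟨u (min i n), humem i⟩).2
      simp only [hw, dif_pos hlt]
      have : (⟨φ i, hlt⟩ : Fin N) = e.symm ⟨u (min i n), humem i⟩ := rfl
      rw [this, OrderIso.apply_symm_apply]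
    have hwψ : ∀ i, w (ψ i) = v (min i m) := by
      intro i
      have hlt : ψ i < N := (e.symm ⟨v (min i m), hvmem i⟩).2
      simp only [hw, dif_pos hlt]
      have : (⟨ψ i, hlt⟩ : Fin N) = e.symm ⟨v (min i m), hvmem i⟩ := rfl
      rw [this, OrderIso.apply_symm_apply]
    -- bound the first sum
    have key : ∀ (g : ℝ → ℝ) (k : ℕ) (x : ℕ → ℝ) (χ : ℕ → ℕ), Monotone χ →
        (∀ i, χ i < N) → (∀ i, w (χ i) = x (min i k)) →
        ∑ i ∈ Finset.range k, edist (g (x (i + 1))) (g (x i)) ≤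
          ∑ j ∈ Finset.range N, edist (g (w (j + 1))) (g (w j)) := by
      intro g k x χ hχ hχN hwx
      have h1 : ∑ i ∈ Finset.range k, edist (g (x (i + 1))) (g (x i)) =
          ∑ i ∈ Finset.range k, edist (g (w (χ (i + 1)))) (g (w (χ i))) := by
        refine Finset.sum_congr rfl fun i hi => ?_
        rw [Finset.mem_range] at hi
        rw [hwx, hwx, min_eq_left (by omega), min_eq_left (by omega)]
      rw [h1]
      refine (my_sum_comp_le (fun j => g (w j)) χ hχ k).trans ?_
      refine Finset.sum_le_sum_of_subset fun j hj => ?_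
      rw [Finset.mem_Ico] at hj
      rw [Finset.mem_range]
      have := hχN k
      omega
    have hφN : ∀ i, φ i < N := fun i => (e.symm ⟨u (min i n), humem i⟩).2
    have hψN : ∀ i, ψ i < N := fun i => (e.symm ⟨v (min i m), hvmem i⟩).2
    have bnd1 := key (fun x => min (h x) c) n u φ hφm hφN hwφ
    have bnd2 := key (fun x => max (h x) c) m v ψ hψm hψN hwψ
    refine (add_le_add bnd1 bnd2).trans ?_
    have h2 : (∑ j ∈ Finset.range N, edist (min (h (w (j + 1))) c) (min (h (w j)) c)) +
        ∑ j ∈ Finset.range N, edist (max (h (w (j + 1))) c) (max (h (w j)) c) =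
        ∑ j ∈ Finset.range N, edist (h (w (j + 1))) (h (w j)) := by
      rw [← Finset.sum_add_distrib]
      exact Finset.sum_congr rfl fun j _ => (my_edist_min_max _ _ _).symm
    calc _ = ∑ j ∈ Finset.range N, edist (h (w (j + 1))) (h (w j)) := h2
      _ ≤ _ := eVariationOn.sum_le (f := h) (n := N) hwm hws

end aux

/-- For a `1`-periodic `f : ℝ → ℝ` and `B₁ < B₂ < B₃`,
`Var [f]_{B₁,B₃} = Var [f]_{B₁,B₂} + Var [f]_{B₂,B₃}`. -/
theorem variation_two_sided_truncation_add (f : ℝ → ℝ) (hper : Function.Periodic f 1)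
    (B₁ B₂ B₃ : ℝ) (h12 : B₁ < B₂) (h23 : B₂ < B₃) :
    eVariationOn (trunc2 f B₁ B₃) (Set.Icc 0 1) =
      eVariationOn (trunc2 f B₁ B₂) (Set.Icc 0 1) +
        eVariationOn (trunc2 f B₂ B₃) (Set.Icc 0 1) := by
  have hmin : trunc2 f B₁ B₂ = fun x => min (trunc2 f B₁ B₃ x) B₂ := by
    funext x
    simp only [trunc2]
    split_ifs with h1 h2 h3 <;>
      simp only [min_def] <;> split_ifs <;> linarith
  have hmax : trunc2 f B₂ B₃ = fun x => max (trunc2 f B₁ B₃ x) B₂ := by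
    funext x
    simp only [trunc2]
    split_ifs with h1 h2 h3 <;>
      simp only [max_def] <;> split_ifs <;> linarith
  rw [hmin, hmax]
  exact my_evar_min_add_max (trunc2 f B₁ B₃) (Set.Icc 0 1) B₂
end
end
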